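/- arXiv:1707.02409 — 10 statements merged into one kernel-verified Lean document; each statement's English description precedes it below -/
import Mathlib

section
/- The privacy-constrained guessing function h : [P_c(X), P_c(X|Y)] → ℝ is piecewise linear: there exist an integer K ≥ 1 and thresholds P_c(X) = ε_0 ≤ ε_1 ≤ … ≤ ε_K = P_c(X|Y) such that the restriction of h to each interval [ε_{i−1}, ε_i], i = 1, …, K, is an affine function of ε. -/
open Finset

/-- The privacy `𝒫(F) = P_c(X|Z)` of a filter `F`, for a joint pmf `P` of `(X,Y)` on
`{1,…,M} × {1,…,N}` (modeled as `Fin (M+1) × Fin (N+1)`), with `Z` on an alphabet of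
size `N+2`. -/
noncomputable def privF {M N : ℕ} (P : Fin (M + 1) → Fin (N + 1) → ℝ)
    (F : Fin (N + 1) → Fin (N + 2) → ℝ) : ℝ :=
  ∑ z, ⨆ x, ∑ y, P x y * F y z

/-- The utility `𝒰(F) = P_c(Y|Z)` of a filter `F`. -/
noncomputable def utilF {M N : ℕ} (P : Fin (M + 1) → Fin (N + 1) → ℝ)
    (F : Fin (N + 1) → Fin (N + 2) → ℝ) : ℝ :=
  ∑ z, ⨆ y, (∑ x, P x y) * F y z

/-- `F ∈ ℱ`: `F` is a row-stochastic `(N+1) × (N+2)` matrix. -/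
def IsFilter {N : ℕ} (F : Fin (N + 1) → Fin (N + 2) → ℝ) : Prop :=
  (∀ y z, 0 ≤ F y z) ∧ ∀ y, ∑ z, F y z = 1

/-- The privacy-constrained guessing function `h(ε)`. -/
noncomputable def hFun {M N : ℕ} (P : Fin (M + 1) → Fin (N + 1) → ℝ) (ε : ℝ) : ℝ :=
  sSup {u | ∃ F, IsFilter F ∧ privF P F ≤ ε ∧ u = utilF P F}

/-- `P_c(X)`. -/
noncomputable def PcX {M N : ℕ} (P : Fin (M + 1) → Fin (N + 1) → ℝ) : ℝ :=
  ⨆ x, ∑ y, P x y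

/-- `P_c(X|Y)`. -/
noncomputable def PcXY {M N : ℕ} (P : Fin (M + 1) → Fin (N + 1) → ℝ) : ℝ :=
  ∑ y, ⨆ x, P x y

/-!
The conditions `F ∈ ℱ`, `𝒫(F) ≤ ε` cut out a compact polyhedron `Q(ε)` whose right-hand sides
are affine in `ε` (`𝒫(F) ≤ ε` amounts to one linear inequality per guessing map `Z → X`), and
`𝒰 = max_s u_s` is a maximum of linear functionals over the guessing maps `s : Z → Y`. Hence `h(ε)` is attained at a
vertex of `Q(ε)`; a vertex is determined by its set of active constraints and moves affinely with
`ε`, so at every `ε` the value `h(ε)` is that of one of finitely many affine functions. Moreover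
`h` is continuous on `[P_c(X), ∞)`: upper semicontinuous by the same finiteness, lower
semicontinuous by monotonicity and the joint convexity of the constraints in `(F, ε)`. A
continuous function that agrees pointwise with one of finitely many affine functions is piecewise
affine, with breakpoints where two of them cross.
-/

open Set Filter Topology

section ParamPolyhedron

variable {E ι : Type*} [AddCommGroup E] [Module ℝ E]

def paramPolyhedron (ℓ : ι → E →ₗ[ℝ] ℝ) (c d : ι → ℝ) (ε : ℝ) : Set E :=
  {x | ∀ i, ℓ i x ≤ c i * ε + d i}

variable {ℓ : ι → E →ₗ[ℝ] ℝ} {c d : ι → ℝ}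

lemma paramPolyhedron_mono (hc : 0 ≤ c) {ε ε' : ℝ} (h : ε ≤ ε') :
    paramPolyhedron ℓ c d ε ⊆ paramPolyhedron ℓ c d ε' := fun x hx i =>
  (hx i).trans (by gcongr; exact hc i)

lemma add_smul_sub_mem_paramPolyhedron {ε ε' t : ℝ} {x x' : E}
    (hx : x ∈ paramPolyhedron ℓ c d ε) (hx' : x' ∈ paramPolyhedron ℓ c d ε')
    (ht₀ : 0 ≤ t) (ht₁ : t ≤ 1) :
    x + t • (x' - x) ∈ paramPolyhedron ℓ c d (ε + t * (ε' - ε)) := by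
  intro i
  have h₁ := mul_le_mul_of_nonneg_left (hx i) (sub_nonneg.2 ht₁)
  have h₂ := mul_le_mul_of_nonneg_left (hx' i) ht₀
  simp only [map_add, map_smul, map_sub, smul_eq_mul]
  linarith

lemma isClosed_setOf_smul_add_mem_paramPolyhedron (p q : E) :
    IsClosed {ε : ℝ | ε • p + q ∈ paramPolyhedron ℓ c d ε} := by
  have hcont : ∀ i, Continuous fun ε : ℝ => ℓ i (ε • p + q) := fun i => by
    simp only [map_add, map_smul, smul_eq_mul]
    fun_prop
  have hset : {ε : ℝ | ε • p + q ∈ paramPolyhedron ℓ c d ε} =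
      ⋂ i, {ε | ℓ i (ε • p + q) ≤ c i * ε + d i} := by
    ext
    simp [paramPolyhedron]
  rw [hset]
  exact isClosed_iInter fun i => isClosed_le (hcont i) (by fun_prop)

/-- Otherwise moving slightly both ways along `v` stays feasible, since the inactive constraints
have slack. -/
lemma eq_zero_of_mem_extremePoints_paramPolyhedron [Finite ι] {ε : ℝ} {x v : E}
    (hx : x ∈ (paramPolyhedron ℓ c d ε).extremePoints ℝ)
    (hv : ∀ i, ℓ i x = c i * ε + d i → ℓ i v = 0) : v = 0 := by
  have hslack : ∀ i, ∀ᶠ t in 𝓝[>] (0 : ℝ),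
      ℓ i x < c i * ε + d i → t * |ℓ i v| < c i * ε + d i - ℓ i x := fun i => by
    by_cases hi : ℓ i x < c i * ε + d i
    · have hlim : Tendsto (fun t : ℝ => t * |ℓ i v|) (𝓝[>] 0) (𝓝 0) := by
        simpa using (tendsto_id (x := 𝓝 (0 : ℝ))).mul_const |ℓ i v| |>.mono_left nhdsWithin_le_nhds
      exact (hlim.eventually (gt_mem_nhds (sub_pos.2 hi))).mono fun t ht _ => ht
    · exact Eventually.of_forall fun t h => absurd h hi
  obtain ⟨t, hts, ht⟩ := ((eventually_all.2 hslack).and self_mem_nhdsWithin).exists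
  have hmem : ∀ r : ℝ, |r| ≤ t → x + r • v ∈ paramPolyhedron ℓ c d ε := by
    intro r hr i
    rcases (hx.1 i).eq_or_lt with hi | hi
    · simp [hv i hi, hi]
    · have hti := hts i hi
      have hrv : r * ℓ i v ≤ t * |ℓ i v| := (le_abs_self _).trans
        (by rw [abs_mul]; exact mul_le_mul_of_nonneg_right hr (abs_nonneg _))
      simp only [map_add, map_smul, smul_eq_mul]
      linarith
  have hseg : x ∈ openSegment ℝ (x + (-t) • v) (x + t • v) := by
    refine ⟨1 / 2, 1 / 2, by norm_num, by norm_num, by norm_num, ?_⟩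
    simp only [smul_add, ← add_assoc, neg_smul, smul_neg]
    module
  have := (mem_extremePoints.1 hx).2 _ (hmem (-t) (by simp [abs_of_pos ht]))
    _ (hmem t (by simp [abs_of_pos ht])) hseg
  simpa [ht.ne'] using this.2

lemma exists_smul_add_of_forall_eq_zero (J : Set ι)
    (hJ : ∀ v, (∀ i ∈ J, ℓ i v = 0) → v = 0) :
    ∃ p q : E, ∀ ε x, (∀ i ∈ J, ℓ i x = c i * ε + d i) → x = ε • p + q := by
  let L : E →ₗ[ℝ] J → ℝ := LinearMap.pi fun i => ℓ i
  have hker : LinearMap.ker L = ⊥ :=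
    LinearMap.ker_eq_bot'.2 fun v hv => hJ v fun i hi => congrFun hv ⟨i, hi⟩
  obtain ⟨G, hG⟩ := L.exists_leftInverse_of_injective hker
  refine ⟨G fun i : J => c i, G fun i : J => d i, fun ε x hx => ?_⟩
  have hLx : L x = ε • (fun i : J => c i) + fun i : J => d i :=
    funext fun i => by simp [L, hx i i.2, mul_comm]
  calc x = G (L x) := (LinearMap.congr_fun hG x).symm
    _ = ε • G (fun i : J => c i) + G fun i : J => d i := by rw [hLx, map_add, map_smul]

variable (ℓ c d) in
/-- `J` is the set of constraints active at the vertex, which determines it. -/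
lemma exists_extremePoints_paramPolyhedron_subset_lines [Finite ι] :
    ∃ p q : Set ι → E, ∀ ε, ∀ x ∈ (paramPolyhedron ℓ c d ε).extremePoints ℝ,
      ∃ J, x = ε • p J + q J := by
  have hline : ∀ J : Set ι, ∃ p q : E, (∀ v, (∀ i ∈ J, ℓ i v = 0) → v = 0) →
      ∀ ε x, (∀ i ∈ J, ℓ i x = c i * ε + d i) → x = ε • p + q := by
    intro J
    by_cases hJ : ∀ v, (∀ i ∈ J, ℓ i v = 0) → v = 0
    · obtain ⟨p, q, h⟩ := exists_smul_add_of_forall_eq_zero J hJ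
      exact ⟨p, q, fun _ => h⟩
    · exact ⟨0, 0, fun h => absurd h hJ⟩
  choose p q hpq using hline
  refine ⟨p, q, fun ε x hx => ⟨{i | ℓ i x = c i * ε + d i}, ?_⟩⟩
  exact hpq _ (fun v hv => eq_zero_of_mem_extremePoints_paramPolyhedron hx hv) ε x fun i hi => hi

end ParamPolyhedron

section ExtremePoints

variable {E : Type*} [AddCommGroup E] [Module ℝ E] [TopologicalSpace E] [T2Space E]
  [IsTopologicalAddGroup E] [ContinuousSMul ℝ E] [LocallyConvexSpace ℝ E]

lemma IsCompact.exists_mem_extremePoints_isMaxOn {S : Set E} (hS : IsCompact S)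
    (hne : S.Nonempty) (l : StrongDual ℝ E) : ∃ x ∈ S.extremePoints ℝ, IsMaxOn l S x := by
  have hexp : IsExposed ℝ S (l.toExposed S) := ContinuousLinearMap.toExposed.isExposed
  obtain ⟨x₀, hx₀, hmax⟩ := hS.exists_isMaxOn hne l.continuous.continuousOn
  obtain ⟨x, hx⟩ := (hexp.isCompact hS).extremePoints_nonempty ⟨x₀, hx₀, fun y hy => hmax hy⟩
  exact ⟨x, hexp.isExtreme.extremePoints_subset_extremePoints hx, fun y hy => hx.1.2 y hy⟩

variable {σ : Type*} [Finite σ] [Nonempty σ]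

lemma IsCompact.exists_mem_extremePoints_isGreatest_ciSup {S : Set E} (hS : IsCompact S)
    (hne : S.Nonempty) (u : σ → StrongDual ℝ E) :
    ∃ s, ∃ x ∈ S.extremePoints ℝ, IsGreatest ((fun y => ⨆ s, u s y) '' S) (u s x) := by
  choose x hx hmax using fun s => hS.exists_mem_extremePoints_isMaxOn hne (u s)
  obtain ⟨s, hs⟩ := Finite.exists_max fun s => u s (x s)
  have hle : ∀ y ∈ S, ⨆ s', u s' y ≤ u s (x s) :=
    fun y hy => ciSup_le fun s' => (isMaxOn_iff.1 (hmax s') y hy).trans (hs s')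
  refine ⟨s, x s, hx s, ⟨x s, (hx s).1, ?_⟩, ?_⟩
  · exact le_antisymm (hle _ (hx s).1) (le_ciSup (finite_range fun s' => u s' (x s)).bddAbove s)
  · rintro _ ⟨y, hy, rfl⟩
    exact hle y hy

end ExtremePoints

section ParamMaxValue

variable {E ι σ : Type*} [AddCommGroup E] [Module ℝ E] [TopologicalSpace E] [T2Space E]
  [IsTopologicalAddGroup E] [ContinuousSMul ℝ E] [LocallyConvexSpace ℝ E]

noncomputable def paramMaxValue (ℓ : ι → E →ₗ[ℝ] ℝ) (c d : ι → ℝ) (u : σ → StrongDual ℝ E)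
    (ε : ℝ) : ℝ :=
  sSup ((fun x => ⨆ s, u s x) '' paramPolyhedron ℓ c d ε)

variable {ℓ : ι → E →ₗ[ℝ] ℝ} {c d : ι → ℝ} {u : σ → StrongDual ℝ E} [Finite σ] [Nonempty σ]
  (hK : ∀ ε, IsCompact (paramPolyhedron ℓ c d ε))
include hK

lemma exists_mem_paramPolyhedron_paramMaxValue_eq {ε : ℝ}
    (hne : (paramPolyhedron ℓ c d ε).Nonempty) :
    ∃ s, ∃ x ∈ paramPolyhedron ℓ c d ε, paramMaxValue ℓ c d u ε = u s x := by
  obtain ⟨s, x, hx, hgr⟩ := (hK ε).exists_mem_extremePoints_isGreatest_ciSup hne u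
  exact ⟨s, x, hx.1, hgr.csSup_eq⟩

lemma le_paramMaxValue {ε : ℝ} {x : E} (hx : x ∈ paramPolyhedron ℓ c d ε) (s : σ) :
    u s x ≤ paramMaxValue ℓ c d u ε := by
  obtain ⟨s', x', -, hgr⟩ := (hK ε).exists_mem_extremePoints_isGreatest_ciSup ⟨x, hx⟩ u
  rw [paramMaxValue, hgr.csSup_eq]
  exact (le_ciSup (finite_range fun s => u s x).bddAbove s).trans (hgr.2 ⟨x, hx, rfl⟩)

lemma paramMaxValue_mono (hc : 0 ≤ c) {ε ε' : ℝ} (hne : (paramPolyhedron ℓ c d ε).Nonempty)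
    (h : ε ≤ ε') : paramMaxValue ℓ c d u ε ≤ paramMaxValue ℓ c d u ε' := by
  obtain ⟨s, x, hx, hval⟩ := exists_mem_paramPolyhedron_paramMaxValue_eq (u := u) hK hne
  exact hval ▸ le_paramMaxValue hK (paramPolyhedron_mono hc h hx) s

/-- From the left, move an optimal point of `Q(ε)` linearly toward a point of `Q(A)`; from the
right, use monotonicity. -/
lemma lowerSemicontinuousOn_paramMaxValue (hc : 0 ≤ c) {A : ℝ}
    (hA : (paramPolyhedron ℓ c d A).Nonempty) :
    LowerSemicontinuousOn (paramMaxValue ℓ c d u) (Ici A) := by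
  obtain ⟨x₀, hx₀⟩ := hA
  intro ε (hε : A ≤ ε) C hC
  have hne : (paramPolyhedron ℓ c d ε).Nonempty := ⟨x₀, paramPolyhedron_mono hc hε hx₀⟩
  obtain ⟨s, x, hx, hval⟩ := exists_mem_paramPolyhedron_paramMaxValue_eq (u := u) hK hne
  let φ : ℝ → ℝ := fun ε' => u s (x + ((ε - ε') / (ε - A)) • (x₀ - x))
  have hφ : Continuous φ := by fun_prop
  have hφε : C < φ ε := by simpa [φ, ← hval] using hC
  filter_upwards [nhdsWithin_le_nhds (continuousAt_const.eventually_lt hφ.continuousAt hφε),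
    self_mem_nhdsWithin] with ε' hφε' (hε' : A ≤ ε')
  rcases le_or_gt ε ε' with h | h
  · exact hC.trans_le (paramMaxValue_mono hK hc hne h)
  · have hAε : 0 < ε - A := by linarith
    have hmem := add_smul_sub_mem_paramPolyhedron hx hx₀ (div_nonneg (by linarith) hAε.le)
      ((div_le_one hAε).2 (by linarith : ε - ε' ≤ ε - A))
    rw [show ε + (ε - ε') / (ε - A) * (A - ε) = ε' by field_simp; ring] at hmem
    exact hφε'.trans_le (le_paramMaxValue hK hmem s)

variable [Finite ι]

lemma exists_lines_paramMaxValue :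
    ∃ p q : Set ι → E, ∀ ε, (paramPolyhedron ℓ c d ε).Nonempty → ∃ J s,
      ε • p J + q J ∈ paramPolyhedron ℓ c d ε ∧ paramMaxValue ℓ c d u ε = u s (ε • p J + q J) := by
  obtain ⟨p, q, hpq⟩ := exists_extremePoints_paramPolyhedron_subset_lines ℓ c d
  refine ⟨p, q, fun ε hne => ?_⟩
  obtain ⟨s, x, hx, hgr⟩ := (hK ε).exists_mem_extremePoints_isGreatest_ciSup hne u
  obtain ⟨J, rfl⟩ := hpq ε x hx
  exact ⟨J, s, hx.1, hgr.csSup_eq⟩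

lemma exists_affine_paramMaxValue :
    ∃ a b : Set ι × σ → ℝ, ∀ ε, (paramPolyhedron ℓ c d ε).Nonempty →
      ∃ k, paramMaxValue ℓ c d u ε = a k * ε + b k := by
  obtain ⟨p, q, hpq⟩ := exists_lines_paramMaxValue (u := u) hK
  refine ⟨fun k => u k.2 (p k.1), fun k => u k.2 (q k.1), fun ε hne => ?_⟩
  obtain ⟨J, s, -, hval⟩ := hpq ε hne
  exact ⟨(J, s), by simp [hval, mul_comm]⟩

/-- Near `ε` the value is attained on one of finitely many lines, and a line feasible arbitrarily
close to `ε` is feasible at `ε`. -/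
lemma upperSemicontinuousOn_paramMaxValue :
    UpperSemicontinuousOn (paramMaxValue ℓ c d u) {ε | (paramPolyhedron ℓ c d ε).Nonempty} := by
  obtain ⟨p, q, hpq⟩ := exists_lines_paramMaxValue (u := u) hK
  intro ε hε C hC
  have hline : ∀ k : Set ι × σ, ∀ᶠ ε' in 𝓝 ε,
      ε' • p k.1 + q k.1 ∈ paramPolyhedron ℓ c d ε' → u k.2 (ε' • p k.1 + q k.1) < C := by
    rintro ⟨J, s⟩
    by_cases hJ : ε • p J + q J ∈ paramPolyhedron ℓ c d ε
    · have hcont : Continuous fun ε' : ℝ => u s (ε' • p J + q J) := by fun_prop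
      have hlt := (le_paramMaxValue hK hJ s).trans_lt hC
      exact (hcont.continuousAt.eventually_lt continuousAt_const hlt).mono fun _ h _ => h
    · exact eventually_of_mem
        ((isClosed_setOf_smul_add_mem_paramPolyhedron _ _).isOpen_compl.mem_nhds hJ)
        fun _ h h' => absurd h' h
  filter_upwards [nhdsWithin_le_nhds (eventually_all.2 hline), self_mem_nhdsWithin]
    with ε' hε' hne
  obtain ⟨J, s, hmem, hval⟩ := hpq ε' hne
  exact hval ▸ hε' (J, s) hmem

lemma continuousOn_paramMaxValue (hc : 0 ≤ c) {A : ℝ}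
    (hA : (paramPolyhedron ℓ c d A).Nonempty) :
    ContinuousOn (paramMaxValue ℓ c d u) (Ici A) :=
  continuousOn_iff_lower_upperSemicontinuousOn.2 ⟨lowerSemicontinuousOn_paramMaxValue hK hc hA,
    (upperSemicontinuousOn_paramMaxValue hK).mono fun _ hε => hA.mono (paramPolyhedron_mono hc hε)⟩

end ParamMaxValue

section PiecewiseAffine

lemma exists_monotone_partition_avoiding (T : Finset ℝ) {A B : ℝ} (hB : B ∈ T)
    (hT : ∀ t ∈ T, A ≤ t ∧ t ≤ B) :
    ∃ (K : ℕ) (εs : Fin (K + 1) → ℝ), 1 ≤ K ∧ Monotone εs ∧ εs 0 = A ∧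
      εs (Fin.last K) = B ∧ ∀ i : Fin K, ∀ t ∈ T, t ≤ εs i.castSucc ∨ εs i.succ ≤ t := by
  obtain ⟨k, hk⟩ := Nat.exists_eq_add_one.2 (Finset.card_pos.2 ⟨B, hB⟩)
  set e := T.orderEmbOfFin hk
  have he : ∀ m, e m ∈ T := T.orderEmbOfFin_mem hk
  have hrange : ∀ t ∈ T, ∃ m, e m = t := fun t ht => by
    rwa [← Finset.mem_coe, ← T.range_orderEmbOfFin hk] at ht
  refine ⟨k + 1, Matrix.vecCons A e, k.succ_pos,
    monotone_vecCons.2 ⟨(hT _ (he 0)).1, e.monotone⟩, rfl, ?_, ?_⟩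
  · obtain ⟨m, hm⟩ := hrange B hB
    rw [← Fin.succ_last, Matrix.cons_val_succ]
    exact le_antisymm (hT _ (he _)).2 (hm ▸ e.monotone (Fin.le_last m))
  · intro i t ht
    obtain ⟨m, rfl⟩ := hrange t ht
    induction i using Fin.cases with
    | zero => exact Or.inr (e.monotone (Fin.zero_le m))
    | succ j =>
      rw [← Fin.succ_castSucc, Matrix.cons_val_succ, Matrix.cons_val_succ]
      rcases le_or_gt m j.castSucc with h | h
      · exact Or.inl (e.monotone h)
      · exact Or.inr (e.monotone (Fin.castSucc_lt_iff_succ_le.1 h))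

/-- The set where `f = g k₀` is relatively open in `s` (if `f x = g k₀ x`, then `f ≠ g k` near `x`
for every `g k ≠ g k₀`) and relatively closed, hence all of `s`. -/
lemma IsPreconnected.eqOn_of_forall_exists_eq {X α : Type*} [TopologicalSpace X] [Finite α]
    {s : Set X} (hs : IsPreconnected s) {f : X → ℝ} {g : α → X → ℝ} (hf : ContinuousOn f s)
    (hg : ∀ k, Continuous (g k)) (hsel : ∀ x ∈ s, ∃ k, f x = g k x)
    (hsep : ∀ x ∈ s, ∀ k k', g k x = g k' x → g k = g k') {x₀ : X} (hx₀ : x₀ ∈ s) {k₀ : α}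
    (h₀ : f x₀ = g k₀ x₀) : EqOn f (g k₀) s := by
  have hne : ∀ x ∈ s, ∀ k, f x ≠ g k x → ∀ᶠ y in 𝓝[s] x, f y ≠ g k y := fun x hx k h =>
    (((hf x hx).sub (hg k).continuousWithinAt).eventually_ne (sub_ne_zero.2 h)).mono
      fun _ hy => sub_ne_zero.1 hy
  have hloc : ∀ x ∈ s, ∀ᶠ y in 𝓝[s] x, (f y = g k₀ y ↔ f x = g k₀ x) := by
    intro x hx
    by_cases hx' : f x = g k₀ x
    · have hother : ∀ k, ∀ᶠ y in 𝓝[s] x, g k ≠ g k₀ → f y ≠ g k y := by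
        intro k
        by_cases hk : g k = g k₀
        · exact Eventually.of_forall fun _ h => absurd hk h
        · exact (hne x hx k fun h => hk (hsep x hx k k₀ (h ▸ hx'))).mono fun _ h _ => h
      filter_upwards [eventually_all.2 hother, self_mem_nhdsWithin] with y hy hys
      obtain ⟨k, hk⟩ := hsel y hys
      by_cases hkk : g k = g k₀
      · simp [hx', hk, hkk]
      · exact absurd hk (hy k hkk)
    · exact (hne x hx k₀ hx').mono fun _ h => by simp [h, hx']
  have hcont : ContinuousOn (fun x => decide (f x = g k₀ x)) s := fun x hx => by
    rw [ContinuousWithinAt, nhds_discrete, tendsto_pure]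
    exact (hloc x hx).mono fun _ h => by simp [h]
  intro x hx
  simpa [h₀] using hs.constant hcont hx hx₀

/-- Break at `B` and at every point of `[A, B]` where two distinct affine functions of the family
cross; between consecutive breaks the family separates points, so `f` follows a single one. -/
lemma exists_piecewise_affine_of_continuousOn {α : Type*} [Finite α] {A B : ℝ} (hAB : A ≤ B)
    {f : ℝ → ℝ} (a b : α → ℝ) (hf : ContinuousOn f (Icc A B))
    (hsel : ∀ ε ∈ Icc A B, ∃ k, f ε = a k * ε + b k) :
    ∃ (K : ℕ) (εs : Fin (K + 1) → ℝ), 1 ≤ K ∧ Monotone εs ∧ εs 0 = A ∧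
      εs (Fin.last K) = B ∧ ∀ i : Fin K, ∃ a b : ℝ,
        ∀ ε ∈ Icc (εs i.castSucc) (εs i.succ), f ε = a * ε + b := by
  set C := {x | ∃ k k', a k ≠ a k' ∧ a k * x + b k = a k' * x + b k'}
  have hC : C.Finite :=
    (finite_range fun kk : α × α => (b kk.2 - b kk.1) / (a kk.1 - a kk.2)).subset
      fun x ⟨k, k', hne, heq⟩ => ⟨(k, k'), by field_simp [sub_ne_zero.2 hne]; linarith⟩
  obtain ⟨K, εs, hK, hmono, h0, hlast, hgap⟩ := exists_monotone_partition_avoiding (A := A)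
    (insert B (hC.inter_of_left (Icc A B)).toFinset) (Finset.mem_insert_self _ _)
    (by simp +contextual [hAB])
  refine ⟨K, εs, hK, hmono, h0, hlast, fun i => ?_⟩
  have hsub : Icc (εs i.castSucc) (εs i.succ) ⊆ Icc A B :=
    Icc_subset_Icc (h0 ▸ hmono (Fin.zero_le _)) (hlast ▸ hmono (Fin.le_last _))
  rcases (hmono (Fin.castSucc_le_succ i)).eq_or_lt with heq | hlt
  · obtain ⟨k, hk⟩ := hsel _ (hsub ⟨le_rfl, heq.le⟩)
    refine ⟨a k, b k, fun ε hε => ?_⟩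
    rwa [le_antisymm (heq ▸ hε.2) hε.1]
  have hsep : ∀ x ∈ Ioo (εs i.castSucc) (εs i.succ), ∀ k k', a k * x + b k = a k' * x + b k' →
      (fun x => a k * x + b k) = fun x => a k' * x + b k' := by
    intro x hx k k' hkk'
    have hak : a k = a k' := by
      by_contra hne
      have hxC : x ∈ C ∩ Icc A B := ⟨⟨k, k', hne, hkk'⟩, hsub (Ioo_subset_Icc_self hx)⟩
      rcases hgap i x (Finset.mem_insert_of_mem (by simpa using hxC)) with h | h
      · exact h.not_gt hx.1
      · exact h.not_gt hx.2
    have hbk : b k = b k' := by rw [hak] at hkk'; linarith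
    rw [hak, hbk]
  have hmid : (εs i.castSucc + εs i.succ) / 2 ∈ Ioo (εs i.castSucc) (εs i.succ) :=
    ⟨by linarith, by linarith⟩
  obtain ⟨k₀, hk₀⟩ := hsel _ (hsub (Ioo_subset_Icc_self hmid))
  refine ⟨a k₀, b k₀, ?_⟩
  have hIoo := isPreconnected_Ioo.eqOn_of_forall_exists_eq (g := fun k x => a k * x + b k)
    (hf.mono (Ioo_subset_Icc_self.trans hsub)) (fun k => by fun_prop)
    (fun x hx => hsel x (hsub (Ioo_subset_Icc_self hx))) hsep hmid hk₀
  exact hIoo.of_subset_closure (hf.mono hsub) (by fun_prop) Ioo_subset_Icc_self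
    (closure_Ioo hlt.ne).ge

end PiecewiseAffine

lemma sum_ciSup_eq_ciSup_sum {ζ κ : Type*} [Fintype ζ] [Finite κ] [Nonempty κ]
    (f : κ → ζ → ℝ) : ∑ z, ⨆ x, f x z = ⨆ t : ζ → κ, ∑ z, f (t z) z := by
  have := Fintype.ofFinite κ
  choose t ht using fun z => Finite.exists_max fun x => f x z
  refine le_antisymm ?_ (ciSup_le fun t' => Finset.sum_le_sum fun z _ =>
    le_ciSup (finite_range fun x => f x z).bddAbove (t' z))
  calc ∑ z, ⨆ x, f x z ≤ ∑ z, f (t z) z := Finset.sum_le_sum fun z _ => ciSup_le (ht z)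
    _ ≤ _ := le_ciSup (finite_range fun t' : ζ → κ => ∑ z, f (t' z) z).bddAbove t

section PrivacyFilters

variable {M N : ℕ} (P : Fin (M + 1) → Fin (N + 1) → ℝ)

noncomputable def entry (y : Fin (N + 1)) (z : Fin (N + 2)) :
    (Fin (N + 1) → Fin (N + 2) → ℝ) →ₗ[ℝ] ℝ :=
  LinearMap.proj z ∘ₗ LinearMap.proj y

@[simp] lemma entry_apply (y : Fin (N + 1)) (z : Fin (N + 2)) (F : Fin (N + 1) → Fin (N + 2) → ℝ) :
    entry y z F = F y z := rfl

/-- Indexes the constraints `F(y, z) ≥ 0`, `∑_z F(y, z) ≤ 1`, `∑_z F(y, z) ≥ 1`, and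
`∑_z ∑_y P(t z, y) F(y, z) ≤ ε` for every guessing map `t : Z → X`; the last family together says
`𝒫(F) ≤ ε`. -/
abbrev FilterConstraint (M N : ℕ) : Type :=
  (Fin (N + 1) × Fin (N + 2)) ⊕ (Fin (N + 1) ⊕ Fin (N + 1)) ⊕ (Fin (N + 2) → Fin (M + 1))

noncomputable def filterConstraint :
    FilterConstraint M N → (Fin (N + 1) → Fin (N + 2) → ℝ) →ₗ[ℝ] ℝ
  | .inl (y, z) => -entry y z
  | .inr (.inl (.inl y)) => ∑ z, entry y z
  | .inr (.inl (.inr y)) => -∑ z, entry y z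
  | .inr (.inr t) => ∑ z, ∑ y, P (t z) y • entry y z

def privacySlope : FilterConstraint M N → ℝ
  | .inr (.inr _) => 1
  | _ => 0

def filterBound : FilterConstraint M N → ℝ
  | .inr (.inl (.inl _)) => 1
  | .inr (.inl (.inr _)) => -1
  | _ => 0

lemma privacySlope_nonneg : 0 ≤ (privacySlope : FilterConstraint M N → ℝ) := by
  rintro (_ | (_ | _)) <;> simp [privacySlope]

abbrev filterPolyhedron (ε : ℝ) : Set (Fin (N + 1) → Fin (N + 2) → ℝ) :=
  paramPolyhedron (filterConstraint P) privacySlope filterBound ε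

lemma privF_eq_ciSup (F : Fin (N + 1) → Fin (N + 2) → ℝ) :
    privF P F = ⨆ t : Fin (N + 2) → Fin (M + 1), ∑ z, ∑ y, P (t z) y * F y z :=
  sum_ciSup_eq_ciSup_sum fun x z => ∑ y, P x y * F y z

lemma mem_filterPolyhedron_iff {ε : ℝ} {F : Fin (N + 1) → Fin (N + 2) → ℝ} :
    F ∈ filterPolyhedron P ε ↔ IsFilter F ∧ privF P F ≤ ε := by
  rw [privF_eq_ciSup, ciSup_le_iff (finite_range _).bddAbove]
  constructor
  · intro h
    refine ⟨⟨fun y z => ?_, fun y => ?_⟩, fun t => ?_⟩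
    · simpa [filterConstraint, privacySlope, filterBound] using h (.inl (y, z))
    · have h₁ := h (.inr (.inl (.inl y)))
      have h₂ := h (.inr (.inl (.inr y)))
      simp [filterConstraint, privacySlope, filterBound] at h₁ h₂
      linarith
    · simpa [filterConstraint, privacySlope, filterBound, mul_comm] using h (.inr (.inr t))
  · rintro ⟨⟨hnonneg, hrow⟩, hpriv⟩ (⟨y, z⟩ | (y | y) | t)
    · simpa [filterConstraint, privacySlope, filterBound] using hnonneg y z
    · simp [filterConstraint, privacySlope, filterBound, hrow y]
    · simp [filterConstraint, privacySlope, filterBound, hrow y]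
    · simpa [filterConstraint, privacySlope, filterBound, mul_comm] using hpriv t

lemma isCompact_filterPolyhedron (ε : ℝ) : IsCompact (filterPolyhedron P ε) := by
  have hclosed : IsClosed (filterPolyhedron P ε) := by
    simp only [filterPolyhedron, paramPolyhedron, ofPred_forall]
    exact isClosed_iInter fun i =>
      isClosed_le (LinearMap.continuous_of_finiteDimensional _) continuous_const
  refine (isCompact_Icc (a := 0) (b := 1)).of_isClosed_subset hclosed fun F hF => ?_
  obtain ⟨⟨hnonneg, hrow⟩, -⟩ := (mem_filterPolyhedron_iff P).1 hF
  refine ⟨fun y z => hnonneg y z, fun y z => ?_⟩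
  exact (Finset.single_le_sum (fun z _ => hnonneg y z) (Finset.mem_univ z)).trans_eq (hrow y)

lemma filterPolyhedron_PcX_nonempty : (filterPolyhedron P (PcX P)).Nonempty := by
  refine ⟨fun _ => Pi.single 0 1, (mem_filterPolyhedron_iff P).2
    ⟨⟨fun y z => ?_, fun y => by simp⟩, le_of_eq ?_⟩⟩
  · by_cases hz : z = 0 <;> simp [hz]
  rw [privF, Finset.sum_eq_single 0 (fun z _ hz => by simp [hz]) (by simp)]
  simp [PcX]

noncomputable def utilityDual (s : Fin (N + 2) → Fin (N + 1)) :
    StrongDual ℝ (Fin (N + 1) → Fin (N + 2) → ℝ) :=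
  LinearMap.toContinuousLinearMap (∑ z, (∑ x, P x (s z)) • entry (s z) z)

lemma utilF_eq_ciSup (F : Fin (N + 1) → Fin (N + 2) → ℝ) :
    utilF P F = ⨆ s, utilityDual P s F := by
  simp [utilF, utilityDual, sum_ciSup_eq_ciSup_sum fun y z => (∑ x, P x y) * F y z]

lemma hFun_eq_paramMaxValue :
    hFun P = paramMaxValue (filterConstraint P) privacySlope filterBound (utilityDual P) := by
  ext ε
  rw [hFun, paramMaxValue]
  congr 1
  ext v
  simp only [mem_image, mem_filterPolyhedron_iff, utilF_eq_ciSup, mem_ofPred_eq]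
  exact ⟨fun ⟨F, hF, hpriv, hv⟩ => ⟨F, ⟨hF, hpriv⟩, hv.symm⟩,
    fun ⟨F, ⟨hF, hpriv⟩, hv⟩ => ⟨F, hF, hpriv, hv.symm⟩⟩

lemma PcX_le_PcXY : PcX P ≤ PcXY P :=
  ciSup_le fun x => Finset.sum_le_sum fun y _ => le_ciSup (finite_range fun x => P x y).bddAbove x

end PrivacyFilters

theorem hFun_piecewise_linear_general {M N : ℕ} (P : Fin (M + 1) → Fin (N + 1) → ℝ) :
    ∃ (K : ℕ) (εs : Fin (K + 1) → ℝ), 1 ≤ K ∧ Monotone εs ∧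
      εs 0 = PcX P ∧ εs (Fin.last K) = PcXY P ∧
      ∀ i : Fin K, ∃ a b : ℝ,
        ∀ ε ∈ Set.Icc (εs i.castSucc) (εs i.succ), hFun P ε = a * ε + b := by
  have hK := isCompact_filterPolyhedron P
  have hne : ∀ ε ∈ Ici (PcX P), (filterPolyhedron P ε).Nonempty := fun ε hε =>
    (filterPolyhedron_PcX_nonempty P).mono (paramPolyhedron_mono privacySlope_nonneg hε)
  obtain ⟨a, b, hab⟩ := exists_affine_paramMaxValue (u := utilityDual P) hK
  rw [hFun_eq_paramMaxValue]
  have hcont := continuousOn_paramMaxValue (u := utilityDual P) hK privacySlope_nonneg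
    (filterPolyhedron_PcX_nonempty P)
  exact exists_piecewise_affine_of_continuousOn (PcX_le_PcXY P) a b
    (hcont.mono Icc_subset_Ici_self) fun ε hε => hab ε (hne ε hε.1)

/-- Theorem 1: `h` is piecewise linear on `[P_c(X), P_c(X|Y)]`. -/
theorem hFun_piecewise_linear {M N : ℕ} (P : Fin (M + 1) → Fin (N + 1) → ℝ)
    (hpos : ∀ x y, 0 ≤ P x y) (hsum : ∑ x, ∑ y, P x y = 1) :
    ∃ (K : ℕ) (εs : Fin (K + 1) → ℝ), 1 ≤ K ∧ Monotone εs ∧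
      εs 0 = PcX P ∧ εs (Fin.last K) = PcXY P ∧
      ∀ i : Fin K, ∃ a b : ℝ,
        ∀ ε ∈ Set.Icc (εs i.castSucc) (εs i.succ), hFun P ε = a * ε + b :=
  hFun_piecewise_linear_general P
end

section
/- The privacy-constrained guessing function h is continuous and concave on the interval [P_c(X), P_c(X|Y)], and for every ε ∈ [P_c(X), P_c(X|Y)] the supremum defining h(ε) is attained: there exists G ∈ ℱ with 𝒫(G) = ε and 𝒰(G) = h(ε). -/
/-!
Both `𝒫` and `𝒰` are sums over the outputs `z` of a maximum of linear functions of the column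
`F(·, z)`, so both are continuous and `𝒫` is convex. As `ℱ` is compact, `h` is a compactly
constrained maximum: it is attained, nondecreasing and upper semicontinuous.
Merging the outputs of a filter with the same guess of `Y` keeps `𝒰` and does not increase `𝒫`,
so every optimum is attained by a filter whose output `k` is guessed as `Y = k`. Mixing two such
filters entrywise keeps this property, hence mixes `𝒰` linearly and `𝒫` convexly: `h` is concave.
A concave function on `[P_c(X), ∞)` is continuous in the interior, and at `P_c(X)` continuity
follows from monotonicity and upper semicontinuity. Finally, sliding an optimal filter of this
kind towards the filter that reveals `Y` never lowers `𝒰`, and raises `𝒫` continuously up to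
`P_c(X|Y)`, so the intermediate value theorem meets the constraint with equality.
-/

open Finset

open Set Filter Topology

lemma Continuous.ciSup_of_finite {ι X L : Type*} [Fintype ι] [Nonempty ι] [TopologicalSpace X]
    [ConditionallyCompleteLinearOrder L] [TopologicalSpace L] [OrderTopology L]
    {g : ι → X → L} (hg : ∀ i, Continuous (g i)) : Continuous fun x => ⨆ i, g i x := by
  simp_rw [← Finset.sup'_univ_eq_ciSup]
  exact Continuous.finset_sup'_apply Finset.univ_nonempty fun i _ => hg i

lemma ciSup_sum_le_sum_ciSup {ι κ : Type*} [Fintype ι] [Nonempty ι] (s : Finset κ)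
    (f : ι → κ → ℝ) : ⨆ i, ∑ k ∈ s, f i k ≤ ∑ k ∈ s, ⨆ i, f i k :=
  ciSup_le fun i => Finset.sum_le_sum fun k _ => le_ciSup (Finite.bddAbove_range (f · k)) i

lemma ciSup_eq_of_forall_le {ι α : Type*} [Finite ι] [ConditionallyCompleteLattice α]
    {f : ι → α} {i : ι} (h : ∀ j, f j ≤ f i) : ⨆ j, f j = f i :=
  have : Nonempty ι := ⟨i⟩
  le_antisymm (ciSup_le h) (le_ciSup (Finite.bddAbove_range f) i)

section ConstrainedSup

variable {X : Type*} [TopologicalSpace X] {K : Set X} {u p : X → ℝ}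

noncomputable def constrainedSup (K : Set X) (u p : X → ℝ) (ε : ℝ) : ℝ :=
  sSup (u '' {x ∈ K | p x ≤ ε})

lemma IsCompact.sep_le (hK : IsCompact K) (hp : Continuous p) (ε : ℝ) :
    IsCompact {x ∈ K | p x ≤ ε} :=
  hK.inter_right (isClosed_le hp continuous_const)

lemma le_constrainedSup (hK : IsCompact K) (hu : Continuous u) (hp : Continuous p) {ε : ℝ}
    {x : X} (hx : x ∈ K) (hpx : p x ≤ ε) : u x ≤ constrainedSup K u p ε :=
  le_csSup ((hK.sep_le hp ε).image hu).bddAbove ⟨x, ⟨hx, hpx⟩, rfl⟩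

lemma exists_eq_constrainedSup (hK : IsCompact K) (hu : Continuous u) (hp : Continuous p)
    {ε : ℝ} (hε : ∃ x ∈ K, p x ≤ ε) :
    ∃ x ∈ K, p x ≤ ε ∧ u x = constrainedSup K u p ε := by
  obtain ⟨x, hxK, hpx⟩ := hε
  obtain ⟨y, ⟨hyK, hpy⟩, hy⟩ :=
    ((hK.sep_le hp ε).image hu).sSup_mem ⟨u x, x, ⟨hxK, hpx⟩, rfl⟩
  exact ⟨y, hyK, hpy, hy⟩

lemma constrainedSup_mono (hK : IsCompact K) (hu : Continuous u) (hp : Continuous p)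
    {ε₁ ε₂ : ℝ} (hε₁ : ∃ x ∈ K, p x ≤ ε₁) (h : ε₁ ≤ ε₂) :
    constrainedSup K u p ε₁ ≤ constrainedSup K u p ε₂ := by
  obtain ⟨x, hxK, hpx, hx⟩ := exists_eq_constrainedSup hK hu hp hε₁
  exact hx ▸ le_constrainedSup hK hu hp hxK (hpx.trans h)

/-- For `c > constrainedSup K u p ε₀`, the point `xₘ` of `{x ∈ K | c ≤ u x}` with the least `p`
has `ε₀ < p xₘ`, and every `ε < p xₘ` keeps the constrained maximum below `c`. -/
lemma upperSemicontinuousWithinAt_constrainedSup (hK : IsCompact K) (hu : Continuous u)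
    (hp : Continuous p) (ε₀ : ℝ) :
    UpperSemicontinuousWithinAt (constrainedSup K u p) {ε | ∃ x ∈ K, p x ≤ ε} ε₀ := by
  intro c hc
  have below_c : ∀ ε, (∃ x ∈ K, p x ≤ ε) → (∀ x ∈ K, p x ≤ ε → u x < c) →
      constrainedSup K u p ε < c := fun ε hε hlt => by
    obtain ⟨x, hxK, hpx, hx⟩ := exists_eq_constrainedSup hK hu hp hε
    exact hx ▸ hlt x hxK hpx
  rcases ({x ∈ K | c ≤ u x} : Set X).eq_empty_or_nonempty with hL | hL
  · refine eventually_nhdsWithin_of_forall fun ε hε => below_c ε hε fun x hxK _ => ?_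
    by_contra! hcx
    exact hL.subset ⟨hxK, hcx⟩
  · obtain ⟨xₘ, ⟨hxₘK, hcxₘ⟩, hmin⟩ :=
      (hK.inter_right (isClosed_le continuous_const hu)).exists_isMinOn hL hp.continuousOn
    have hε₀ : ε₀ < p xₘ := by
      by_contra! h
      exact hc.not_ge (hcxₘ.trans (le_constrainedSup hK hu hp hxₘK h))
    filter_upwards [self_mem_nhdsWithin, nhdsWithin_le_nhds (Iio_mem_nhds hε₀)]
      with ε hε hεₘ
    refine below_c ε hε fun x hxK hpx => ?_
    by_contra! hcx
    exact (hεₘ.trans_le (hmin ⟨hxK, hcx⟩)).not_ge hpx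

end ConstrainedSup

lemma MonotoneOn.continuousWithinAt_Ici {f : ℝ → ℝ} {a : ℝ} (hf : MonotoneOn f (Ici a))
    (husc : UpperSemicontinuousWithinAt f (Ici a) a) : ContinuousWithinAt f (Ici a) a :=
  continuousWithinAt_iff_lower_upperSemicontinuousWithinAt.2
    ⟨fun _ hy => eventually_nhdsWithin_of_forall fun _ hx =>
      hy.trans_le (hf self_mem_Ici hx hx), husc⟩

namespace PrivacyFilter

variable {M N : ℕ} {P : Fin (M + 1) → Fin (N + 1) → ℝ}

lemma setOf_isFilter_eq_pi :
    {F : Fin (N + 1) → Fin (N + 2) → ℝ | IsFilter F} = pi univ fun _ => stdSimplex ℝ _ := by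
  ext F
  exact ⟨fun h y _ => ⟨h.1 y, h.2 y⟩,
    fun h => ⟨fun y => (h y trivial).1, fun y => (h y trivial).2⟩⟩

lemma isCompact_setOf_isFilter : IsCompact {F : Fin (N + 1) → Fin (N + 2) → ℝ | IsFilter F} :=
  setOf_isFilter_eq_pi ▸ isCompact_univ_pi fun _ => isCompact_stdSimplex _ _

lemma convex_setOf_isFilter : Convex ℝ {F : Fin (N + 1) → Fin (N + 2) → ℝ | IsFilter F} :=
  setOf_isFilter_eq_pi ▸ convex_pi fun _ _ => convex_stdSimplex _ _

variable (P) in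
lemma continuous_privF : Continuous (privF P) :=
  continuous_finsetSum _ fun _ _ => Continuous.ciSup_of_finite fun _ => by fun_prop

variable (P) in
lemma continuous_utilF : Continuous (utilF P) :=
  continuous_finsetSum _ fun _ _ => Continuous.ciSup_of_finite fun _ => by fun_prop

variable (P) in
lemma convexOn_privF : ConvexOn ℝ univ (privF P) := by
  refine ⟨convex_univ, fun F _ G _ a b ha hb _ => ?_⟩
  simp only [privF, smul_eq_mul, Finset.mul_sum, ← Finset.sum_add_distrib]
  refine Finset.sum_le_sum fun z _ => ciSup_le fun x => ?_
  have hbdd := fun H : Fin (N + 1) → Fin (N + 2) → ℝ =>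
    le_ciSup (Finite.bddAbove_range fun x => ∑ y, P x y * H y z) x
  calc ∑ y, P x y * (a • F + b • G) y z
      = a * ∑ y, P x y * F y z + b * ∑ y, P x y * G y z := by
        simp only [Pi.add_apply, Pi.smul_apply, smul_eq_mul, Finset.mul_sum,
          ← Finset.sum_add_distrib]
        exact Finset.sum_congr rfl fun y _ => by ring
    _ ≤ _ := add_le_add (mul_le_mul_of_nonneg_left (hbdd F) ha)
        (mul_le_mul_of_nonneg_left (hbdd G) hb)

/-- The maximum a posteriori guess of `Y` from the output `k.castSucc` is `k`, and the output
`Fin.last` is never produced. On such filters `utilF` is linear. -/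
def IsCanonical (P : Fin (M + 1) → Fin (N + 1) → ℝ) (F : Fin (N + 1) → Fin (N + 2) → ℝ) :
    Prop :=
  (∀ y, F y (Fin.last _) = 0) ∧
    ∀ k y, (∑ x, P x y) * F y k.castSucc ≤ (∑ x, P x k) * F k k.castSucc

lemma privF_eq_sum_castSucc {F : Fin (N + 1) → Fin (N + 2) → ℝ}
    (hF : ∀ y, F y (Fin.last _) = 0) :
    privF P F = ∑ k : Fin (N + 1), ⨆ x, ∑ y, P x y * F y k.castSucc := by
  rw [privF, Fin.sum_univ_castSucc]
  simp [hF]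

lemma IsCanonical.utilF_eq {F : Fin (N + 1) → Fin (N + 2) → ℝ} (hF : IsCanonical P F) :
    utilF P F = ∑ k, (∑ x, P x k) * F k k.castSucc := by
  rw [utilF, Fin.sum_univ_castSucc]
  simp only [hF.1, mul_zero, ciSup_const, add_zero]
  exact Finset.sum_congr rfl fun k _ => ciSup_eq_of_forall_le (hF.2 k)

lemma IsCanonical.smul_add {F G : Fin (N + 1) → Fin (N + 2) → ℝ} (hF : IsCanonical P F)
    (hG : IsCanonical P G) {a b : ℝ} (ha : 0 ≤ a) (hb : 0 ≤ b) :
    IsCanonical P (a • F + b • G) := by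
  refine ⟨fun y => by simp [hF.1, hG.1], fun k y => ?_⟩
  simp only [Pi.add_apply, Pi.smul_apply, smul_eq_mul, mul_add, mul_left_comm _ a,
    mul_left_comm _ b]
  exact add_le_add (mul_le_mul_of_nonneg_left (hF.2 k y) ha)
    (mul_le_mul_of_nonneg_left (hG.2 k y) hb)

lemma IsCanonical.utilF_smul_add {F G : Fin (N + 1) → Fin (N + 2) → ℝ}
    (hF : IsCanonical P F) (hG : IsCanonical P G) {a b : ℝ} (ha : 0 ≤ a) (hb : 0 ≤ b) :
    utilF P (a • F + b • G) = a * utilF P F + b * utilF P G := by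
  simp only [(hF.smul_add hG ha hb).utilF_eq, hF.utilF_eq, hG.utilF_eq, Finset.mul_sum,
    ← Finset.sum_add_distrib, Pi.add_apply, Pi.smul_apply, smul_eq_mul]
  exact Finset.sum_congr rfl fun k _ => by ring

variable (N) in
def idFilter : Fin (N + 1) → Fin (N + 2) → ℝ := fun y z => if z = y.castSucc then 1 else 0

lemma isFilter_idFilter : IsFilter (idFilter N) :=
  ⟨fun y z => by unfold idFilter; split_ifs <;> norm_num, fun y => by simp [idFilter]⟩

lemma isCanonical_idFilter (hP : ∀ x y, 0 ≤ P x y) : IsCanonical P (idFilter N) := by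
  refine ⟨fun y => by simp [idFilter, (Fin.castSucc_lt_last y).ne'], fun k y => ?_⟩
  by_cases h : y = k
  · rw [h]
  · simpa [idFilter, h, Ne.symm h] using Finset.sum_nonneg fun x _ => hP x k

lemma privF_idFilter : privF P (idFilter N) = PcXY P := by
  rw [privF_eq_sum_castSucc fun y => by simp [idFilter, (Fin.castSucc_lt_last y).ne']]
  simp [idFilter, PcXY]

lemma IsCanonical.utilF_le_utilF_idFilter (hP : ∀ x y, 0 ≤ P x y)
    {F : Fin (N + 1) → Fin (N + 2) → ℝ} (hF : IsFilter F) (hFc : IsCanonical P F) :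
    utilF P F ≤ utilF P (idFilter N) := by
  rw [hFc.utilF_eq, (isCanonical_idFilter hP).utilF_eq]
  refine Finset.sum_le_sum fun k _ => ?_
  have hle : F k k.castSucc ≤ 1 :=
    hF.2 k ▸ Finset.single_le_sum (fun z _ => hF.1 k z) (Finset.mem_univ _)
  simpa [idFilter] using mul_le_mul_of_nonneg_left hle (Finset.sum_nonneg fun x _ => hP x k)

variable (N) in
def constFilter : Fin (N + 1) → Fin (N + 2) → ℝ := fun _ z => if z = 0 then 1 else 0

lemma isFilter_constFilter : IsFilter (constFilter N) :=
  ⟨fun y z => by unfold constFilter; split_ifs <;> norm_num, fun y => by simp [constFilter]⟩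

lemma privF_constFilter : privF P (constFilter N) = PcX P := by
  simp [privF, constFilter, PcX, Fin.sum_univ_succ]

/-- Output `z` of `F` is sent to `(a z).castSucc`, where `a z` is a maximum a posteriori guess
of `Y` from `z`; the privacy can only drop because a supremum is subadditive. -/
lemma exists_isCanonical_le {F : Fin (N + 1) → Fin (N + 2) → ℝ} (hF : IsFilter F) :
    ∃ G, IsFilter G ∧ IsCanonical P G ∧ privF P G ≤ privF P F ∧ utilF P F ≤ utilF P G := by
  classical
  choose a ha using fun z => Finite.exists_max fun y => (∑ x, P x y) * F y z
  set G : Fin (N + 1) → Fin (N + 2) → ℝ :=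
    fun y z' => ∑ z with (a z).castSucc = z', F y z with hG
  have hG_castSucc : ∀ y k, G y k.castSucc = ∑ z with a z = k, F y z := by
    simp [hG, Fin.castSucc_inj]
  have hGc : IsCanonical P G := by
    refine ⟨fun y => by simp [hG, (Fin.castSucc_lt_last _).ne], fun k y => ?_⟩
    simp only [hG_castSucc, Finset.mul_sum]
    exact Finset.sum_le_sum fun z hz => (Finset.mem_filter.1 hz).2 ▸ ha z y
  refine ⟨G, ⟨fun y z => Finset.sum_nonneg fun _ _ => hF.1 _ _,
    fun y => (Finset.sum_fiberwise _ _ _).trans (hF.2 y)⟩, hGc, ?_, ?_⟩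
  · calc privF P G
        = ∑ z', ⨆ x, ∑ z with (a z).castSucc = z', ∑ y, P x y * F y z := by
          simp only [privF, hG, Finset.mul_sum]
          exact Finset.sum_congr rfl fun z' _ => by simp_rw [Finset.sum_comm (γ := Fin (N + 1))]
      _ ≤ ∑ z', ∑ z with (a z).castSucc = z', ⨆ x, ∑ y, P x y * F y z :=
          Finset.sum_le_sum fun _ _ => ciSup_sum_le_sum_ciSup _ _
      _ = privF P F := Finset.sum_fiberwise _ _ _
  · refine le_of_eq ?_
    calc utilF P F
        = ∑ z, (∑ x, P x (a z)) * F (a z) z :=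
          Finset.sum_congr rfl fun z _ => ciSup_eq_of_forall_le (ha z)
      _ = ∑ k, ∑ z with a z = k, (∑ x, P x k) * F k z := by
          rw [← Finset.sum_fiberwise _ a]
          exact Finset.sum_congr rfl fun k _ => Finset.sum_congr rfl fun z hz => by
            rw [(Finset.mem_filter.1 hz).2]
      _ = utilF P G := by simp only [hGc.utilF_eq, hG_castSucc, Finset.mul_sum]

lemma hFun_eq_constrainedSup :
    hFun P = constrainedSup {F | IsFilter F} (utilF P) (privF P) := by
  funext ε
  unfold hFun constrainedSup
  congr 1
  ext u
  exact ⟨fun ⟨F, hF, hp, hu⟩ => ⟨F, ⟨hF, hp⟩, hu.symm⟩,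
    fun ⟨F, ⟨hF, hp⟩, hu⟩ => ⟨F, hF, hp, hu.symm⟩⟩

lemma exists_isFilter_privF_le {ε : ℝ} (hε : PcX P ≤ ε) :
    ∃ F ∈ {F : Fin (N + 1) → Fin (N + 2) → ℝ | IsFilter F}, privF P F ≤ ε :=
  ⟨constFilter N, isFilter_constFilter, privF_constFilter.trans_le hε⟩

lemma utilF_le_hFun {F : Fin (N + 1) → Fin (N + 2) → ℝ} {ε : ℝ} (hF : IsFilter F)
    (hp : privF P F ≤ ε) : utilF P F ≤ hFun P ε :=
  hFun_eq_constrainedSup (P := P) ▸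
    le_constrainedSup isCompact_setOf_isFilter (continuous_utilF P) (continuous_privF P) hF hp

lemma exists_isCanonical_utilF_eq_hFun {ε : ℝ} (hε : PcX P ≤ ε) :
    ∃ G, IsFilter G ∧ IsCanonical P G ∧ privF P G ≤ ε ∧ utilF P G = hFun P ε := by
  obtain ⟨F, hF, hpF, huF⟩ := exists_eq_constrainedSup isCompact_setOf_isFilter
    (continuous_utilF P) (continuous_privF P) (exists_isFilter_privF_le hε)
  obtain ⟨G, hG, hGc, hpG, huG⟩ := exists_isCanonical_le (P := P) hF
  refine ⟨G, hG, hGc, hpG.trans hpF, le_antisymm (utilF_le_hFun hG (hpG.trans hpF)) ?_⟩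
  rwa [hFun_eq_constrainedSup, ← huF]

lemma concaveOn_hFun : ConcaveOn ℝ (Ici (PcX P)) (hFun P) := by
  refine ⟨convex_Ici _, fun ε₁ h₁ ε₂ h₂ a b ha hb hab => ?_⟩
  obtain ⟨G₁, hG₁, hG₁c, hp₁, hu₁⟩ := exists_isCanonical_utilF_eq_hFun (P := P) h₁
  obtain ⟨G₂, hG₂, hG₂c, hp₂, hu₂⟩ := exists_isCanonical_utilF_eq_hFun (P := P) h₂
  have hp : privF P (a • G₁ + b • G₂) ≤ a • ε₁ + b • ε₂ := calc
    _ ≤ a • privF P G₁ + b • privF P G₂ :=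
      (convexOn_privF P).2 (mem_univ _) (mem_univ _) ha hb hab
    _ ≤ a • ε₁ + b • ε₂ := by simp only [smul_eq_mul]; gcongr
  calc a • hFun P ε₁ + b • hFun P ε₂ = utilF P (a • G₁ + b • G₂) := by
        rw [hG₁c.utilF_smul_add hG₂c ha hb, hu₁, hu₂, smul_eq_mul, smul_eq_mul]
    _ ≤ hFun P (a • ε₁ + b • ε₂) := utilF_le_hFun (convex_setOf_isFilter hG₁ hG₂ ha hb hab) hp

lemma monotoneOn_hFun : MonotoneOn (hFun P) (Ici (PcX P)) := fun _ h₁ _ _ h => by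
  rw [hFun_eq_constrainedSup]
  exact constrainedSup_mono isCompact_setOf_isFilter (continuous_utilF P) (continuous_privF P)
    (exists_isFilter_privF_le h₁) h

lemma upperSemicontinuousWithinAt_hFun (ε : ℝ) :
    UpperSemicontinuousWithinAt (hFun P) (Ici (PcX P)) ε := by
  rw [hFun_eq_constrainedSup]
  exact (upperSemicontinuousWithinAt_constrainedSup isCompact_setOf_isFilter
    (continuous_utilF P) (continuous_privF P) ε).mono fun _ h => exists_isFilter_privF_le h

lemma exists_privF_eq_utilF_eq_hFun (hP : ∀ x y, 0 ≤ P x y) {ε : ℝ}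
    (hε : ε ∈ Icc (PcX P) (PcXY P)) :
    ∃ G, IsFilter G ∧ privF P G = ε ∧ utilF P G = hFun P ε := by
  obtain ⟨G₀, hG₀, hG₀c, hp₀, hu₀⟩ := exists_isCanonical_utilF_eq_hFun hε.1
  set path : ℝ → Fin (N + 1) → Fin (N + 2) → ℝ := fun t => (1 - t) • G₀ + t • idFilter N
  obtain ⟨t, ⟨ht₀, ht₁⟩, hpt⟩ := intermediate_value_Icc zero_le_one
    ((continuous_privF P).comp (by fun_prop : Continuous path)).continuousOn
    (⟨by simpa [path] using hp₀, by simpa [path, privF_idFilter] using hε.2⟩ :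
      ε ∈ Icc (privF P (path 0)) (privF P (path 1)))
  have hG : IsFilter (path t) :=
    convex_setOf_isFilter hG₀ isFilter_idFilter (by linarith) ht₀ (by ring)
  refine ⟨path t, hG, hpt, le_antisymm (utilF_le_hFun hG hpt.le) ?_⟩
  have hid := hG₀c.utilF_le_utilF_idFilter hP hG₀
  calc hFun P ε = (1 - t) * utilF P G₀ + t * utilF P G₀ := by rw [hu₀]; ring
    _ ≤ (1 - t) * utilF P G₀ + t * utilF P (idFilter N) := by gcongr
    _ = utilF P (path t) :=
        (hG₀c.utilF_smul_add (isCanonical_idFilter hP) (by linarith) ht₀).symm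

end PrivacyFilter

theorem hFun_continuous_concave_attained_general {M N : ℕ} (P : Fin (M + 1) → Fin (N + 1) → ℝ)
    (hpos : ∀ x y, 0 ≤ P x y) :
    ContinuousOn (hFun P) (Set.Icc (PcX P) (PcXY P)) ∧
    ConcaveOn ℝ (Set.Icc (PcX P) (PcXY P)) (hFun P) ∧
    ∀ ε ∈ Set.Icc (PcX P) (PcXY P),
      ∃ G, IsFilter G ∧ privF P G = ε ∧ utilF P G = hFun P ε := by
  have hconc := PrivacyFilter.concaveOn_hFun (P := P)
  have hcont : ContinuousOn (hFun P) (Ici (PcX P)) :=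
    hconc.continuousOn_Ici (PrivacyFilter.monotoneOn_hFun.continuousWithinAt_Ici
      (PrivacyFilter.upperSemicontinuousWithinAt_hFun _))
  exact ⟨hcont.mono Icc_subset_Ici_self, hconc.subset Icc_subset_Ici_self (convex_Icc _ _),
    fun _ hε => PrivacyFilter.exists_privF_eq_utilF_eq_hFun hpos hε⟩

/-- `h` is continuous and concave on `[P_c(X), P_c(X|Y)]`, and the
supremum defining `h(ε)` is attained, with the privacy constraint met with equality. -/
theorem hFun_continuous_concave_attained {M N : ℕ} (P : Fin (M + 1) → Fin (N + 1) → ℝ)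
    (hpos : ∀ x y, 0 ≤ P x y) (hsum : ∑ x, ∑ y, P x y = 1) :
    ContinuousOn (hFun P) (Set.Icc (PcX P) (PcXY P)) ∧
    ConcaveOn ℝ (Set.Icc (PcX P) (PcXY P)) (hFun P) ∧
    ∀ ε ∈ Set.Icc (PcX P) (PcXY P),
      ∃ G, IsFilter G ∧ privF P G = ε ∧ utilF P G = hFun P ε :=
  hFun_continuous_concave_attained_general P hpos
end

section
/- Let X and Z be jointly distributed random variables on finite alphabets with X uniformly distributed on its alphabet. If P_c(X|Z) = P_c(X) (equivalently, Arimoto's mutual information of order ∞ satisfies I_∞(X;Z) = 0), then X and Z are independent. -/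
open Finset

/-! Every entry of the joint pmf is bounded by its column maximum, so the total mass is at most
`(M + 1) · ∑_z max_x P(x, z) = (M + 1) · P_c(X|Z)`. For uniform `X` the hypothesis makes this bound
`(M + 1) · P_c(X) = 1`, so it is attained: every entry equals its column maximum, i.e. `P(x, z)`
does not depend on `x`, which together with uniformity is independence. -/

theorem eq_ciSup_of_card_mul_sum_ciSup_le {ι κ : Type*} [Fintype ι] [Fintype κ]
    (P : ι → κ → ℝ) (h : Fintype.card ι * ∑ z, ⨆ x, P x z ≤ ∑ x, ∑ z, P x z) (x : ι) (z : κ) :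
    P x z = ⨆ x', P x' z := by
  have hle : ∀ x z, P x z ≤ ⨆ x', P x' z := fun x z => Finite.le_ciSup (P · z) x
  have hrow : ∀ x, ∑ z, P x z ≤ ∑ z, ⨆ x', P x' z := fun x => sum_le_sum fun z _ => hle x z
  have htotal : ∑ x, ∑ z, P x z = ∑ _x : ι, ∑ z, ⨆ x', P x' z :=
    (sum_le_sum fun x _ => hrow x).antisymm (by simpa [sum_const, card_univ] using h)
  have hrow_eq := (sum_eq_sum_iff_of_le fun x _ => hrow x).1 htotal x (mem_univ x)
  exact (sum_eq_sum_iff_of_le fun z _ => hle x z).1 hrow_eq z (mem_univ z)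

theorem uniform_Iinfty_zero_implies_indep_general {M K : ℕ} (P : Fin (M + 1) → Fin (K + 1) → ℝ)
    (hunif : ∀ x, ∑ z, P x z = 1 / (M + 1))
    (h0 : (∑ z, ⨆ x, P x z) = ⨆ x, ∑ z, P x z) :
    ∀ x z, P x z = (∑ z', P x z') * (∑ x', P x' z) := by
  have hn : (M + 1 : ℝ) ≠ 0 := by positivity
  have hrow_max : ⨆ x, ∑ z, P x z = 1 / (M + 1) := by simp_rw [hunif]; exact ciSup_const
  have htotal : ∑ x, ∑ z, P x z = 1 := by simp [hunif, hn]
  have hcol : ∀ x z, P x z = ⨆ x', P x' z :=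
    eq_ciSup_of_card_mul_sum_ciSup_le P (by simp [h0, hrow_max, htotal, hn])
  intro x z
  rw [hunif x, sum_congr rfl fun x' _ => hcol x' z, hcol x z]
  simp [hn]

/-- Proposition 1: let `(X, Z)` have joint pmf `P` on finite alphabets
(modeled as `Fin (M+1) × Fin (K+1)`) with `X` uniformly distributed. If
`P_c(X|Z) = P_c(X)` (equivalently `I_∞(X;Z) = 0`), then `X` and `Z` are independent. -/
theorem uniform_Iinfty_zero_implies_indep {M K : ℕ} (P : Fin (M + 1) → Fin (K + 1) → ℝ)
    (hpos : ∀ x z, 0 ≤ P x z) (hsum : ∑ x, ∑ z, P x z = 1)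
    (hunif : ∀ x, ∑ z, P x z = 1 / (M + 1))
    (h0 : (∑ z, ⨆ x, P x z) = ⨆ x, ∑ z, P x z) :
    ∀ x z, P x z = (∑ z', P x z') * (∑ x', P x' z) :=
  uniform_Iinfty_zero_implies_indep_general P hunif h0
end

section
/- Let U, X, Z be random variables on finite alphabets such that U and Z are conditionally independent given X (i.e., U–X–Z forms a Markov chain), and suppose X is uniformly distributed on its alphabet. Then P_c(U|Z) ≤ P_c(X|Z) · P_c(U) / P_c(X); equivalently, I_∞(U;Z) ≤ I_∞(X;Z). -/
open Finset

/-- let `(U, X, Z)` have joint pmf `Q` on finite alphabets with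
`U – X – Z` a Markov chain (conditional independence of `U` and `Z` given `X`, stated
in multiplied-out form `Pr(u,x,z)·Pr(x) = Pr(u,x)·Pr(x,z)`), and with `X` uniformly
distributed. Then `P_c(U|Z) ≤ P_c(X|Z) · P_c(U) / P_c(X)`, i.e.
`I_∞(U;Z) ≤ I_∞(X;Z)`. -/
theorem Pc_cond_le_of_markov_uniform {A B C : ℕ}
    (Q : Fin (A + 1) → Fin (B + 1) → Fin (C + 1) → ℝ)
    (hpos : ∀ u x z, 0 ≤ Q u x z)
    (hsum : ∑ u, ∑ x, ∑ z, Q u x z = 1)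
    (hmarkov : ∀ u x z,
      Q u x z * (∑ u', ∑ z', Q u' x z') = (∑ z', Q u x z') * (∑ u', Q u' x z))
    (hunif : ∀ x, ∑ u, ∑ z, Q u x z = 1 / (B + 1)) :
    (∑ z, ⨆ u, ∑ x, Q u x z) ≤
      (∑ z, ⨆ x, ∑ u, Q u x z) * (⨆ u, ∑ x, ∑ z, Q u x z) /
        (⨆ x, ∑ u, ∑ z, Q u x z) := by
  have hB : (0:ℝ) < (B:ℝ) + 1 := by positivity
  have bddA : ∀ (f : Fin (A+1) → ℝ), BddAbove (Set.range f) :=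
    fun f => (Set.finite_range f).bddAbove
  have bddB : ∀ (f : Fin (B+1) → ℝ), BddAbove (Set.range f) :=
    fun f => (Set.finite_range f).bddAbove
  set M := ⨆ u, ∑ x, ∑ z, Q u x z with hMdef
  have hsupX : (⨆ x, ∑ u, ∑ z, Q u x z) = 1 / ((B:ℝ)+1) := by
    simp only [hunif]
    exact ciSup_const
  have hM : 0 ≤ M := by
    refine le_trans ?_ (le_ciSup (bddA _) 0)
    exact Finset.sum_nonneg fun x _ => Finset.sum_nonneg fun z _ => hpos _ _ _
  have key : ∀ z, (⨆ u, ∑ x, Q u x z) ≤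
      (⨆ x, ∑ u, Q u x z) * M * ((B:ℝ)+1) := by
    intro z
    have hsupXz : 0 ≤ ⨆ x, ∑ u, Q u x z := by
      refine le_trans ?_ (le_ciSup (bddB _) 0)
      exact Finset.sum_nonneg fun u _ => hpos _ _ _
    refine ciSup_le fun u => ?_
    have hQ : ∀ x, Q u x z = ((B:ℝ)+1) * ((∑ z', Q u x z') * (∑ u', Q u' x z)) := by
      intro x
      have h := hmarkov u x z
      rw [hunif x] at h
      have hne : ((B:ℝ)+1) ≠ 0 := ne_of_gt hB
      field_simp at h
      nlinarith [h]
    calc ∑ x, Q u x z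
        = ((B:ℝ)+1) * ∑ x, (∑ z', Q u x z') * (∑ u', Q u' x z) := by
          rw [Finset.mul_sum]
          exact Finset.sum_congr rfl fun x _ => hQ x
      _ ≤ ((B:ℝ)+1) * ∑ x, (∑ z', Q u x z') * (⨆ x', ∑ u', Q u' x' z) := by
          refine mul_le_mul_of_nonneg_left ?_ (le_of_lt hB)
          refine Finset.sum_le_sum fun x _ => ?_
          refine mul_le_mul_of_nonneg_left (le_ciSup (f := fun x' => ∑ u', Q u' x' z) (bddB _) x) ?_
          exact Finset.sum_nonneg fun z' _ => hpos _ _ _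
      _ = ((B:ℝ)+1) * ((∑ x, ∑ z', Q u x z') * (⨆ x', ∑ u', Q u' x' z)) := by
          rw [← Finset.sum_mul]
      _ ≤ ((B:ℝ)+1) * (M * (⨆ x', ∑ u', Q u' x' z)) := by
          refine mul_le_mul_of_nonneg_left ?_ (le_of_lt hB)
          exact mul_le_mul_of_nonneg_right (le_ciSup (f := fun u' => ∑ x, ∑ z, Q u' x z) (bddA _) u) hsupXz
      _ = (⨆ x, ∑ u, Q u x z) * M * ((B:ℝ)+1) := by ring
  rw [hsupX, div_eq_mul_inv, one_div, inv_inv]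
  calc ∑ z, ⨆ u, ∑ x, Q u x z
      ≤ ∑ z, (⨆ x, ∑ u, Q u x z) * M * ((B:ℝ)+1) :=
        Finset.sum_le_sum fun z _ => key z
    _ = (∑ z, ⨆ x, ∑ u, Q u x z) * M * ((B:ℝ)+1) := by
        rw [← Finset.sum_mul, ← Finset.sum_mul]
end

section
/- Let X ~ Bernoulli(p) with p ∈ [1/2, 1) and P_{Y|X} = BIBO(α,β) with α, β ∈ [0, 1/2) such that (1−α)(1−p) > βp. Then for every ε ∈ [p, (1−α)(1−p) + (1−β)p] = [P_c(X), P_c(X|Y)]: h(ε) = 1 − ζ(ε)·q if α(1−α)(1−p)² < β(1−β)p², and h(ε) = 1 − ζ̃(ε)·(1−q) if α(1−α)(1−p)² ≥ β(1−β)p², where q := α(1−p) + (1−β)p = Pr(Y = 1), ζ(ε) := ((1−α)(1−p) + (1−β)p − ε)/((1−β)p − α(1−p)), and ζ̃(ε) := ((1−α)(1−p) + (1−β)p − ε)/((1−α)(1−p) − βp). Moreover, in each case the supremum defining h(ε) is attained by a filter F ∈ ℱ with 𝒫(F) = ε: the Z-channel with crossover probability ζ(ε) from input 1 to output 0 in the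 first case, and the reverse Z-channel with crossover probability ζ̃(ε) from input 0 to output 1 in the second case (each embedded in ℱ with an all-zero third column). -/
open Finset

/-- Privacy `𝒫(F) = P_c(X|Z)` of a `2×3` filter, for a joint pmf `P` on `{0,1}²`. -/
noncomputable def privF2 (P : Fin 2 → Fin 2 → ℝ) (F : Fin 2 → Fin 3 → ℝ) : ℝ :=
  ∑ z, ⨆ x, ∑ y, P x y * F y z

/-- Utility `𝒰(F) = P_c(Y|Z)` of a `2×3` filter. -/
noncomputable def utilF2 (P : Fin 2 → Fin 2 → ℝ) (F : Fin 2 → Fin 3 → ℝ) : ℝ :=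
  ∑ z, ⨆ y, (∑ x, P x y) * F y z

/-- `F ∈ ℱ`: `F` is a row-stochastic `2×3` matrix. -/
def IsFilter2 (F : Fin 2 → Fin 3 → ℝ) : Prop :=
  (∀ y z, 0 ≤ F y z) ∧ ∀ y, ∑ z, F y z = 1

/-- The privacy-constrained guessing function `h(ε)` in the binary case. -/
noncomputable def hFun2 (P : Fin 2 → Fin 2 → ℝ) (ε : ℝ) : ℝ :=
  sSup {u | ∃ F, IsFilter2 F ∧ privF2 P F ≤ ε ∧ u = utilF2 P F}

/-!
`h(ε)` is the value of a linear program in `F`. Along the Z-channel family `Z(ζ)` privacy and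
utility are both affine in `ζ`, so these filters trace a segment in the (privacy, utility) plane.
Weights `l, m` on the two row sums of `F` and a price `c ≥ 0` on privacy, chosen so that every
column of `F` contributes at most its share (`utilF2_le_of_dual`), show that no filter lies
above the line through that segment; the case condition on `α, β, p` is exactly the feasibility
of this dual certificate. The reverse Z-channel case is the Z-channel case for the relabelled
pmf `P (1 - x) (1 - y)`, with the first two output columns swapped.
-/

lemma ciSup_fin_two {α : Type*} [ConditionallyCompleteLattice α] (f : Fin 2 → α) :
    ⨆ i, f i = f 0 ⊔ f 1 := by
  have : Set.range f = {f 0, f 1} := by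
    ext; simp [Fin.exists_fin_two, eq_comm]
  rw [iSup, this, csSup_pair]

section Relabel

variable (e f : Equiv.Perm (Fin 2)) (g : Equiv.Perm (Fin 3))

lemma isFilter2_relabel_iff (F : Fin 2 → Fin 3 → ℝ) :
    IsFilter2 (fun y z => F (f y) (g z)) ↔ IsFilter2 F := by
  unfold IsFilter2
  constructor
  · rintro ⟨hnn, hsum⟩
    refine ⟨fun y z => by simpa using hnn (f.symm y) (g.symm z), fun y => ?_⟩
    simpa [Equiv.sum_comp g (F y)] using hsum (f.symm y)
  · rintro ⟨hnn, hsum⟩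
    exact ⟨fun y z => hnn _ _, fun y => (Equiv.sum_comp g (F (f y))).trans (hsum _)⟩

lemma privF2_relabel (P : Fin 2 → Fin 2 → ℝ) (F : Fin 2 → Fin 3 → ℝ) :
    privF2 (fun x y => P (e x) (f y)) (fun y z => F (f y) (g z)) = privF2 P F := by
  unfold privF2
  show ∑ z, ⨆ x, ∑ y, P (e x) (f y) * F (f y) (g z) = _
  rw [Equiv.sum_comp g (fun w => ⨆ x, ∑ y, P (e x) (f y) * F (f y) w)]
  refine Finset.sum_congr rfl fun z _ => ?_
  rw [Equiv.iSup_comp e (g := fun x => ∑ y, P x (f y) * F (f y) z)]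
  exact iSup_congr fun x => Equiv.sum_comp f (fun y => P x y * F y z)

lemma utilF2_relabel (P : Fin 2 → Fin 2 → ℝ) (F : Fin 2 → Fin 3 → ℝ) :
    utilF2 (fun x y => P (e x) (f y)) (fun y z => F (f y) (g z)) = utilF2 P F := by
  unfold utilF2
  show ∑ z, ⨆ y, (∑ x, P (e x) (f y)) * F (f y) (g z) = _
  rw [Equiv.sum_comp g (fun w => ⨆ y, (∑ x, P (e x) (f y)) * F (f y) w)]
  refine Finset.sum_congr rfl fun z _ => ?_
  rw [Equiv.iSup_comp f (g := fun y => (∑ x, P (e x) y) * F y z)]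
  exact iSup_congr fun y => by rw [Equiv.sum_comp e (fun x => P x y)]

lemma hFun2_relabel (P : Fin 2 → Fin 2 → ℝ) (ε : ℝ) :
    hFun2 (fun x y => P (e x) (f y)) ε = hFun2 P ε := by
  unfold hFun2
  congr 1
  ext u
  constructor
  · rintro ⟨F, hF, hpriv, rfl⟩
    obtain ⟨G, rfl⟩ :
        ∃ G : Fin 2 → Fin 3 → ℝ, (fun y z => G (f y) ((1 : Equiv.Perm (Fin 3)) z)) = F :=
      ⟨fun y z => F (f.symm y) z, by ext; simp⟩
    exact ⟨_, (isFilter2_relabel_iff f 1 _).1 hF, (privF2_relabel e f 1 P _) ▸ hpriv,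
      utilF2_relabel e f 1 P _⟩
  · rintro ⟨F, hF, hpriv, rfl⟩
    exact ⟨fun y z => F (f y) z, (isFilter2_relabel_iff f 1 F).2 hF,
      (privF2_relabel e f 1 P F).symm ▸ hpriv, (utilF2_relabel e f 1 P F).symm⟩

end Relabel

section Duality

variable (P : Fin 2 → Fin 2 → ℝ) {l m c : ℝ}

lemma utilF2_le_of_dual (hc : 0 ≤ c)
    (h00 : ∑ x, P x 0 ≤ l + c * P 0 0) (h01 : 0 ≤ m + c * P 0 1)
    (h10 : 0 ≤ l + c * P 1 0) (h11 : ∑ x, P x 1 ≤ m + c * P 1 1)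
    {F : Fin 2 → Fin 3 → ℝ} (hF : IsFilter2 F) :
    utilF2 P F ≤ l + m + c * privF2 P F := by
  obtain ⟨hnn, hsum⟩ := hF
  have hcol : ∀ z, ⨆ y, (∑ x, P x y) * F y z
      ≤ l * F 0 z + m * F 1 z + c * ⨆ x, ∑ y, P x y * F y z := by
    intro z
    have hu := hnn 0 z
    have hv := hnn 1 z
    simp only [ciSup_fin_two, Fin.sum_univ_two] at h00 h11 ⊢
    have h0 := mul_le_mul_of_nonneg_left (le_max_left (P 0 0 * F 0 z + P 0 1 * F 1 z)
      (P 1 0 * F 0 z + P 1 1 * F 1 z)) hc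
    have h1 := mul_le_mul_of_nonneg_left (le_max_right (P 0 0 * F 0 z + P 0 1 * F 1 z)
      (P 1 0 * F 0 z + P 1 1 * F 1 z)) hc
    refine max_le ?_ ?_
    · nlinarith [mul_le_mul_of_nonneg_right h00 hu, mul_le_mul_of_nonneg_right h01 hv]
    · nlinarith [mul_le_mul_of_nonneg_right h10 hu, mul_le_mul_of_nonneg_right h11 hv]
  calc utilF2 P F ≤ ∑ z, (l * F 0 z + m * F 1 z + c * ⨆ x, ∑ y, P x y * F y z) :=
        Finset.sum_le_sum fun z _ => hcol z
    _ = l + m + c * privF2 P F := by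
        simp only [Finset.sum_add_distrib, ← Finset.mul_sum, hsum, privF2, mul_one]

end Duality

def zChannel (ζ : ℝ) : Fin 2 → Fin 3 → ℝ := ![![1, 0, 0], ![ζ, 1 - ζ, 0]]

section ZChannel

variable (P : Fin 2 → Fin 2 → ℝ) {ζ : ℝ}

lemma isFilter2_zChannel (h0 : 0 ≤ ζ) (h1 : ζ ≤ 1) : IsFilter2 (zChannel ζ) := by
  refine ⟨fun y z => ?_, fun y => ?_⟩
  · fin_cases y <;> fin_cases z <;> simp [zChannel, h0, h1]
  · fin_cases y <;> simp [zChannel, Fin.sum_univ_three]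

lemma privF2_zChannel (hb : P 0 1 ≤ P 1 1) (h1 : ζ ≤ 1)
    (hcol : P 1 0 + P 1 1 * ζ ≤ P 0 0 + P 0 1 * ζ) :
    privF2 P (zChannel ζ) = P 0 0 + P 1 1 - (P 1 1 - P 0 1) * ζ := by
  have h : P 0 1 * (1 - ζ) ≤ P 1 1 * (1 - ζ) :=
    mul_le_mul_of_nonneg_right hb (by linarith)
  simp [privF2, zChannel, Fin.sum_univ_three, ciSup_fin_two, hcol, h]
  ring

lemma utilF2_zChannel (h1 : ζ ≤ 1) (hq : 0 ≤ ∑ x, P x 1)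
    (hcol : (∑ x, P x 1) * ζ ≤ ∑ x, P x 0) :
    utilF2 P (zChannel ζ) = ∑ x, P x 0 + (∑ x, P x 1) * (1 - ζ) := by
  have h : 0 ≤ (∑ x, P x 1) * (1 - ζ) := mul_nonneg hq (by linarith)
  simp only [Fin.sum_univ_two] at hcol h ⊢
  simp [utilF2, zChannel, Fin.sum_univ_three, ciSup_fin_two, hcol, h]

end ZChannel

section ZChannelOptimal

variable (P : Fin 2 → Fin 2 → ℝ) (hP : ∀ x y, 0 ≤ P x y) (hD : P 0 1 < P 1 1)
  (hcase : (∑ x, P x 1) * (P 0 0 - P 1 0) ≤ (∑ x, P x 0) * (P 1 1 - P 0 1))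
include hP hD hcase

lemma utilF2_le_zChannel_line {F : Fin 2 → Fin 3 → ℝ} (hF : IsFilter2 F) :
    utilF2 P F ≤
      ∑ x, P x 0 - (∑ x, P x 1) / (P 1 1 - P 0 1) * (P 0 0 + P 0 1 - privF2 P F) := by
  have hDpos : 0 < P 1 1 - P 0 1 := sub_pos.2 hD
  set c := (∑ x, P x 1) / (P 1 1 - P 0 1)
  have hc : 0 ≤ c := div_nonneg (Finset.sum_nonneg fun x _ => hP x 1) hDpos.le
  have hcD : c * (P 1 1 - P 0 1) = ∑ x, P x 1 := div_mul_cancel₀ _ hDpos.ne'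
  have h10 : 0 ≤ ∑ x, P x 0 - c * P 0 0 + c * P 1 0 := by
    have : c * (P 0 0 - P 1 0) * (P 1 1 - P 0 1) ≤ (∑ x, P x 0) * (P 1 1 - P 0 1) := by
      rw [mul_right_comm, hcD]; exact hcase
    linarith [le_of_mul_le_mul_right this hDpos]
  have h11 : ∑ x, P x 1 ≤ -(c * P 0 1) + c * P 1 1 := by linarith
  have := utilF2_le_of_dual P (l := ∑ x, P x 0 - c * P 0 0) (m := -(c * P 0 1)) hc
    (by linarith) (by linarith) h10 h11 hF
  linarith

theorem zChannel_optimal {ε : ℝ} (hX0 : P 0 0 + P 0 1 ≤ ε) (hX1 : P 1 0 + P 1 1 ≤ ε)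
    (hXY : ε ≤ P 0 0 + P 1 1) :
    let ζ := (P 0 0 + P 1 1 - ε) / (P 1 1 - P 0 1)
    hFun2 P ε = ∑ x, P x 0 + (∑ x, P x 1) * (1 - ζ) ∧
      IsFilter2 (zChannel ζ) ∧ privF2 P (zChannel ζ) = ε ∧
      utilF2 P (zChannel ζ) = hFun2 P ε := by
  intro ζ
  have hDpos : 0 < P 1 1 - P 0 1 := sub_pos.2 hD
  have hζD : (P 1 1 - P 0 1) * ζ = P 0 0 + P 1 1 - ε := mul_div_cancel₀ _ hDpos.ne'
  have hζ0 : 0 ≤ ζ := div_nonneg (by linarith) hDpos.le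
  have hζ1 : ζ ≤ 1 := (div_le_one hDpos).2 (by linarith)
  have hq : 0 ≤ ∑ x, P x 1 := Finset.sum_nonneg fun x _ => hP x 1
  have hcolX : P 1 0 + P 1 1 * ζ ≤ P 0 0 + P 0 1 * ζ := by linarith
  have hcolY : (∑ x, P x 1) * ζ ≤ ∑ x, P x 0 := by
    refine le_of_mul_le_mul_right ?_ hDpos
    calc (∑ x, P x 1) * ζ * (P 1 1 - P 0 1) ≤ (∑ x, P x 1) * (P 0 0 - P 1 0) := by
          rw [mul_assoc, mul_comm ζ, hζD]; exact mul_le_mul_of_nonneg_left (by linarith) hq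
      _ ≤ (∑ x, P x 0) * (P 1 1 - P 0 1) := hcase
  have hpriv : privF2 P (zChannel ζ) = ε := by
    rw [privF2_zChannel P hD.le hζ1 hcolX]; linarith
  have hutil := utilF2_zChannel P hζ1 hq hcolY
  have hline : ∀ F, IsFilter2 F → privF2 P F ≤ ε → utilF2 P F ≤ utilF2 P (zChannel ζ) := by
    intro F hF hFε
    have hcD : (∑ x, P x 1) / (P 1 1 - P 0 1) * (P 1 1 - P 0 1) = ∑ x, P x 1 :=
      div_mul_cancel₀ _ hDpos.ne'
    calc utilF2 P F
        ≤ ∑ x, P x 0 - (∑ x, P x 1) / (P 1 1 - P 0 1) * (P 0 0 + P 0 1 - privF2 P F) :=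
          utilF2_le_zChannel_line P hP hD hcase hF
      _ ≤ ∑ x, P x 0 - (∑ x, P x 1) / (P 1 1 - P 0 1) * (P 0 0 + P 0 1 - ε) := by gcongr
      _ = utilF2 P (zChannel ζ) := by
          rw [hutil]; linear_combination (1 - ζ) * hcD + (∑ x, P x 1) / (P 1 1 - P 0 1) * hζD
  have hmax : hFun2 P ε = utilF2 P (zChannel ζ) :=
    IsGreatest.csSup_eq ⟨⟨_, isFilter2_zChannel hζ0 hζ1, hpriv.le, rfl⟩,
      by rintro _ ⟨F, hF, hFε, rfl⟩; exact hline F hF hFε⟩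
  exact ⟨hmax.trans hutil, isFilter2_zChannel hζ0 hζ1, hpriv, hmax.symm⟩

end ZChannelOptimal

def reverseZChannel (ζ : ℝ) : Fin 2 → Fin 3 → ℝ := ![![1 - ζ, ζ, 0], ![0, 1, 0]]

lemma zChannel_eq_reverseZChannel_swap (ζ : ℝ) :
    zChannel ζ = fun y z => reverseZChannel ζ (Equiv.swap 0 1 y) (Equiv.swap 0 1 z) := by
  ext y z
  fin_cases y <;> fin_cases z <;> rfl

theorem reverseZChannel_optimal (P : Fin 2 → Fin 2 → ℝ) (hP : ∀ x y, 0 ≤ P x y)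
    (hD : P 1 0 < P 0 0)
    (hcase : (∑ x, P x 0) * (P 1 1 - P 0 1) ≤ (∑ x, P x 1) * (P 0 0 - P 1 0))
    {ε : ℝ} (hX0 : P 0 0 + P 0 1 ≤ ε) (hX1 : P 1 0 + P 1 1 ≤ ε)
    (hXY : ε ≤ P 0 0 + P 1 1) :
    let ζ := (P 0 0 + P 1 1 - ε) / (P 0 0 - P 1 0)
    hFun2 P ε = ∑ x, P x 1 + (∑ x, P x 0) * (1 - ζ) ∧
      IsFilter2 (reverseZChannel ζ) ∧ privF2 P (reverseZChannel ζ) = ε ∧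
      utilF2 P (reverseZChannel ζ) = hFun2 P ε := by
  intro ζ
  obtain ⟨hval, hfil, hpriv, hutil⟩ :=
    zChannel_optimal (fun x y => P (Equiv.swap 0 1 x) (Equiv.swap 0 1 y)) (fun x y => hP _ _)
      (by simpa using hD) (by simpa [Fin.sum_univ_two, add_comm] using hcase)
      (by simpa [add_comm] using hX1) (by simpa [add_comm] using hX0)
      (by simpa [add_comm] using hXY)
  simp only [Equiv.swap_apply_left, Equiv.swap_apply_right, add_comm (P 1 1) (P 0 0),
    zChannel_eq_reverseZChannel_swap, privF2_relabel, utilF2_relabel, hFun2_relabel,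
    isFilter2_relabel_iff] at hval hfil hpriv hutil
  refine ⟨hval.trans ?_, hfil, hpriv, hutil⟩
  simp only [Fin.sum_univ_two, Equiv.swap_apply_left, Equiv.swap_apply_right]
  ring

/-- Theorem 2: closed form of `h` for `X ~ Bernoulli(p)` and
`P_{Y|X} = BIBO(α,β)`, together with the optimality of the Z-channel `Z(ζ(ε))`
(respectively the reverse Z-channel `Z̃(ζ̃(ε))`), embedded in `ℱ` with an all-zero
third column. -/
theorem hFun_binary_closed_form (p α β : ℝ)
    (hp : p ∈ Set.Ico (1 / 2 : ℝ) 1)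
    (hα : α ∈ Set.Ico (0 : ℝ) (1 / 2))
    (hβ : β ∈ Set.Ico (0 : ℝ) (1 / 2))
    (hnt : β * p < (1 - α) * (1 - p))
    (P : Fin 2 → Fin 2 → ℝ)
    (h00 : P 0 0 = (1 - p) * (1 - α)) (h01 : P 0 1 = (1 - p) * α)
    (h10 : P 1 0 = p * β) (h11 : P 1 1 = p * (1 - β)) :
    ∀ ε ∈ Set.Icc p ((1 - α) * (1 - p) + (1 - β) * p),
      (α * (1 - α) * (1 - p) ^ 2 < β * (1 - β) * p ^ 2 →
        (let q : ℝ := α * (1 - p) + (1 - β) * p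
         let ζ : ℝ := ((1 - α) * (1 - p) + (1 - β) * p - ε) / ((1 - β) * p - α * (1 - p))
         let F : Fin 2 → Fin 3 → ℝ := ![![1, 0, 0], ![ζ, 1 - ζ, 0]]
         hFun2 P ε = 1 - ζ * q ∧
         IsFilter2 F ∧ privF2 P F = ε ∧ utilF2 P F = hFun2 P ε)) ∧
      (β * (1 - β) * p ^ 2 ≤ α * (1 - α) * (1 - p) ^ 2 →
        (let q : ℝ := α * (1 - p) + (1 - β) * p
         let ζ' : ℝ := ((1 - α) * (1 - p) + (1 - β) * p - ε) / ((1 - α) * (1 - p) - β * p)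
         let F : Fin 2 → Fin 3 → ℝ := ![![1 - ζ', ζ', 0], ![0, 1, 0]]
         hFun2 P ε = 1 - ζ' * (1 - q) ∧
         IsFilter2 F ∧ privF2 P F = ε ∧ utilF2 P F = hFun2 P ε)) := by
  obtain ⟨hp0, hp1⟩ := hp
  obtain ⟨hα0, hα1⟩ := hα
  obtain ⟨hβ0, hβ1⟩ := hβ
  rintro ε ⟨hεX, hεXY⟩
  have hP : ∀ x y, 0 ≤ P x y := by
    intro x y
    fin_cases x <;> fin_cases y <;> simp only [Fin.zero_eta, Fin.mk_one, h00, h01, h10, h11] <;>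
      exact mul_nonneg (by linarith) (by linarith)
  have hm0 : ∑ x, P x 0 = (1 - α) * (1 - p) + β * p := by
    rw [Fin.sum_univ_two, h00, h10]; ring
  have hm1 : ∑ x, P x 1 = α * (1 - p) + (1 - β) * p := by
    rw [Fin.sum_univ_two, h01, h11]; ring
  have hX0 : P 0 0 + P 0 1 ≤ ε := by rw [h00, h01]; linarith
  have hX1 : P 1 0 + P 1 1 ≤ ε := by rw [h10, h11]; linarith
  have hXY : ε ≤ P 0 0 + P 1 1 := by rw [h00, h11]; linarith
  refine ⟨fun hcase => ?_, fun hcase => ?_⟩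
  · have hD : P 0 1 < P 1 1 := by rw [h01, h11]; nlinarith
    obtain ⟨hval, hfil, hpriv, hutil⟩ := zChannel_optimal P hP hD
      (by rw [hm0, hm1, h00, h01, h10, h11]; linarith) hX0 hX1 hXY
    intro q ζ F
    have hζ : (P 0 0 + P 1 1 - ε) / (P 1 1 - P 0 1) = ζ := by rw [h00, h01, h11]; ring
    rw [hζ, hm0, hm1] at hval
    rw [hζ] at hfil hpriv hutil
    exact ⟨by rw [hval]; ring, hfil, hpriv, hutil⟩
  · obtain ⟨hval, hfil, hpriv, hutil⟩ :=
      reverseZChannel_optimal P hP (by rw [h00, h10]; linarith)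
        (by rw [hm0, hm1, h00, h01, h10, h11]; linarith) hX0 hX1 hXY
    intro q ζ' F
    have hζ : (P 0 0 + P 1 1 - ε) / (P 0 0 - P 1 0) = ζ' := by rw [h00, h10, h11]; ring
    rw [hζ, hm0, hm1] at hval
    rw [hζ] at hfil hpriv hutil
    exact ⟨by rw [hval]; ring, hfil, hpriv, hutil⟩
end

section
/- If P_c(X) < P_c(X|Y), then there exist ε_L ∈ (P_c(X), P_c(X|Y)) and a constant d ≥ 0 such that h̲(ε) = 1 − (P_c(X|Y) − ε)·d for every ε ∈ [ε_L, P_c(X|Y)]; in particular, h̲ is affine on [ε_L, P_c(X|Y)] and d is the left derivative of h̲ at P_c(X|Y). -/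
open Finset

/-- Privacy `𝒫(F) = P_c(X|Z)` of a square `(N+1)×(N+1)` filter, for a joint pmf `P` of
`(X,Y)` on `Fin (M+1) × Fin (N+1)`. -/
noncomputable def privS {M N : ℕ} (P : Fin (M + 1) → Fin (N + 1) → ℝ)
    (F : Fin (N + 1) → Fin (N + 1) → ℝ) : ℝ :=
  ∑ z, ⨆ x, ∑ y, P x y * F y z

/-- Utility `𝒰(F) = P_c(Y|Z)` of a square filter. -/
noncomputable def utilS {M N : ℕ} (P : Fin (M + 1) → Fin (N + 1) → ℝ)
    (F : Fin (N + 1) → Fin (N + 1) → ℝ) : ℝ :=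
  ∑ z, ⨆ y, (∑ x, P x y) * F y z

/-- `F` is a row-stochastic `(N+1)×(N+1)` matrix. -/
def IsFilterS {N : ℕ} (F : Fin (N + 1) → Fin (N + 1) → ℝ) : Prop :=
  (∀ y z, 0 ≤ F y z) ∧ ∀ y, ∑ z, F y z = 1

/-- The variant privacy-constrained guessing function `h̲(ε)`, where the displayed
alphabet equals the alphabet of `Y`. -/
noncomputable def hUnder {M N : ℕ} (P : Fin (M + 1) → Fin (N + 1) → ℝ) (ε : ℝ) : ℝ :=
  sSup {u | ∃ F, IsFilterS F ∧ privS P F ≤ ε ∧ u = utilS P F}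

/-!
With `q` the marginal of `Y`, `utilS F = max_σ ∑_z q(σ z) F(σ z, z)`, so the two suprema can be
exchanged: `h̲(ε)` is the maximum, over the finitely many guessing maps `σ`, of the optimal value of
the linear program "maximise `utilGuess σ F` over filters `F` with privacy at most `ε`". The pairs
`(F, ε)` form a compact polyhedron, hence the convex hull of its finitely many vertices, so each
such value is the upper envelope of a planar polygon and is affine on a left neighbourhood of
`P_c(X|Y)`. A finite maximum of functions affine near `P_c(X|Y)` is again affine there, and
`h̲(P_c(X|Y)) = 1` by the identity filter. The slope is nonnegative because `h̲` is monotone.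
-/

open Set Filter Topology

section Polyhedron

variable {E : Type*} [AddCommGroup E] [Module ℝ E]

def IsPolyhedron (s : Set E) : Prop :=
  ∃ S : Set ((E →ₗ[ℝ] ℝ) × ℝ), S.Finite ∧ s = {x | ∀ c ∈ S, c.1 x ≤ c.2}

lemma isPolyhedron_setOf_le (φ : E →ₗ[ℝ] ℝ) (β : ℝ) : IsPolyhedron {x | φ x ≤ β} :=
  ⟨{(φ, β)}, finite_singleton _, by simp⟩

lemma isPolyhedron_setOf_eq (φ : E →ₗ[ℝ] ℝ) (β : ℝ) : IsPolyhedron {x | φ x = β} :=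
  ⟨{(φ, β), (-φ, -β)}, toFinite _, by ext x; simp [le_antisymm_iff]⟩

lemma IsPolyhedron.inter {s t : Set E} (hs : IsPolyhedron s) (ht : IsPolyhedron t) :
    IsPolyhedron (s ∩ t) := by
  obtain ⟨S, hS, rfl⟩ := hs
  obtain ⟨T, hT, rfl⟩ := ht
  exact ⟨S ∪ T, hS.union hT, by ext x; simp [or_imp, forall_and]⟩

lemma IsPolyhedron.iInter {ι : Type*} [Finite ι] {s : ι → Set E}
    (hs : ∀ i, IsPolyhedron (s i)) : IsPolyhedron (⋂ i, s i) := by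
  choose S hS hs using hs
  refine ⟨⋃ i, S i, finite_iUnion hS, ?_⟩
  ext x
  simp only [hs, mem_iInter, mem_ofPred_eq, mem_iUnion, forall_exists_index]
  exact forall_comm

lemma IsPolyhedron.convex {s : Set E} (hs : IsPolyhedron s) : Convex ℝ s := by
  obtain ⟨S, -, rfl⟩ := hs
  intro x hx y hy a b ha hb hab c hc
  have hxc : c.1 x ≤ c.2 := hx c hc
  have hyc : c.1 y ≤ c.2 := hy c hc
  calc c.1 (a • x + b • y) = a * c.1 x + b * c.1 y := by simp
    _ ≤ a * c.2 + b * c.2 := by gcongr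
    _ = c.2 := by rw [← add_mul, hab, one_mul]

/-- Extreme points are determined by their sets of tight constraints, of which there are finitely
many: a direction along which every tight constraint stays tight could be followed both ways. -/
lemma IsPolyhedron.finite_extremePoints {s : Set E} (hs : IsPolyhedron s) :
    (s.extremePoints ℝ).Finite := by
  obtain ⟨S, hS, rfl⟩ := hs
  set tight : E → Set ((E →ₗ[ℝ] ℝ) × ℝ) := fun x => {c ∈ S | c.1 x = c.2}
  have rigid : ∀ x ∈ extremePoints ℝ {x | ∀ c ∈ S, c.1 x ≤ c.2}, ∀ v : E,
      (∀ c ∈ tight x, c.1 v = 0) → v = 0 := by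
    intro x hx v hv
    have hline : ∀ᶠ t : ℝ in 𝓝 0, ∀ c ∈ S, c.1 (x + t • v) ≤ c.2 := by
      refine (eventually_all_finite hS).2 fun c hc => ?_
      rcases (hx.1 c hc).eq_or_lt with htight | hslack
      · exact Eventually.of_forall fun t => by simp [hv c ⟨hc, htight⟩, htight]
      · have hcont : Continuous fun t : ℝ => c.1 x + t * c.1 v := by fun_prop
        refine (hcont.tendsto' 0 _ (by simp)).eventually (gt_mem_nhds hslack) |>.mono
          fun t ht => ?_
        simpa using ht.le
    obtain ⟨δ, hδ, hball⟩ := Metric.eventually_nhds_iff.1 hline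
    have hpos := hball (y := δ / 2) (by rw [Real.dist_0_eq_abs, abs_of_pos]; all_goals linarith)
    have hneg := hball (y := -(δ / 2)) (by
      rw [Real.dist_0_eq_abs, abs_neg, abs_of_pos]; all_goals linarith)
    have hmid : x ∈ openSegment ℝ (x + (δ / 2) • v) (x + (-(δ / 2)) • v) :=
      ⟨1 / 2, 1 / 2, by norm_num, by norm_num, by norm_num, by module⟩
    simpa [hδ.ne'] using hx.2 hpos hneg hmid
  refine (hS.finite_subsets.subset ?_).of_finite_image (f := tight) ?_
  · rintro _ ⟨x, -, rfl⟩
    exact fun c hc => hc.1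
  · intro x hx y hy hxy
    refine (sub_eq_zero.1 (rigid x hx (y - x) fun c hc => ?_)).symm
    have hcy : c ∈ tight y := hxy ▸ hc
    rw [map_sub, hcy.2, hc.2, sub_self]

end Polyhedron

section FiniteDimensional

variable {E : Type*} [NormedAddCommGroup E] [NormedSpace ℝ E]

lemma IsPolyhedron.isClosed [FiniteDimensional ℝ E] {s : Set E} (hs : IsPolyhedron s) :
    IsClosed s := by
  obtain ⟨S, -, rfl⟩ := hs
  simp only [ofPred_forall]
  exact isClosed_biInter fun c _ =>
    isClosed_le c.1.continuous_of_finiteDimensional continuous_const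

lemma IsPolyhedron.exists_finite_convexHull_eq {s : Set E} (hs : IsPolyhedron s)
    (hc : IsCompact s) : ∃ V : Set E, V.Finite ∧ s = convexHull ℝ V := by
  refine ⟨s.extremePoints ℝ, hs.finite_extremePoints, ?_⟩
  have h := closure_convexHull_extremePoints hc hs.convex
  rwa [(hs.finite_extremePoints.isCompact_convexHull (𝕜 := ℝ)).isClosed.closure_eq, eq_comm] at h

end FiniteDimensional

section Planar

noncomputable def upperEnvelope (C : Set (ℝ × ℝ)) (ε : ℝ) : ℝ := sSup {y | (ε, y) ∈ C}

variable {C : Set (ℝ × ℝ)}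

lemma IsCompact.isCompact_slice (hC : IsCompact C) (ε : ℝ) : IsCompact {y | (ε, y) ∈ C} :=
  (hC.image continuous_snd).of_isClosed_subset
    (hC.isClosed.preimage (Continuous.prodMk_right ε)) fun _ hy => ⟨_, hy, rfl⟩

lemma IsCompact.le_upperEnvelope (hC : IsCompact C) {p : ℝ × ℝ} (hp : p ∈ C) :
    p.2 ≤ upperEnvelope C p.1 :=
  le_csSup (hC.isCompact_slice p.1).bddAbove hp

lemma IsCompact.mk_upperEnvelope_mem (hC : IsCompact C) {ε : ℝ} (h : ∃ y, (ε, y) ∈ C) :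
    (ε, upperEnvelope C ε) ∈ C :=
  (hC.isCompact_slice ε).sSup_mem h

/-- Near its right end `b`, the upper envelope `v` of a polygon is the chord from `(l, v l)` to
`(b, v b)`, for `l` closer to `b` than any vertex: every vertex lies below the line of that
chord. -/
lemma upperEnvelope_convexHull_eventuallyEq {W : Set (ℝ × ℝ)} (hW : W.Finite) {b : ℝ}
    (hWb : ∀ w ∈ W, w.1 ≤ b) (hslice : ∀ᶠ ε in 𝓝[≤] b, ∃ y, (ε, y) ∈ convexHull ℝ W) :
    ∃ d, upperEnvelope (convexHull ℝ W) =ᶠ[𝓝[≤] b]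
      fun ε => upperEnvelope (convexHull ℝ W) b - (b - ε) * d := by
  set C := convexHull ℝ W
  set v := upperEnvelope C
  have hC : IsCompact C := hW.isCompact_convexHull ℝ
  have hgap : ∀ᶠ ε in 𝓝[≤] b, ∀ w ∈ W, w.1 < b → w.1 < ε :=
    (eventually_all_finite hW).2 fun w _ => by
      by_cases h : w.1 < b
      · exact (eventually_gt_nhds h).filter_mono nhdsWithin_le_nhds |>.mono fun _ h' _ => h'
      · exact Eventually.of_forall fun _ h' => absurd h' h
  obtain ⟨l, hlb, hl⟩ := mem_nhdsLE_iff_exists_Icc_subset.1 (hslice.and hgap)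
  have hmem : ∀ ε ∈ Icc l b, (ε, v ε) ∈ C := fun ε hε => hC.mk_upperEnvelope_mem (hl hε).1
  have hbl : 0 < b - l := sub_pos.2 hlb
  set d := (v b - v l) / (b - l)
  set L : ℝ → ℝ := fun ε => v b - (b - ε) * d
  have hL : ∀ θ ε, L (θ * ε + (1 - θ) * b) = θ * L ε + (1 - θ) * v b := by
    intro θ ε; simp only [L]; ring
  have hLl : L l = v l := by simp only [L, d]; field_simp; ring
  have hchord : ∀ p ∈ C, ∀ θ ∈ Icc (0 : ℝ) 1,
      θ * p.2 + (1 - θ) * v b ≤ v (θ * p.1 + (1 - θ) * b) := by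
    intro p hp θ hθ
    have hmix := convex_convexHull ℝ W hp (hmem b ⟨hlb.le, le_rfl⟩) hθ.1 (sub_nonneg.2 hθ.2)
      (by ring)
    simpa using hC.le_upperEnvelope hmix
  have hbelow : ∀ p ∈ C, p.2 ≤ L p.1 := by
    suffices W ⊆ {p | p.2 ≤ L p.1} from fun p hp => convexHull_min this (by
      intro p hp q hq α β hα hβ hαβ
      simp only [mem_ofPred_eq, Prod.fst_add, Prod.snd_add, Prod.smul_fst, Prod.smul_snd,
        smul_eq_mul, L] at hp hq ⊢
      obtain rfl : β = 1 - α := by linarith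
      nlinarith [mul_le_mul_of_nonneg_left hp hα, mul_le_mul_of_nonneg_left hq hβ]) hp
    intro w hw
    rcases (hWb w hw).eq_or_lt with hwb | hwb
    · simpa [L, hwb] using hC.le_upperEnvelope (subset_convexHull ℝ W hw)
    · have hwl : w.1 < l := (hl ⟨le_rfl, hlb.le⟩).2 w hw hwb
      set θ := (b - l) / (b - w.1)
      have hθ : 0 < θ := div_pos hbl (by linarith)
      have hθl : θ * w.1 + (1 - θ) * b = l := by simp only [θ]; field_simp; ring
      have h := hchord w (subset_convexHull ℝ W hw) θ ⟨hθ.le, (div_le_one (by linarith)).2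
        (by linarith)⟩
      rw [hθl, ← hLl, ← hθl, hL] at h
      exact le_of_mul_le_mul_left (by linarith) hθ
  have habove : ∀ ε ∈ Icc l b, L ε ≤ v ε := by
    intro ε hε
    set θ := (b - ε) / (b - l)
    have hθε : θ * l + (1 - θ) * b = ε := by simp only [θ]; field_simp; ring
    have h := hchord (l, v l) (hmem l ⟨le_rfl, hlb.le⟩) θ
      ⟨div_nonneg (by linarith [hε.2]) hbl.le, (div_le_one hbl).2 (by linarith [hε.1])⟩
    rwa [hθε, ← hLl, ← hL, hθε] at h
  exact ⟨d, mem_of_superset (Icc_mem_nhdsLE hlb) fun ε hε =>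
    le_antisymm (hbelow _ (hmem ε hε)) (habove ε hε)⟩

end Planar

lemma eventuallyEq_affine_ciSup {ι : Type*} [Finite ι] [Nonempty ι] {f : ι → ℝ → ℝ} {b : ℝ}
    {d : ι → ℝ} (hf : ∀ i, f i =ᶠ[𝓝[≤] b] fun ε => f i b - (b - ε) * d i) :
    ∃ d', (fun ε => ⨆ i, f i ε) =ᶠ[𝓝[≤] b] fun ε => (⨆ i, f i b) - (b - ε) * d' := by
  obtain ⟨i₀, hi₀⟩ := exists_eq_ciSup_of_finite (f := fun i => f i b)
  -- the piece that wins near `b`: largest value at `b`, and among those the smallest slope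
  obtain ⟨k, hk, hkmin⟩ := exists_min_image {i | f i b = f i₀ b} d (toFinite _) ⟨i₀, rfl⟩
  have hdom : ∀ j, ∀ᶠ ε in 𝓝[≤] b, f j ε ≤ f k ε := by
    intro j
    have hjk : f j b ≤ f k b :=
      hk.symm ▸ hi₀ ▸ le_ciSup (f := fun i => f i b) (finite_range _).bddAbove j
    rcases hjk.eq_or_lt with heq | hlt
    · filter_upwards [hf j, hf k, self_mem_nhdsWithin] with ε hj hk' hε
      rw [hj, hk', heq]
      have := hkmin j (heq.trans hk)
      nlinarith [sub_nonneg.2 (mem_Iic.1 hε)]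
    · have hlt' : ∀ᶠ ε in 𝓝 b, f j b - (b - ε) * d j < f k b - (b - ε) * d k :=
        ContinuousAt.eventually_lt (by fun_prop) (by fun_prop) (by simpa using hlt)
      filter_upwards [hf j, hf k, nhdsWithin_le_nhds hlt'] with ε hj hk' hε
      rw [hj, hk']
      exact hε.le
  refine ⟨d k, ?_⟩
  filter_upwards [eventually_all.2 hdom, hf k] with ε hε hk'
  rw [le_antisymm (ciSup_le hε) (le_ciSup (f := fun i => f i ε) (finite_range _).bddAbove k),
    hk', hk, hi₀]

lemma exists_mem_Ioo_forall_Icc_of_eventually {p : ℝ → Prop} {a b : ℝ} (hab : a < b)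
    (h : ∀ᶠ x in 𝓝[≤] b, p x) : ∃ c ∈ Ioo a b, ∀ x ∈ Icc c b, p x := by
  obtain ⟨l, hl, hlb⟩ := (mem_nhdsLE_iff_exists_mem_Ico_Ioc_subset hab).1 h
  refine ⟨(l + b) / 2, ⟨by linarith [hl.1], by linarith [hl.2]⟩, fun x hx => hlb ⟨?_, hx.2⟩⟩
  linarith [hx.1, hl.2]

section SumSup

variable {ι κ : Type*} [Fintype κ] [Finite ι]

lemma sum_le_sum_ciSup (g : ι → κ → ℝ) (τ : κ → ι) : ∑ z, g (τ z) z ≤ ∑ z, ⨆ i, g i z :=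
  Finset.sum_le_sum fun z _ => le_ciSup (f := fun i => g i z) (finite_range _).bddAbove (τ z)

lemma exists_sum_ciSup_eq [Nonempty ι] (g : ι → κ → ℝ) :
    ∃ τ : κ → ι, ∑ z, ⨆ i, g i z = ∑ z, g (τ z) z := by
  choose τ hτ using fun z => exists_eq_ciSup_of_finite (f := fun i => g i z)
  exact ⟨τ, Finset.sum_congr rfl fun z _ => (hτ z).symm⟩

end SumSup

namespace GuessingFilter

variable {M N : ℕ} (P : Fin (M + 1) → Fin (N + 1) → ℝ)

def privGuess (τ : Fin (N + 1) → Fin (M + 1)) (F : Fin (N + 1) → Fin (N + 1) → ℝ) : ℝ :=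
  ∑ z, ∑ y, P (τ z) y * F y z

def utilGuess (σ : Fin (N + 1) → Fin (N + 1)) (F : Fin (N + 1) → Fin (N + 1) → ℝ) : ℝ :=
  ∑ z, (∑ x, P x (σ z)) * F (σ z) z

lemma privS_le_iff {F : Fin (N + 1) → Fin (N + 1) → ℝ} {ε : ℝ} :
    privS P F ≤ ε ↔ ∀ τ, privGuess P τ F ≤ ε := by
  refine ⟨fun h τ => (sum_le_sum_ciSup _ τ).trans h, fun h => ?_⟩
  obtain ⟨τ, hτ⟩ := exists_sum_ciSup_eq fun x z => ∑ y, P x y * F y z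
  unfold privS
  rw [hτ]
  exact h τ

lemma utilGuess_le_utilS (σ : Fin (N + 1) → Fin (N + 1)) (F : Fin (N + 1) → Fin (N + 1) → ℝ) :
    utilGuess P σ F ≤ utilS P F :=
  sum_le_sum_ciSup (fun y z => (∑ x, P x y) * F y z) σ

lemma exists_utilS_eq_utilGuess (F : Fin (N + 1) → Fin (N + 1) → ℝ) :
    ∃ σ, utilS P F = utilGuess P σ F :=
  exists_sum_ciSup_eq _

lemma utilS_le_one (hpos : ∀ x y, 0 ≤ P x y) (hsum : ∑ x, ∑ y, P x y = 1)
    {F : Fin (N + 1) → Fin (N + 1) → ℝ} (hF : IsFilterS F) : utilS P F ≤ 1 := by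
  obtain ⟨σ, hσ⟩ := exists_utilS_eq_utilGuess P F
  calc utilS P F = utilGuess P σ F := hσ
    _ ≤ ∑ z, ∑ y, (∑ x, P x y) * F y z := Finset.sum_le_sum fun z _ =>
        Finset.single_le_sum (f := fun y => (∑ x, P x y) * F y z)
          (fun y _ => mul_nonneg (Finset.sum_nonneg fun x _ => hpos x y) (hF.1 y z))
          (Finset.mem_univ (σ z))
    _ = 1 := by
        rw [Finset.sum_comm]
        simp only [← Finset.mul_sum, hF.2, mul_one]
        rw [Finset.sum_comm, hsum]

def constFilter : Fin (N + 1) → Fin (N + 1) → ℝ := fun _ z => if z = 0 then 1 else 0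

def idFilter : Fin (N + 1) → Fin (N + 1) → ℝ := fun y z => if y = z then 1 else 0

lemma isFilterS_constFilter : IsFilterS (constFilter (N := N)) :=
  ⟨fun _ _ => by unfold constFilter; positivity, fun _ => by simp [constFilter]⟩

lemma isFilterS_idFilter : IsFilterS (idFilter (N := N)) :=
  ⟨fun _ _ => by unfold idFilter; positivity, fun _ => by simp [idFilter]⟩

lemma privS_constFilter_le : privS P constFilter ≤ PcX P :=
  (privS_le_iff P).2 fun τ => by
    simpa [privGuess, constFilter, PcX] using le_ciSup (f := fun x => ∑ y, P x y)
      (finite_range _).bddAbove (τ 0)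

lemma privS_idFilter_le : privS P idFilter ≤ PcXY P :=
  (privS_le_iff P).2 fun τ => by
    simpa [privGuess, idFilter, PcXY] using sum_le_sum_ciSup P τ

lemma one_le_utilS_idFilter (hsum : ∑ x, ∑ y, P x y = 1) : 1 ≤ utilS P idFilter := by
  refine le_of_eq_of_le ?_ (utilGuess_le_utilS P id idFilter)
  rw [← hsum, Finset.sum_comm]
  simp [utilGuess, idFilter]

def admissiblePairs : Set ((Fin (N + 1) → Fin (N + 1) → ℝ) × ℝ) :=
  {p | IsFilterS p.1 ∧ privS P p.1 ≤ p.2 ∧ p.2 ∈ Icc (PcX P) (PcXY P)}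

def entryL (y z : Fin (N + 1)) : ((Fin (N + 1) → Fin (N + 1) → ℝ) × ℝ) →ₗ[ℝ] ℝ :=
  LinearMap.proj z ∘ₗ LinearMap.proj y ∘ₗ LinearMap.fst ℝ _ ℝ

@[simp] lemma entryL_apply (y z : Fin (N + 1)) (p : (Fin (N + 1) → Fin (N + 1) → ℝ) × ℝ) :
    entryL y z p = p.1 y z := rfl

lemma isPolyhedron_admissiblePairs : IsPolyhedron (admissiblePairs P) := by
  let lvl : ((Fin (N + 1) → Fin (N + 1) → ℝ) × ℝ) →ₗ[ℝ] ℝ := LinearMap.snd ℝ _ ℝ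
  have h : admissiblePairs P =
      ((⋂ y, ⋂ z, {p | (-entryL y z) p ≤ 0}) ∩ ⋂ y, {p | (∑ z, entryL y z) p = 1}) ∩
      ((⋂ τ : Fin (N + 1) → Fin (M + 1), {p | (∑ z, ∑ y, P (τ z) y • entryL y z - lvl) p ≤ 0}) ∩
        ({p | (-lvl) p ≤ -PcX P} ∩ {p | lvl p ≤ PcXY P})) := by
    ext p
    simp [admissiblePairs, IsFilterS, privS_le_iff, privGuess, lvl]
  rw [h]
  exact ((IsPolyhedron.iInter fun _ => IsPolyhedron.iInter fun _ => isPolyhedron_setOf_le _ _).inter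
    (IsPolyhedron.iInter fun _ => isPolyhedron_setOf_eq _ _)).inter
    ((IsPolyhedron.iInter fun _ => isPolyhedron_setOf_le _ _).inter
      ((isPolyhedron_setOf_le _ _).inter (isPolyhedron_setOf_le _ _)))

lemma isCompact_admissiblePairs : IsCompact (admissiblePairs P) := by
  have hbox : IsCompact
      ((univ.pi fun _ : Fin (N + 1) => univ.pi fun _ : Fin (N + 1) => Icc (0 : ℝ) 1) ×ˢ
        Icc (PcX P) (PcXY P)) :=
    (isCompact_univ_pi fun _ => isCompact_univ_pi fun _ => isCompact_Icc).prod isCompact_Icc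
  refine hbox.of_isClosed_subset (isPolyhedron_admissiblePairs P).isClosed ?_
  rintro p ⟨hF, -, hε⟩
  refine ⟨fun y _ z _ => ⟨hF.1 y z, ?_⟩, hε⟩
  exact (Finset.single_le_sum (fun z' _ => hF.1 y z') (Finset.mem_univ z)).trans (hF.2 y).le

def guessPlane (σ : Fin (N + 1) → Fin (N + 1)) :
    ((Fin (N + 1) → Fin (N + 1) → ℝ) × ℝ) →ₗ[ℝ] ℝ × ℝ :=
  (LinearMap.snd ℝ _ ℝ).prod (∑ z, (∑ x, P x (σ z)) • entryL (σ z) z)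

lemma guessPlane_apply (σ : Fin (N + 1) → Fin (N + 1))
    (p : (Fin (N + 1) → Fin (N + 1) → ℝ) × ℝ) : guessPlane P σ p = (p.2, utilGuess P σ p.1) := by
  simp [guessPlane, utilGuess]

lemma mk_mem_image_guessPlane {σ : Fin (N + 1) → Fin (N + 1)} {ε u : ℝ} :
    (ε, u) ∈ guessPlane P σ '' admissiblePairs P ↔
      ∃ F, (F, ε) ∈ admissiblePairs P ∧ utilGuess P σ F = u := by
  simp only [mem_image, guessPlane_apply, Prod.mk.injEq]
  constructor
  · rintro ⟨p, hp, rfl, rfl⟩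
    exact ⟨p.1, hp, rfl⟩
  · rintro ⟨F, hF, rfl⟩
    exact ⟨(F, ε), hF, rfl, rfl⟩

lemma isCompact_image_guessPlane (σ : Fin (N + 1) → Fin (N + 1)) :
    IsCompact (guessPlane P σ '' admissiblePairs P) :=
  (isCompact_admissiblePairs P).image (guessPlane P σ).continuous_of_finiteDimensional

lemma constFilter_mem_admissiblePairs {ε : ℝ} (hε : ε ∈ Icc (PcX P) (PcXY P)) :
    (constFilter, ε) ∈ admissiblePairs P :=
  ⟨isFilterS_constFilter, (privS_constFilter_le P).trans hε.1, hε⟩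

noncomputable def guessEnvelope (σ : Fin (N + 1) → Fin (N + 1)) : ℝ → ℝ :=
  upperEnvelope (guessPlane P σ '' admissiblePairs P)

lemma guessEnvelope_eventuallyEq_affine (hlt : PcX P < PcXY P) (σ : Fin (N + 1) → Fin (N + 1)) :
    ∃ d, guessEnvelope P σ =ᶠ[𝓝[≤] PcXY P]
      fun ε => guessEnvelope P σ (PcXY P) - (PcXY P - ε) * d := by
  obtain ⟨V, hV, hVeq⟩ := (isPolyhedron_admissiblePairs P).exists_finite_convexHull_eq
    (isCompact_admissiblePairs P)
  have himage : guessPlane P σ '' admissiblePairs P = convexHull ℝ (guessPlane P σ '' V) := by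
    rw [hVeq, LinearMap.image_convexHull]
  have hslice : ∀ᶠ ε in 𝓝[≤] PcXY P, ∃ u, (ε, u) ∈ guessPlane P σ '' admissiblePairs P :=
    mem_of_superset (Icc_mem_nhdsLE hlt) fun ε hε =>
      ⟨_, (mk_mem_image_guessPlane P).2 ⟨_, constFilter_mem_admissiblePairs P hε, rfl⟩⟩
  unfold guessEnvelope
  rw [himage] at hslice ⊢
  refine upperEnvelope_convexHull_eventuallyEq (hV.image _) ?_ hslice
  rintro _ ⟨p, hp, rfl⟩
  rw [guessPlane_apply]
  exact (hVeq ▸ subset_convexHull ℝ V hp : p ∈ admissiblePairs P).2.2.2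

lemma bddAbove_utilS_image (hpos : ∀ x y, 0 ≤ P x y) (hsum : ∑ x, ∑ y, P x y = 1) (ε : ℝ) :
    BddAbove {u | ∃ F, IsFilterS F ∧ privS P F ≤ ε ∧ u = utilS P F} :=
  ⟨1, by rintro _ ⟨F, hF, -, rfl⟩; exact utilS_le_one P hpos hsum hF⟩

lemma hUnder_eq_iSup_guessEnvelope (hpos : ∀ x y, 0 ≤ P x y) (hsum : ∑ x, ∑ y, P x y = 1)
    {ε : ℝ} (hε : ε ∈ Icc (PcX P) (PcXY P)) : hUnder P ε = ⨆ σ, guessEnvelope P σ ε := by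
  apply le_antisymm
  · refine csSup_le ⟨_, constFilter, isFilterS_constFilter,
      (privS_constFilter_le P).trans hε.1, rfl⟩ ?_
    rintro _ ⟨F, hF, hpriv, rfl⟩
    obtain ⟨σ, hσ⟩ := exists_utilS_eq_utilGuess P F
    have hmem : (ε, utilGuess P σ F) ∈ guessPlane P σ '' admissiblePairs P :=
      (mk_mem_image_guessPlane P).2 ⟨F, ⟨hF, hpriv, hε⟩, rfl⟩
    rw [hσ]
    exact ((isCompact_image_guessPlane P σ).le_upperEnvelope hmem).trans
      (le_ciSup (f := fun σ => guessEnvelope P σ ε) (finite_range _).bddAbove σ)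
  · refine ciSup_le fun σ => ?_
    obtain ⟨F, ⟨hF, hpriv, -⟩, hu⟩ := (mk_mem_image_guessPlane P).1
      ((isCompact_image_guessPlane P σ).mk_upperEnvelope_mem
        ⟨_, (mk_mem_image_guessPlane P).2 ⟨_, constFilter_mem_admissiblePairs P hε, rfl⟩⟩)
    rw [guessEnvelope, ← hu]
    exact (utilGuess_le_utilS P σ F).trans
      (le_csSup (bddAbove_utilS_image P hpos hsum ε) ⟨F, hF, hpriv, rfl⟩)

lemma hUnder_PcXY (hpos : ∀ x y, 0 ≤ P x y) (hsum : ∑ x, ∑ y, P x y = 1) :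
    hUnder P (PcXY P) = 1 := by
  have hid : utilS P idFilter ∈ {u | ∃ F, IsFilterS F ∧ privS P F ≤ PcXY P ∧ u = utilS P F} :=
    ⟨idFilter, isFilterS_idFilter, privS_idFilter_le P, rfl⟩
  refine le_antisymm (csSup_le ⟨_, hid⟩ ?_) ((one_le_utilS_idFilter P hsum).trans
    (le_csSup (bddAbove_utilS_image P hpos hsum _) hid))
  rintro _ ⟨F, hF, -, rfl⟩
  exact utilS_le_one P hpos hsum hF

lemma hUnder_mono (hpos : ∀ x y, 0 ≤ P x y) (hsum : ∑ x, ∑ y, P x y = 1) {ε ε' : ℝ}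
    (hε : PcX P ≤ ε) (hεε' : ε ≤ ε') : hUnder P ε ≤ hUnder P ε' :=
  csSup_le_csSup (bddAbove_utilS_image P hpos hsum ε')
    ⟨_, constFilter, isFilterS_constFilter, (privS_constFilter_le P).trans hε, rfl⟩
    fun _ ⟨F, hF, hpriv, hu⟩ => ⟨F, hF, hpriv.trans hεε', hu⟩

lemma hUnder_eventuallyEq_affine (hpos : ∀ x y, 0 ≤ P x y) (hsum : ∑ x, ∑ y, P x y = 1)
    (hlt : PcX P < PcXY P) :
    ∃ d, hUnder P =ᶠ[𝓝[≤] PcXY P] fun ε => 1 - (PcXY P - ε) * d := by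
  choose d hd using guessEnvelope_eventuallyEq_affine P hlt
  obtain ⟨d', hd'⟩ := eventuallyEq_affine_ciSup hd
  have hsup : hUnder P =ᶠ[𝓝[≤] PcXY P] fun ε => ⨆ σ, guessEnvelope P σ ε :=
    mem_of_superset (Icc_mem_nhdsLE hlt) fun ε hε => hUnder_eq_iSup_guessEnvelope P hpos hsum hε
  refine ⟨d', (hsup.trans hd').mono fun ε hε => ?_⟩
  rw [hε, ← hUnder_eq_iSup_guessEnvelope P hpos hsum ⟨hlt.le, le_rfl⟩,
    hUnder_PcXY P hpos hsum]

end GuessingFilter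

open GuessingFilter in
/-- Theorem 3, first part: if `P_c(X) < P_c(X|Y)`, then `h̲` is affine
in the high-utility regime: there are `ε_L ∈ (P_c(X), P_c(X|Y))` and `d ≥ 0` with
`h̲(ε) = 1 − (P_c(X|Y) − ε)·d` on `[ε_L, P_c(X|Y)]`; in particular `d` is the left
derivative of `h̲` at `P_c(X|Y)`. -/
theorem hUnder_affine_high_utility {M N : ℕ} (P : Fin (M + 1) → Fin (N + 1) → ℝ)
    (hpos : ∀ x y, 0 ≤ P x y) (hsum : ∑ x, ∑ y, P x y = 1)
    (hlt : PcX P < PcXY P) :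
    ∃ εL ∈ Set.Ioo (PcX P) (PcXY P), ∃ d : ℝ, 0 ≤ d ∧
      (∀ ε ∈ Set.Icc εL (PcXY P), hUnder P ε = 1 - (PcXY P - ε) * d) ∧
      HasDerivWithinAt (hUnder P) d (Set.Iic (PcXY P)) (PcXY P) := by
  obtain ⟨d, hd⟩ := hUnder_eventuallyEq_affine P hpos hsum hlt
  obtain ⟨εL, hεL, hIcc⟩ := exists_mem_Ioo_forall_Icc_of_eventually hlt hd
  refine ⟨εL, hεL, d, ?_, hIcc, ?_⟩
  · have hmono := hUnder_mono P hpos hsum hεL.1.le hεL.2.le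
    rw [hIcc εL ⟨le_rfl, hεL.2.le⟩, hIcc _ ⟨hεL.2.le, le_rfl⟩] at hmono
    nlinarith [hεL.2]
  · have haffine : HasDerivAt (fun ε => 1 - (PcXY P - ε) * d) d (PcXY P) := by
      simpa using (((hasDerivAt_id _).const_sub (PcXY P)).mul_const d).const_sub 1
    exact haffine.hasDerivWithinAt.congr_of_eventuallyEq hd (hIcc _ ⟨hεL.2.le, le_rfl⟩)
end

section
/- Assume P_c(X) < P_c(X|Y), q_Y(y) > 0 for all y ∈ 𝒴, and for each y ∈ 𝒴 there exists a unique x_y ∈ 𝒳 with P(x_y, y) > P(x, y) for all x ≠ x_y. Then the left derivative of h̲ at P_c(X|Y) equals min over (y,z) ∈ 𝒴×𝒴 of q_Y(y)/(P(x_y, y) − P(x_z, y)), with the convention a/0 = +∞ for a > 0. Moreover, if (y₀, z₀) ∈ 𝒴×𝒴 attains this minimum, then there exists ε_L^{y₀,z₀} < P_c(X|Y) such that for every ε ∈ [ε_L^{y₀,z₀}, P_c(X|Y)], the N-ary Z-channel F_ε defined by F_ε(y,y) = 1 for y ≠ y₀, F_ε(y₀, z₀) = ζ(ε), F_ε(y₀,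 y₀) = 1 − ζ(ε), and all other entries zero, with ζ(ε) := (P_c(X|Y) − ε)/(P(x_{y₀}, y₀) − P(x_{z₀}, y₀)), satisfies 𝒫(F_ε) ≤ ε and 𝒰(F_ε) = h̲(ε). -/
open Finset

open scoped ENNReal

/-- The `N`-ary Z-channel from `y0` to `z0` with crossover probability `ζ`. -/
noncomputable def Zch {V : Type*} [DecidableEq V] (y0 z0 : V) (ζ : ℝ) : V → V → ℝ :=
  fun y z =>
    if y = y0 then (if z = z0 then ζ else if z = y0 then 1 - ζ else 0)
    else (if z = y then 1 else 0)

/-- `min_{(y,z)} q_Y(y)/(P(x_y,y) − P(x_z,y))`, computed in `ℝ≥0∞` so that the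
convention `a/0 = +∞` (for `a > 0`) holds. -/
noncomputable def derivMin {M N : ℕ} (P : Fin (M + 1) → Fin (N + 1) → ℝ)
    (xm : Fin (N + 1) → Fin (M + 1)) : ℝ≥0∞ :=
  ⨅ (y : Fin (N + 1)) (z : Fin (N + 1)),
    ENNReal.ofReal (∑ x, P x y) / ENNReal.ofReal (P (xm y) y - P (xm z) y)


open Finset

section Helpers

private lemma fin_ciSup_eq {n : ℕ} (f : Fin (n + 1) → ℝ) (i : Fin (n + 1))
    (h : ∀ j, f j ≤ f i) : (⨆ j, f j) = f i :=
  le_antisymm (ciSup_le h) (le_ciSup (Set.finite_range f).bddAbove i)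

private lemma fin_le_ciSup {n : ℕ} (f : Fin (n + 1) → ℝ) (i : Fin (n + 1)) :
    f i ≤ ⨆ j, f j :=
  le_ciSup (Set.finite_range f).bddAbove i

private lemma Zch_diag {V : Type*} [DecidableEq V] (y0 z0 : V) (ζ : ℝ) (y : V)
    (h : y ≠ y0) : Zch y0 z0 ζ y y = 1 := by
  unfold Zch; rw [if_neg h, if_pos rfl]

private lemma Zch_off {V : Type*} [DecidableEq V] (y0 z0 : V) (ζ : ℝ) (y z : V)
    (h : y ≠ y0) (hzy : z ≠ y) : Zch y0 z0 ζ y z = 0 := by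
  unfold Zch; rw [if_neg h, if_neg hzy]

private lemma Zch_cross {V : Type*} [DecidableEq V] (y0 z0 : V) (ζ : ℝ) :
    Zch y0 z0 ζ y0 z0 = ζ := by
  unfold Zch; rw [if_pos rfl, if_pos rfl]

private lemma Zch_stay {V : Type*} [DecidableEq V] (y0 z0 : V) (ζ : ℝ)
    (h : y0 ≠ z0) : Zch y0 z0 ζ y0 y0 = 1 - ζ := by
  unfold Zch; rw [if_pos rfl, if_neg h, if_pos rfl]

private lemma Zch_zero {V : Type*} [DecidableEq V] (y0 z0 : V) (ζ : ℝ) (z : V)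
    (h1 : z ≠ z0) (h2 : z ≠ y0) : Zch y0 z0 ζ y0 z = 0 := by
  unfold Zch; rw [if_pos rfl, if_neg h1, if_neg h2]

private lemma zch_col_other {N : ℕ} (y0 z0 : Fin (N + 1)) (ζ : ℝ) (g : Fin (N + 1) → ℝ)
    (z : Fin (N + 1)) (hzy : z ≠ y0) (hzz : z ≠ z0) :
    ∑ y, g y * Zch y0 z0 ζ y z = g z := by
  rw [Finset.sum_eq_single z]
  · simp [Zch, hzy]
  · intro y _ hy
    by_cases h : y = y0
    · subst h; simp [Zch, hzz, hzy]
    · simp [Zch, h, Ne.symm hy]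
  · simp

private lemma zch_col_y0 {N : ℕ} (y0 z0 : Fin (N + 1)) (ζ : ℝ) (g : Fin (N + 1) → ℝ)
    (hz : z0 ≠ y0) :
    ∑ y, g y * Zch y0 z0 ζ y y0 = g y0 * (1 - ζ) := by
  rw [Finset.sum_eq_single y0]
  · simp [Zch, Ne.symm hz]
  · intro y _ hy
    simp [Zch, hy, Ne.symm hy]
  · simp

private lemma zch_col_z0 {N : ℕ} (y0 z0 : Fin (N + 1)) (ζ : ℝ) (g : Fin (N + 1) → ℝ)
    (hz : z0 ≠ y0) :
    ∑ y, g y * Zch y0 z0 ζ y z0 = g y0 * ζ + g z0 := by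
  have hsub : ({y0, z0} : Finset (Fin (N + 1))) ⊆ univ := subset_univ _
  rw [← Finset.sum_subset hsub]
  · rw [Finset.sum_pair (Ne.symm hz)]
    simp [Zch, hz]
  · intro y _ hy
    simp only [mem_insert, mem_singleton, not_or] at hy
    simp [Zch, hy.1, Ne.symm hy.2]

end Helpers

section Main

variable {M N : ℕ}

private lemma PcXY_eq (P : Fin (M + 1) → Fin (N + 1) → ℝ)
    (xm : Fin (N + 1) → Fin (M + 1))
    (hxm : ∀ y, ∀ x, x ≠ xm y → P x y < P (xm y) y) :
    PcXY P = ∑ y, P (xm y) y := by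
  refine Finset.sum_congr rfl fun y _ => fin_ciSup_eq _ _ fun x => ?_
  by_cases h : x = xm y
  · subst h; exact le_rfl
  · exact (hxm y x h).le

private lemma util_le_one (P : Fin (M + 1) → Fin (N + 1) → ℝ) : True := trivial

/-- The global converse bound: `c·(P_c(X|Y) − 𝒫(F)) ≤ 1 − 𝒰(F)` for every filter. -/
private lemma converse_bound (P : Fin (M + 1) → Fin (N + 1) → ℝ)
    (hpos : ∀ x y, 0 ≤ P x y) (hsum : ∑ x, ∑ y, P x y = 1)
    (xm : Fin (N + 1) → Fin (M + 1))
    (hxm : ∀ y, ∀ x, x ≠ xm y → P x y < P (xm y) y)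
    (c : ℝ) (hc : 0 ≤ c)
    (hkey : ∀ y z, c * (P (xm y) y - P (xm z) y) ≤ ∑ x, P x y)
    (F : Fin (N + 1) → Fin (N + 1) → ℝ) (hF : IsFilterS F) :
    c * (PcXY P - privS P F) ≤ 1 - utilS P F := by
  have hPc : PcXY P = ∑ z, ∑ y, P (xm y) y * F y z := by
    rw [PcXY_eq P xm hxm, Finset.sum_comm]
    refine Finset.sum_congr rfl fun y _ => ?_
    rw [← Finset.mul_sum, hF.2 y, mul_one]
  have h1 : (1 : ℝ) = ∑ z, ∑ y, (∑ x, P x y) * F y z := by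
    rw [Finset.sum_comm]
    calc (1 : ℝ) = ∑ y, ∑ x, P x y := by rw [← hsum, Finset.sum_comm]
      _ = ∑ y, ∑ z, (∑ x, P x y) * F y z := by
          refine Finset.sum_congr rfl fun y _ => ?_
          rw [← Finset.mul_sum, hF.2 y, mul_one]
  have claim : ∀ z, c * ((∑ y, P (xm y) y * F y z) - ⨆ x, ∑ y, P x y * F y z) ≤
      (∑ y, (∑ x, P x y) * F y z) - ⨆ y, (∑ x, P x y) * F y z := by
    intro z
    obtain ⟨w, hw⟩ := Finite.exists_max (fun y => (∑ x, P x y) * F y z)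
    have hsupU : (⨆ y, (∑ x, P x y) * F y z) = (∑ x, P x w) * F w z :=
      fin_ciSup_eq _ w hw
    have hsupP : (∑ y, P (xm w) y * F y z) ≤ ⨆ x, ∑ y, P x y * F y z :=
      fin_le_ciSup (fun x => ∑ y, P x y * F y z) (xm w)
    have hmid : ∑ y, (c * (P (xm y) y - P (xm w) y)) * F y z ≤
        (∑ y, (∑ x, P x y) * F y z) - (∑ x, P x w) * F w z := by
      rw [← Finset.sum_erase_add univ _ (mem_univ w),
          ← Finset.sum_erase_add univ (fun y => (∑ x, P x y) * F y z) (mem_univ w)]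
      have hzero : (c * (P (xm w) w - P (xm w) w)) * F w z = 0 := by ring
      rw [hzero]
      have : ∑ y ∈ univ.erase w, (c * (P (xm y) y - P (xm w) y)) * F y z ≤
          ∑ y ∈ univ.erase w, (∑ x, P x y) * F y z := by
        refine Finset.sum_le_sum fun y _ => ?_
        exact mul_le_mul_of_nonneg_right (hkey y w) (hF.1 y z)
      linarith
    have hexp : c * ((∑ y, P (xm y) y * F y z) - ∑ y, P (xm w) y * F y z) =
        ∑ y, (c * (P (xm y) y - P (xm w) y)) * F y z := by
      rw [← Finset.sum_sub_distrib, Finset.mul_sum]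
      refine Finset.sum_congr rfl fun y _ => by ring
    have h2 : c * ((∑ y, P (xm y) y * F y z) - ⨆ x, ∑ y, P x y * F y z) ≤
        c * ((∑ y, P (xm y) y * F y z) - ∑ y, P (xm w) y * F y z) := by
      apply mul_le_mul_of_nonneg_left _ hc
      linarith
    rw [hsupU]
    calc c * ((∑ y, P (xm y) y * F y z) - ⨆ x, ∑ y, P x y * F y z)
        ≤ ∑ y, (c * (P (xm y) y - P (xm w) y)) * F y z := by rw [← hexp]; exact h2
      _ ≤ _ := hmid
  have hsumle : ∑ z, c * ((∑ y, P (xm y) y * F y z) - ⨆ x, ∑ y, P x y * F y z) ≤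
      ∑ z, ((∑ y, (∑ x, P x y) * F y z) - ⨆ y, (∑ x, P x y) * F y z) :=
    Finset.sum_le_sum fun z _ => claim z
  rw [← Finset.mul_sum] at hsumle
  rw [Finset.sum_sub_distrib, Finset.sum_sub_distrib] at hsumle
  unfold privS utilS
  rw [hPc, h1]
  exact hsumle

/-- Evaluation of filter property, privacy and utility for the Z-channel. -/
private lemma zch_eval (P : Fin (M + 1) → Fin (N + 1) → ℝ)
    (hpos : ∀ x y, 0 ≤ P x y) (hsum : ∑ x, ∑ y, P x y = 1)
    (xm : Fin (N + 1) → Fin (M + 1))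
    (hxm : ∀ y, ∀ x, x ≠ xm y → P x y < P (xm y) y)
    (y0 z0 : Fin (N + 1)) (hz : z0 ≠ y0) (ζ : ℝ) (h0 : 0 ≤ ζ) (h1 : ζ ≤ 1)
    (hqz : (∑ x, P x y0) * ζ ≤ ∑ x, P x z0)
    (hxc : ∀ x, P x y0 * ζ + P x z0 ≤ P (xm z0) y0 * ζ + P (xm z0) z0) :
    IsFilterS (Zch y0 z0 ζ) ∧
    privS P (Zch y0 z0 ζ) = PcXY P - ζ * (P (xm y0) y0 - P (xm z0) y0) ∧
    utilS P (Zch y0 z0 ζ) = 1 - (∑ x, P x y0) * ζ := by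
  have hPle : ∀ y x, P x y ≤ P (xm y) y := by
    intro y x
    by_cases h : x = xm y
    · subst h; exact le_rfl
    · exact (hxm y x h).le
  have hq0 : ∀ y, (0:ℝ) ≤ ∑ x, P x y := fun y => Finset.sum_nonneg fun x _ => hpos x y
  have hfil : IsFilterS (Zch y0 z0 ζ) := by
    constructor
    · intro y z
      unfold Zch
      split_ifs <;> linarith
    · intro y
      by_cases h : y = y0
      · rw [h]
        have hsub : ({z0, y0} : Finset (Fin (N + 1))) ⊆ univ := subset_univ _
        rw [← Finset.sum_subset hsub]
        · rw [Finset.sum_pair hz, Zch_cross, Zch_stay y0 z0 ζ (Ne.symm hz)]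
          ring
        · intro z _ hzm
          simp only [mem_insert, mem_singleton, not_or] at hzm
          simp [Zch, hzm.1, hzm.2]
      · rw [Finset.sum_eq_single y]
        · simp [Zch, h]
        · intro z _ hzy; simp [Zch, h, hzy]
        · simp
  refine ⟨hfil, ?_, ?_⟩
  · -- privS
    have hcols : ∀ z, (⨆ x, ∑ y, P x y * Zch y0 z0 ζ y z) =
        P (xm z) z + ((if z = y0 then -(P (xm y0) y0 * ζ) else 0) +
          (if z = z0 then P (xm z0) y0 * ζ else 0)) := by
      intro z
      by_cases hy : z = y0
      · subst hy
        rw [if_pos rfl, if_neg (fun hc => hz hc.symm)]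
        have : ∀ x, (∑ y, P x y * Zch z z0 ζ y z) = P x z * (1 - ζ) := fun x =>
          zch_col_y0 z z0 ζ (fun y => P x y) hz
        calc (⨆ x, ∑ y, P x y * Zch z z0 ζ y z) = ⨆ x, P x z * (1 - ζ) := by
              exact iSup_congr fun x => this x
          _ = P (xm z) z * (1 - ζ) := fin_ciSup_eq _ (xm z) fun x =>
              mul_le_mul_of_nonneg_right (hPle z x) (by linarith)
          _ = _ := by ring
      · by_cases hzz : z = z0
        · subst hzz
          rw [if_neg hy, if_pos rfl]
          have : ∀ x, (∑ y, P x y * Zch y0 z ζ y z) = P x y0 * ζ + P x z := fun x =>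
            zch_col_z0 y0 z ζ (fun y => P x y) hz
          calc (⨆ x, ∑ y, P x y * Zch y0 z ζ y z) = ⨆ x, (P x y0 * ζ + P x z) :=
              iSup_congr fun x => this x
            _ = P (xm z) y0 * ζ + P (xm z) z := fin_ciSup_eq _ (xm z) fun x => hxc x
            _ = _ := by ring
        · rw [if_neg hy, if_neg hzz]
          have : ∀ x, (∑ y, P x y * Zch y0 z0 ζ y z) = P x z := fun x =>
            zch_col_other y0 z0 ζ (fun y => P x y) z hy hzz
          calc (⨆ x, ∑ y, P x y * Zch y0 z0 ζ y z) = ⨆ x, P x z :=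
              iSup_congr fun x => this x
            _ = P (xm z) z := fin_ciSup_eq _ (xm z) fun x => hPle z x
            _ = _ := by ring
    unfold privS
    rw [Finset.sum_congr rfl fun z _ => hcols z]
    rw [Finset.sum_add_distrib, Finset.sum_add_distrib]
    rw [Finset.sum_ite_eq' univ y0 (fun _ => -(P (xm y0) y0 * ζ)),
        Finset.sum_ite_eq' univ z0 (fun _ => P (xm z0) y0 * ζ)]
    rw [if_pos (mem_univ y0), if_pos (mem_univ z0), ← PcXY_eq P xm hxm]
    ring
  · -- utilS
    have hcols : ∀ z, (⨆ y, (∑ x, P x y) * Zch y0 z0 ζ y z) =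
        (∑ x, P x z) + (if z = y0 then -((∑ x, P x y0) * ζ) else 0) := by
      intro z
      by_cases hy : z = y0
      · subst hy
        rw [if_pos rfl]
        have hstay : Zch z z0 ζ z z = 1 - ζ := Zch_stay z z0 ζ (Ne.symm hz)
        have hfz : (∑ x, P x z) * Zch z z0 ζ z z = (∑ x, P x z) * (1 - ζ) := by
          rw [hstay]
        have hmax : ∀ y, (∑ x, P x y) * Zch z z0 ζ y z ≤ (∑ x, P x z) * Zch z z0 ζ z z := by
          intro y
          rw [hfz]
          by_cases h : y = z
          · subst h; rw [hstay]
          · rw [Zch_off z z0 ζ y z h (fun hc => h hc.symm), mul_zero]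
            exact mul_nonneg (hq0 z) (by linarith)
        rw [fin_ciSup_eq _ z hmax, hfz]
        ring
      · rw [if_neg hy, add_zero]
        by_cases hzz : z = z0
        · subst hzz
          have hdiag : Zch y0 z ζ z z = 1 := Zch_diag y0 z ζ z hy
          have hfz : (∑ x, P x z) * Zch y0 z ζ z z = ∑ x, P x z := by rw [hdiag, mul_one]
          have hmax : ∀ y, (∑ x, P x y) * Zch y0 z ζ y z ≤ (∑ x, P x z) * Zch y0 z ζ z z := by
            intro y
            rw [hfz]
            by_cases h : y = z
            · subst h; rw [hdiag, mul_one]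
            · by_cases h2 : y = y0
              · subst h2; rw [Zch_cross]; exact hqz
              · rw [Zch_off y0 z ζ y z h2 (fun hc => h hc.symm), mul_zero]
                exact hq0 z
          rw [fin_ciSup_eq _ z hmax, hfz]
        · have hdiag : Zch y0 z0 ζ z z = 1 := Zch_diag y0 z0 ζ z hy
          have hfz : (∑ x, P x z) * Zch y0 z0 ζ z z = ∑ x, P x z := by rw [hdiag, mul_one]
          have hmax : ∀ y, (∑ x, P x y) * Zch y0 z0 ζ y z ≤ (∑ x, P x z) * Zch y0 z0 ζ z z := by
            intro y
            rw [hfz]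
            by_cases h : y = z
            · subst h; rw [hdiag, mul_one]
            · by_cases h2 : y = y0
              · subst h2; rw [Zch_zero y z0 ζ z hzz (fun hc => h hc.symm), mul_zero]
                exact hq0 z
              · rw [Zch_off y0 z0 ζ y z h2 (fun hc => h hc.symm), mul_zero]
                exact hq0 z
          rw [fin_ciSup_eq _ z hmax, hfz]
    unfold utilS
    rw [Finset.sum_congr rfl fun z _ => hcols z]
    rw [Finset.sum_add_distrib, Finset.sum_ite_eq' univ y0 (fun _ => -((∑ x, P x y0) * ζ))]
    rw [if_pos (mem_univ y0)]
    have hq1 : ∑ z, ∑ x, P x z = 1 := by rw [Finset.sum_comm]; exact hsum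
    rw [hq1]; ring

end Main

/-- **Statement 6b/7** (Theorem 3, second part): under positivity of `q_Y` and unique
maximizers `x_y` of `P(·,y)`, the left derivative of `h̲` at `P_c(X|Y)` equals
`min_{(y,z)} q_Y(y)/(P(x_y,y) − P(x_z,y))`, and whenever `(y₀,z₀)` attains this
minimum, the `N`-ary Z-channel `Z^{y₀,z₀}(ζ(ε))` achieves `h̲(ε)` for all `ε` close
enough to `P_c(X|Y)`. -/
theorem hUnder_left_deriv_and_Zchannel_optimal {M N : ℕ}
    (P : Fin (M + 1) → Fin (N + 1) → ℝ)
    (hpos : ∀ x y, 0 ≤ P x y) (hsum : ∑ x, ∑ y, P x y = 1)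
    (hlt : PcX P < PcXY P)
    (hq : ∀ y, 0 < ∑ x, P x y)
    (xm : Fin (N + 1) → Fin (M + 1))
    (hxm : ∀ y, ∀ x, x ≠ xm y → P x y < P (xm y) y) :
    HasDerivWithinAt (hUnder P) (derivMin P xm).toReal (Set.Iic (PcXY P)) (PcXY P) ∧
    ∀ y0 z0 : Fin (N + 1),
      ENNReal.ofReal (∑ x, P x y0) / ENNReal.ofReal (P (xm y0) y0 - P (xm z0) y0) =
        derivMin P xm →
      ∃ εL < PcXY P, ∀ ε ∈ Set.Icc εL (PcXY P),
        IsFilterS (Zch y0 z0 ((PcXY P - ε) / (P (xm y0) y0 - P (xm z0) y0))) ∧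
        privS P (Zch y0 z0 ((PcXY P - ε) / (P (xm y0) y0 - P (xm z0) y0))) ≤ ε ∧
        utilS P (Zch y0 z0 ((PcXY P - ε) / (P (xm y0) y0 - P (xm z0) y0))) = hUnder P ε := by
  classical
  have hPle : ∀ y x, P x y ≤ P (xm y) y := fun y x => by
    by_cases h : x = xm y
    · rw [h]
    · exact (hxm y x h).le
  have hq1 : ∑ y, ∑ x, P x y = 1 := by rw [Finset.sum_comm]; exact hsum
  have hq0 : ∀ y, (0:ℝ) ≤ ∑ x, P x y := fun y => (hq y).le
  have hP1 : ∀ x y, P x y ≤ 1 := by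
    intro x y
    calc P x y ≤ ∑ x', P x' y := Finset.single_le_sum (fun i _ => hpos i y) (mem_univ x)
      _ ≤ ∑ y', ∑ x', P x' y' :=
          Finset.single_le_sum (fun (i : Fin (N+1)) (_ : i ∈ univ) => hq0 i) (mem_univ y)
      _ = 1 := hq1
  have hex : ∃ y z : Fin (N + 1), 0 < P (xm y) y - P (xm z) y := by
    by_contra hcon
    push_neg at hcon
    have hconst : ∀ y z, xm z = xm y := by
      intro y z
      by_contra hne
      have h1 := hxm y (xm z) hne
      have h2 := hcon y z
      linarith
    have hle : PcXY P ≤ PcX P := by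
      rw [PcXY_eq P xm hxm]
      calc ∑ y, P (xm y) y = ∑ y, P (xm 0) y :=
            Finset.sum_congr rfl fun y _ => by rw [hconst y 0]
        _ ≤ PcX P := fin_le_ciSup (fun x => ∑ y, P x y) (xm 0)
    exact absurd hlt (not_lt.2 hle)
  have hterm_ne_top : ∀ y z : Fin (N + 1), 0 < P (xm y) y - P (xm z) y →
      ENNReal.ofReal (∑ x, P x y) / ENNReal.ofReal (P (xm y) y - P (xm z) y) ≠ ⊤ := by
    intro y z h
    simp [ENNReal.div_eq_top, ENNReal.ofReal_ne_top, (ENNReal.ofReal_pos.2 h).ne']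
  have hne_top : derivMin P xm ≠ ⊤ := by
    obtain ⟨y, z, h⟩ := hex
    exact ne_top_of_le_ne_top (hterm_ne_top y z h) (iInf_le_of_le y (iInf_le _ z))
  set c := (derivMin P xm).toReal with hcdef
  have hc0 : 0 ≤ c := ENNReal.toReal_nonneg
  have hkey : ∀ y z, c * (P (xm y) y - P (xm z) y) ≤ ∑ x, P x y := by
    intro y z
    rcases le_or_gt (P (xm y) y - P (xm z) y) 0 with h | h
    · nlinarith [hq y]
    · have hle : derivMin P xm ≤
          ENNReal.ofReal (∑ x, P x y) / ENNReal.ofReal (P (xm y) y - P (xm z) y) :=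
        iInf_le_of_le y (iInf_le _ z)
      have h2 := ENNReal.toReal_mono (hterm_ne_top y z h) hle
      rw [ENNReal.toReal_div, ENNReal.toReal_ofReal (hq0 y),
          ENNReal.toReal_ofReal h.le] at h2
      rw [le_div_iff₀ h] at h2
      exact h2
  have main2 : ∀ y0 z0 : Fin (N + 1),
      ENNReal.ofReal (∑ x, P x y0) / ENNReal.ofReal (P (xm y0) y0 - P (xm z0) y0) =
        derivMin P xm →
      ∃ εL < PcXY P, ∀ ε ∈ Set.Icc εL (PcXY P),
        (IsFilterS (Zch y0 z0 ((PcXY P - ε) / (P (xm y0) y0 - P (xm z0) y0))) ∧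
        privS P (Zch y0 z0 ((PcXY P - ε) / (P (xm y0) y0 - P (xm z0) y0))) ≤ ε ∧
        utilS P (Zch y0 z0 ((PcXY P - ε) / (P (xm y0) y0 - P (xm z0) y0))) = hUnder P ε) ∧
        hUnder P ε = 1 - c * (PcXY P - ε) := by
    intro y0 z0 heq
    have hΔpos : 0 < P (xm y0) y0 - P (xm z0) y0 := by
      rcases le_or_gt (P (xm y0) y0 - P (xm z0) y0) 0 with h | h
      · exfalso
        apply hne_top
        rw [← heq, ENNReal.ofReal_eq_zero.2 h]
        exact ENNReal.div_zero (ENNReal.ofReal_pos.2 (hq y0)).ne'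
      · exact h
    have hz0 : z0 ≠ y0 := by
      intro h
      rw [h] at hΔpos
      simp at hΔpos
    have hcval : c = (∑ x, P x y0) / (P (xm y0) y0 - P (xm z0) y0) := by
      rw [hcdef, ← heq, ENNReal.toReal_div, ENNReal.toReal_ofReal (hq0 y0),
          ENNReal.toReal_ofReal hΔpos.le]
    have hunivne : (univ : Finset (Fin (M + 1))).Nonempty := univ_nonempty
    have hgpos : ∀ x : Fin (M + 1),
        0 < (if x = xm z0 then (1:ℝ) else P (xm z0) z0 - P x z0) := by
      intro x
      by_cases h : x = xm z0
      · rw [if_pos h]; exact one_pos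
      · rw [if_neg h]; linarith [hxm z0 x h]
    set ζm := min 1 (univ.inf' hunivne
      (fun x => if x = xm z0 then (1:ℝ) else P (xm z0) z0 - P x z0)) with hζmdef
    have hζmpos : 0 < ζm := by
      apply lt_min one_pos
      obtain ⟨x, _, hx⟩ := Finset.exists_mem_eq_inf' hunivne
        (fun x => if x = xm z0 then (1:ℝ) else P (xm z0) z0 - P x z0)
      rw [hx]; exact hgpos x
    have hζmg : ∀ x, x ≠ xm z0 → ζm ≤ P (xm z0) z0 - P x z0 := by
      intro x hx
      have hinf := Finset.inf'_le
        (fun x => if x = xm z0 then (1:ℝ) else P (xm z0) z0 - P x z0) (mem_univ x)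
      rw [if_neg hx] at hinf
      exact le_trans (min_le_right _ _) hinf
    set δ := min (min (P (xm y0) y0 - P (xm z0) y0)
      ((∑ x, P x z0) * (P (xm y0) y0 - P (xm z0) y0) / (∑ x, P x y0)))
      (ζm * (P (xm y0) y0 - P (xm z0) y0)) with hδdef
    have hδpos : 0 < δ := by
      refine lt_min (lt_min hΔpos ?_) ?_
      · exact div_pos (mul_pos (hq z0) hΔpos) (hq y0)
      · exact mul_pos hζmpos hΔpos
    refine ⟨PcXY P - δ, by linarith, ?_⟩
    intro ε hε
    obtain ⟨hε1, hε2⟩ := hε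
    have hεδ : PcXY P - ε ≤ δ := by linarith
    have hεδ' : 0 ≤ PcXY P - ε := by linarith
    set ζ := (PcXY P - ε) / (P (xm y0) y0 - P (xm z0) y0) with hζdef
    have hζΔ : ζ * (P (xm y0) y0 - P (xm z0) y0) = PcXY P - ε :=
      div_mul_cancel₀ _ hΔpos.ne'
    have hζ0 : 0 ≤ ζ := div_nonneg hεδ' hΔpos.le
    have hζ1 : ζ ≤ 1 := by
      rw [hζdef, div_le_one hΔpos]
      exact hεδ.trans ((min_le_left _ _).trans (min_le_left _ _))
    have hqzζ : (∑ x, P x y0) * ζ ≤ ∑ x, P x z0 := by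
      have h2 : PcXY P - ε ≤
          (∑ x, P x z0) * (P (xm y0) y0 - P (xm z0) y0) / (∑ x, P x y0) :=
        hεδ.trans ((min_le_left _ _).trans (min_le_right _ _))
      rw [← hζΔ] at h2
      have h3 := (le_div_iff₀ (hq y0)).1 h2
      nlinarith [hΔpos]
    have hζζm : ζ ≤ ζm := by
      have h2 : PcXY P - ε ≤ ζm * (P (xm y0) y0 - P (xm z0) y0) :=
        hεδ.trans (min_le_right _ _)
      rw [← hζΔ] at h2
      exact le_of_mul_le_mul_right h2 hΔpos
    have hxc : ∀ x, P x y0 * ζ + P x z0 ≤ P (xm z0) y0 * ζ + P (xm z0) z0 := by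
      intro x
      by_cases h : x = xm z0
      · rw [h]
      · have h1 : ζ * (P x y0 - P (xm z0) y0) ≤ ζ := by
          nlinarith [hP1 x y0, hpos (xm z0) y0]
        have h2 := hζmg x h
        nlinarith
    obtain ⟨hfil, hpriv, hutil⟩ := zch_eval P hpos hsum xm hxm y0 z0 hz0 ζ hζ0 hζ1 hqzζ hxc
    have hprivε : privS P (Zch y0 z0 ζ) = ε := by rw [hpriv, hζΔ]; ring
    have hcPc : (∑ x, P x y0) * ζ = c * (PcXY P - ε) := by
      rw [hcval, hζdef]; ring
    have hval : utilS P (Zch y0 z0 ζ) = 1 - c * (PcXY P - ε) := by rw [hutil, hcPc]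
    have hmem : utilS P (Zch y0 z0 ζ) ∈
        {u | ∃ F, IsFilterS F ∧ privS P F ≤ ε ∧ u = utilS P F} :=
      ⟨Zch y0 z0 ζ, hfil, hprivε.le, rfl⟩
    have hub : ∀ u ∈ {u | ∃ F, IsFilterS F ∧ privS P F ≤ ε ∧ u = utilS P F},
        u ≤ 1 - c * (PcXY P - ε) := by
      rintro u ⟨F, hF, hpF, rfl⟩
      have h1 := converse_bound P hpos hsum xm hxm c hc0 hkey F hF
      have h2 : c * (PcXY P - ε) ≤ c * (PcXY P - privS P F) := by
        apply mul_le_mul_of_nonneg_left _ hc0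
        linarith
      linarith
    have hUval : hUnder P ε = 1 - c * (PcXY P - ε) := by
      unfold hUnder
      exact le_antisymm (csSup_le ⟨_, hmem⟩ hub) (hval ▸ le_csSup ⟨_, hub⟩ hmem)
    exact ⟨⟨hfil, hprivε.le, hval.trans hUval.symm⟩, hUval⟩
  refine ⟨?_, fun y0 z0 heq => ?_⟩
  · obtain ⟨⟨y0, z0⟩, hmin⟩ := Finite.exists_min (fun p : Fin (N + 1) × Fin (N + 1) =>
      ENNReal.ofReal (∑ x, P x p.1) / ENNReal.ofReal (P (xm p.1) p.1 - P (xm p.2) p.1))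
    have heq : ENNReal.ofReal (∑ x, P x y0) /
        ENNReal.ofReal (P (xm y0) y0 - P (xm z0) y0) = derivMin P xm := by
      apply le_antisymm
      · exact le_iInf fun y => le_iInf fun z => hmin (y, z)
      · exact iInf_le_of_le y0 (iInf_le _ z0)
    obtain ⟨εL, hεL, hall⟩ := main2 y0 z0 heq
    have hL : HasDerivWithinAt (fun ε => 1 - c * (PcXY P - ε)) c
        (Set.Iic (PcXY P)) (PcXY P) := by
      have h1 : HasDerivAt (fun ε : ℝ => PcXY P - ε) (-1) (PcXY P) :=
        (hasDerivAt_id _).const_sub _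
      have h3 := (h1.const_mul c).const_sub 1
      simpa using h3.hasDerivWithinAt
    refine hL.congr_of_eventuallyEq ?_ ?_
    · have hmem : Set.Ioi εL ∩ Set.Iic (PcXY P) ∈
          nhdsWithin (PcXY P) (Set.Iic (PcXY P)) :=
        Filter.inter_mem (mem_nhdsWithin_of_mem_nhds (Ioi_mem_nhds hεL))
          self_mem_nhdsWithin
      exact Filter.eventuallyEq_of_mem hmem fun ε hε => (hall ε ⟨hε.1.le, hε.2⟩).2
    · have h := (hall (PcXY P) ⟨hεL.le, le_rfl⟩).2
      rw [h]
  · obtain ⟨εL, h1, h2⟩ := main2 y0 z0 heq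
    exact ⟨εL, h1, fun ε hε => (h2 ε hε).1⟩
end

section
/- If (X_1, Z_1), …, (X_n, Z_n) are mutually independent pairs of random variables on finite alphabets, then P_c(X^n | Z^n) = ∏_{k=1}^n P_c(X_k | Z_k), where X^n = (X_1,…,X_n) and Z^n = (Z_1,…,Z_n). -/
open Finset

/-- Lemma 1: if `(X_1,Z_1), …, (X_n,Z_n)` are independent pairs of
finite-alphabet random variables (so the joint pmf of `(X^n, Z^n)` is the product
`∏_k P_k(x_k, z_k)` of the pairwise joint pmfs `P_k`), then
`P_c(X^n|Z^n) = ∏_{k=1}^n P_c(X_k|Z_k)`. -/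
theorem Pc_cond_prod {n A B : ℕ} (P : Fin n → Fin (A + 1) → Fin (B + 1) → ℝ)
    (hpos : ∀ k x z, 0 ≤ P k x z) (hsum : ∀ k, ∑ x, ∑ z, P k x z = 1) :
    ∑ z : Fin n → Fin (B + 1), ⨆ x : Fin n → Fin (A + 1), ∏ k, P k (x k) (z k) =
      ∏ k, ∑ zk, ⨆ xk, P k xk zk := by
  have hmax : ∀ (k : Fin n) (zk : Fin (B+1)), ∃ xmk, ∀ x, P k x zk ≤ P k xmk zk := by
    intro k zk
    obtain ⟨xmk, -, h⟩ := Finset.exists_max_image Finset.univ (fun x => P k x zk)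
      ⟨0, mem_univ 0⟩
    exact ⟨xmk, fun x => h x (mem_univ x)⟩
  choose xm hxm using hmax
  have h1 : ∀ k zk, (⨆ xk, P k xk zk) = P k (xm k zk) zk := fun k zk =>
    le_antisymm (ciSup_le fun x => hxm k zk x)
      (le_ciSup (f := fun xk => P k xk zk) (Set.Finite.bddAbove (Set.finite_range _)) (xm k zk))
  have h2 : ∀ z : Fin n → Fin (B+1),
      (⨆ x : Fin n → Fin (A+1), ∏ k, P k (x k) (z k)) = ∏ k, P k (xm k (z k)) (z k) := by
    intro z
    refine le_antisymm
      (ciSup_le fun x => Finset.prod_le_prod (fun k _ => hpos k (x k) (z k))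
        (fun k _ => hxm k (z k) (x k)))
      (le_ciSup (f := fun x : Fin n → Fin (A+1) => ∏ k, P k (x k) (z k)) (Set.Finite.bddAbove (Set.finite_range _)) (fun k => xm k (z k)))
  simp_rw [h1, h2]
  rw [Finset.prod_univ_sum]
  simp [Fintype.piFinset_univ]
end

section
/- Assume X_1,…,X_n are i.i.d. Bernoulli(p) and Y_k = X_k ⊕ V_k for k = 1,…,n, where V_1,…,V_n are i.i.d. Bernoulli(α) independent of X^n, with p ∈ [1/2, 1), α ∈ [0, 1/2), and 1−α > p. Then there exists ε_L < (1−α)^n such that for every ε ∈ [ε_L, (1−α)^n]: sup{P_c(Y^n|Z^n) : P_{Z^n|Y^n} a channel with output alphabet {0,1}^n, X^n–Y^n–Z^n a Markov chain, and P_c(X^n|Z^n) ≤ ε} = 1 − ζ(ε)·q^n, where q := α(1−p) + (1−α)p and ζ(ε) := ((1−α)^n − ε)/(((1−α)p)^n − (α(1−p))^n). Moreover, the supremum is attained by the 2^n-ary Z-channel that maps every y^n ≠ (1,…,1) to itself with probability 1 and maps (1,…,1) to (0,…,0) with probability ζ(ε) and to (1,…,1) with probability 1 − ζ(ε). -/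
open Finset

/-- `bern p b = p` if `b = true`, and `1 - p` otherwise. -/
noncomputable def bern (p : ℝ) (b : Bool) : ℝ := if b then p else 1 - p

/-- Joint pmf of `(X^n, Y^n)` where `X_1,…,X_n` are i.i.d. `Bernoulli(p)` and
`Y_k = X_k ⊕ V_k` with `V_1,…,V_n` i.i.d. `Bernoulli(α)` independent of `X^n`. -/
noncomputable def jointIID (n : ℕ) (p α : ℝ) :
    (Fin n → Bool) → (Fin n → Bool) → ℝ :=
  fun x y => ∏ k, bern p (x k) * bern α (xor (x k) (y k))

/-- `F` is a channel (row-stochastic matrix) on a finite alphabet. -/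
def IsChannel {V : Type*} [Fintype V] (F : V → V → ℝ) : Prop :=
  (∀ y z, 0 ≤ F y z) ∧ ∀ y, ∑ z, F y z = 1

/-- `P_c(X|Z)` where `Z` is the output of the channel `F` applied to `Y` and
`X – Y – Z` is a Markov chain, for joint pmf `P` of `(X,Y)`. -/
noncomputable def pcXZ {X V : Type*} [Fintype X] [Fintype V] [Nonempty X]
    (P : X → V → ℝ) (F : V → V → ℝ) : ℝ :=
  ∑ z, ⨆ x, ∑ y, P x y * F y z

/-- `P_c(Y|Z)` where `Z` is the output of the channel `F` applied to `Y`. -/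
noncomputable def pcYZ {X V : Type*} [Fintype X] [Fintype V] [Nonempty V]
    (P : X → V → ℝ) (F : V → V → ℝ) : ℝ :=
  ∑ z, ⨆ y, (∑ x, P x y) * F y z

/-!
For a channel `F` fix an output `z` and let `y'` be the best guess of `Y` given `z`. Guessing
`X = y'` bounds the loss in `P_c(X|Z)` against the channel-free value `∑_y P(y, y)` by
`∑_{y ≠ y'} (P(y, y) - P(y', y)) F(y, z)`, and letter by letter one checks
`q^n (P(y, y) - P(y', y)) ≤ (((1-α)p)^n - (α(1-p))^n) P_Y(y)`. Summing over `z` gives the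
trade-off `q^n ((1-α)^n - P_c(X|Z)) ≤ (((1-α)p)^n - (α(1-p))^n) (1 - P_c(Y|Z))`, which is tight for
the Z-channel as long as `ζ` is small enough that `x = 0` remains the best guess of `X` at `z = 0`.
-/

section Channel

variable {X V : Type*} [Fintype V]

theorem IsChannel.sum_sum_mul {F : V → V → ℝ} (hF : IsChannel F) (a : V → ℝ) :
    ∑ z, ∑ y, a y * F y z = ∑ y, a y := by
  rw [sum_comm]
  simp only [← mul_sum, hF.2, mul_one]

theorem column_tradeoff [Nonempty V] (P : V → V → ℝ) {a b : ℝ} (ha : 0 ≤ a)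
    (hP : ∀ y' y, a * (P y y - P y' y) ≤ b * ∑ x, P x y) (w : V → ℝ) (hw : ∀ y, 0 ≤ w y) :
    a * (∑ y, P y y * w y - ⨆ x, ∑ y, P x y * w y) ≤
      b * (∑ y, (∑ x, P x y) * w y - ⨆ y, (∑ x, P x y) * w y) := by
  classical
  obtain ⟨y', hy'⟩ := exists_eq_ciSup_of_finite (f := fun y => (∑ x, P x y) * w y)
  have hguess : ∑ y, P y' y * w y ≤ ⨆ x, ∑ y, P x y * w y :=
    le_ciSup (f := fun x => ∑ y, P x y * w y) (Finite.bddAbove_range _) y'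
  calc a * (∑ y, P y y * w y - ⨆ x, ∑ y, P x y * w y)
      ≤ a * (∑ y, P y y * w y - ∑ y, P y' y * w y) := by gcongr
    _ = ∑ y ∈ univ.erase y', a * (P y y - P y' y) * w y := by
        rw [sum_erase _ (by simp), mul_sub, mul_sum, mul_sum, ← sum_sub_distrib]
        exact sum_congr rfl fun y _ => by ring
    _ ≤ ∑ y ∈ univ.erase y', b * (∑ x, P x y) * w y :=
        sum_le_sum fun y _ => mul_le_mul_of_nonneg_right (hP y' y) (hw y)
    _ = b * (∑ y, (∑ x, P x y) * w y - ⨆ y, (∑ x, P x y) * w y) := by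
        simp only [mul_assoc, ← mul_sum, sum_erase_eq_sub (mem_univ y'), ← hy', mul_sub]

theorem mul_sub_pcXZ_le_mul_sub_pcYZ [Nonempty V] (P : V → V → ℝ) {a b : ℝ} (ha : 0 ≤ a)
    (hP : ∀ y' y, a * (P y y - P y' y) ≤ b * ∑ x, P x y) {F : V → V → ℝ} (hF : IsChannel F) :
    a * (∑ y, P y y - pcXZ P F) ≤ b * (∑ y, ∑ x, P x y - pcYZ P F) := by
  rw [← hF.sum_sum_mul (fun y => P y y), ← hF.sum_sum_mul (fun y => ∑ x, P x y), pcXZ, pcYZ,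
    ← sum_sub_distrib, ← sum_sub_distrib, mul_sum, mul_sum]
  exact sum_le_sum fun z _ => column_tradeoff P ha hP (F · z) (hF.1 · z)

theorem sum_mul_self_le_pcYZ [Fintype X] [Nonempty V] (P : X → V → ℝ) (F : V → V → ℝ) :
    ∑ z, (∑ x, P x z) * F z z ≤ pcYZ P F :=
  sum_le_sum fun z _ => le_ciSup (f := fun y => (∑ x, P x y) * F y z) (Finite.bddAbove_range _) z

end Channel

section ZChannel

variable {X V : Type*} [DecidableEq V] {y0 z0 : V} {ζ : ℝ}

theorem Zch_self (hne : y0 ≠ z0) (z : V) : Zch y0 z0 ζ z z = 1 - if z = y0 then ζ else 0 := by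
  unfold Zch
  split_ifs <;> simp_all

theorem Zch_eq_ite (hne : y0 ≠ z0) (y z : V) :
    Zch y0 z0 ζ y z = (if z = y then 1 else 0) +
      if y = y0 then (if z = z0 then ζ else 0) - (if z = y0 then ζ else 0) else 0 := by
  unfold Zch
  split_ifs <;> simp_all [sub_eq_add_neg]

variable [Fintype V]

theorem Zch_isChannel (hne : y0 ≠ z0) (h0 : 0 ≤ ζ) (h1 : ζ ≤ 1) : IsChannel (Zch y0 z0 ζ) := by
  refine ⟨fun y z => ?_, fun y => ?_⟩
  · unfold Zch
    split_ifs <;> linarith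
  · simp [Zch_eq_ite hne, sum_add_distrib, sum_sub_distrib]

theorem sum_mul_Zch (hne : y0 ≠ z0) (a : V → ℝ) (z : V) :
    ∑ y, a y * Zch y0 z0 ζ y z =
      a z + (if z = z0 then ζ * a y0 else 0) - if z = y0 then ζ * a y0 else 0 := by
  simp only [Zch_eq_ite hne, mul_add, sum_add_distrib, mul_ite, mul_zero, mul_one, sum_ite_eq',
    sum_ite_eq, mem_univ, if_true]
  split_ifs <;> ring

theorem pcXZ_Zch_le [Fintype X] [Nonempty X] (P : X → V → ℝ) (hne : y0 ≠ z0) (hζ : ζ ≤ 1)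
    {m : V → ℝ} (hm : ∀ x z, P x z ≤ m z) {c : ℝ}
    (hc : ∀ x, P x z0 + ζ * P x y0 ≤ m z0 + ζ * c) :
    pcXZ P (Zch y0 z0 ζ) ≤ ∑ z, m z - ζ * (m y0 - c) := by
  calc pcXZ P (Zch y0 z0 ζ)
      ≤ ∑ z, (m z + (if z = z0 then ζ * c else 0) - if z = y0 then ζ * m y0 else 0) := by
        refine sum_le_sum fun z _ => ciSup_le fun x => ?_
        rw [sum_mul_Zch hne]
        by_cases h0 : z = y0
        · subst h0
          simp only [hne, if_false, if_true, add_zero]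
          nlinarith [hm x z]
        by_cases h1 : z = z0
        · subst h1
          simp only [h0, if_false, if_true, sub_zero]
          linarith [hc x]
        · simp only [h0, h1, if_false, add_zero, sub_zero, hm x z]
    _ = ∑ z, m z - ζ * (m y0 - c) := by
        simp only [sum_sub_distrib, sum_add_distrib, sum_ite_eq', mem_univ, if_true]
        ring

end ZChannel

theorem pow_mul_prod_le_pow_mul_prod {n : ℕ} {c d : ℝ} {u v : Fin n → ℝ}
    (h0 : ∀ k, 0 ≤ c * u k) (h : ∀ k, c * u k ≤ d * v k) :
    c ^ n * ∏ k, u k ≤ d ^ n * ∏ k, v k := by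
  simpa only [prod_mul_distrib, Fin.prod_const] using
    prod_le_prod (s := univ) (fun k _ => h0 k) fun k _ => h k

theorem const_true_ne_const_false {n : ℕ} (hn : 0 < n) : (fun _ : Fin n => true) ≠ fun _ => false :=
  fun h => Bool.noConfusion (congrFun h ⟨0, hn⟩)

section IID

variable {n : ℕ} {p α : ℝ}

theorem bern_nonneg (h0 : 0 ≤ p) (h1 : p ≤ 1) (b : Bool) : 0 ≤ bern p b := by
  cases b <;> simp [bern] <;> linarith

theorem sum_prod_bern (p : ℝ) : ∑ y : Fin n → Bool, ∏ k, bern p (y k) = 1 := by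
  rw [← Fintype.prod_sum fun _ b => bern p b]
  simp [bern]

noncomputable def letterJoint (p α : ℝ) (a b : Bool) : ℝ := bern p a * bern α (xor a b)

theorem jointIID_eq_prod (x y : Fin n → Bool) :
    jointIID n p α x y = ∏ k, letterJoint p α (x k) (y k) := rfl

theorem jointIID_const (a b : Bool) :
    jointIID n p α (fun _ => a) (fun _ => b) = letterJoint p α a b ^ n :=
  Fin.prod_const n _

theorem letterJoint_self (p α : ℝ) (b : Bool) : letterJoint p α b b = (1 - α) * bern p b := by
  simp [letterJoint, bern, mul_comm]

theorem sum_letterJoint (p α : ℝ) (b : Bool) :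
    ∑ a, letterJoint p α a b = bern (α * (1 - p) + (1 - α) * p) b := by
  cases b <;> simp [letterJoint, bern] <;> ring

theorem letterJoint_nonneg (hp0 : 0 ≤ p) (hp1 : p ≤ 1) (hα0 : 0 ≤ α) (hα1 : α ≤ 1) (a b : Bool) :
    0 ≤ letterJoint p α a b :=
  mul_nonneg (bern_nonneg hp0 hp1 a) (bern_nonneg hα0 hα1 _)

theorem letterJoint_le_self (hαp : α ≤ p) (hpα : p ≤ 1 - α) (a b : Bool) :
    letterJoint p α a b ≤ letterJoint p α b b := by
  cases a <;> cases b <;> simp [letterJoint, bern] <;> nlinarith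

theorem mul_letterJoint_self_le (hp : 1 / 2 ≤ p) (hα0 : 0 ≤ α) (hα1 : α ≤ 1) (b : Bool) :
    (α * (1 - p) + (1 - α) * p) * letterJoint p α b b ≤
      ((1 - α) * p) * bern (α * (1 - p) + (1 - α) * p) b := by
  have : 0 ≤ (1 - α) * α * (2 * p - 1) := mul_nonneg (mul_nonneg (by linarith) hα0) (by linarith)
  cases b <;> simp [letterJoint, bern] <;> nlinarith

theorem mul_bern_le_mul_letterJoint (hp : 1 / 2 ≤ p) (hp1 : p ≤ 1) (hα0 : 0 ≤ α) (hα : α ≤ 1 / 2)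
    (a b : Bool) :
    (α * (1 - p)) * bern (α * (1 - p) + (1 - α) * p) b ≤
      (α * (1 - p) + (1 - α) * p) * letterJoint p α a b := by
  have h1 : 0 ≤ α * (2 * p - 1) * (1 - 2 * α) :=
    mul_nonneg (mul_nonneg hα0 (by linarith)) (by linarith)
  have h2 : 0 ≤ p * (1 - p) * (1 - 2 * α) :=
    mul_nonneg (mul_nonneg (by linarith) (by linarith)) (by linarith)
  have h3 : 0 ≤ (α * (1 - p) + (1 - α) * p) * (p - α) :=
    mul_nonneg (by nlinarith) (by linarith)
  cases a <;> cases b <;> simp [letterJoint, bern] <;> nlinarith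

theorem jointIID_self (y : Fin n → Bool) :
    jointIID n p α y y = (1 - α) ^ n * ∏ k, bern p (y k) := by
  simp only [jointIID_eq_prod, letterJoint_self, prod_mul_distrib, Fin.prod_const]

theorem sum_jointIID_self : ∑ y : Fin n → Bool, jointIID n p α y y = (1 - α) ^ n := by
  simp only [jointIID_self, ← mul_sum, sum_prod_bern, mul_one]

theorem sum_jointIID_left (y : Fin n → Bool) :
    ∑ x, jointIID n p α x y = ∏ k, bern (α * (1 - p) + (1 - α) * p) (y k) := by
  simp only [jointIID_eq_prod, ← sum_letterJoint]
  exact (Fintype.prod_sum fun k a => letterJoint p α a (y k)).symm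

theorem jointIID_le_self (hp : 1 / 2 ≤ p) (hα0 : 0 ≤ α) (hpα : p ≤ 1 - α) (x y : Fin n → Bool) :
    jointIID n p α x y ≤ jointIID n p α y y :=
  prod_le_prod (fun k _ => letterJoint_nonneg (by linarith) (by linarith) hα0 (by linarith) _ _)
    fun k _ => letterJoint_le_self (by linarith) hpα _ _

theorem jointIID_tradeoff (hp : 1 / 2 ≤ p) (hp1 : p ≤ 1) (hα0 : 0 ≤ α) (hα : α ≤ 1 / 2)
    (y' y : Fin n → Bool) :
    (α * (1 - p) + (1 - α) * p) ^ n * (jointIID n p α y y - jointIID n p α y' y) ≤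
      (((1 - α) * p) ^ n - (α * (1 - p)) ^ n) * ∑ x, jointIID n p α x y := by
  have hq : 0 ≤ α * (1 - p) + (1 - α) * p := by nlinarith
  have hjoint := letterJoint_nonneg (by linarith) hp1 hα0 (by linarith) (p := p) (α := α)
  have hupper := pow_mul_prod_le_pow_mul_prod (fun k => mul_nonneg hq (hjoint (y k) (y k)))
    fun k => mul_letterJoint_self_le hp hα0 (by linarith) (y k)
  have hlower := pow_mul_prod_le_pow_mul_prod
    (fun k => mul_nonneg (by nlinarith) (bern_nonneg hq (by nlinarith) (y k)))
    fun k => mul_bern_le_mul_letterJoint hp hp1 hα0 hα (y' k) (y k)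
  rw [sum_jointIID_left, mul_sub, sub_mul (((1 - α) * p) ^ n)]
  exact sub_le_sub hupper hlower

theorem pcYZ_jointIID_le (hp : 1 / 2 ≤ p) (hp1 : p ≤ 1) (hα0 : 0 ≤ α) (hα : α ≤ 1 / 2)
    (hΔ : 0 < ((1 - α) * p) ^ n - (α * (1 - p)) ^ n) {F : (Fin n → Bool) → (Fin n → Bool) → ℝ}
    (hF : IsChannel F) {ε : ℝ} (hε : pcXZ (jointIID n p α) F ≤ ε) :
    pcYZ (jointIID n p α) F ≤
      1 - ((1 - α) ^ n - ε) / (((1 - α) * p) ^ n - (α * (1 - p)) ^ n) *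
        (α * (1 - p) + (1 - α) * p) ^ n := by
  have hq : 0 ≤ (α * (1 - p) + (1 - α) * p) ^ n := pow_nonneg (by nlinarith) n
  have h := mul_sub_pcXZ_le_mul_sub_pcYZ _ hq (jointIID_tradeoff hp hp1 hα0 hα) hF
  simp only [sum_jointIID_self, sum_jointIID_left, sum_prod_bern] at h
  rw [div_mul_eq_mul_div, le_sub_comm, div_le_iff₀ hΔ]
  nlinarith

theorem one_sub_le_pcYZ_jointIID_Zch (hn : 0 < n) (ζ : ℝ) :
    1 - ζ * (α * (1 - p) + (1 - α) * p) ^ n ≤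
      pcYZ (jointIID n p α) (Zch (fun _ => true) (fun _ => false) ζ) := by
  refine le_trans (le_of_eq ?_) (sum_mul_self_le_pcYZ _ _)
  simp only [Zch_self (const_true_ne_const_false hn), mul_sub, mul_one, mul_ite, mul_zero,
    sum_sub_distrib, sum_ite_eq', mem_univ, if_true, sum_jointIID_left, sum_prod_bern]
  simp [bern, mul_comm]

theorem jointIID_const_false_le (hp : 1 / 2 ≤ p) (hα0 : 0 ≤ α) (hpα : p ≤ 1 - α)
    {x : Fin n → Bool} (hx : x ≠ fun _ => false) :
    jointIID n p α x (fun _ => false) ≤ p * α * ((1 - p) * (1 - α)) ^ (n - 1) := by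
  obtain ⟨k0, hk0⟩ := Function.ne_iff.1 hx
  have hrest : ∏ k ∈ univ.erase k0, letterJoint p α (x k) false ≤ ((1 - p) * (1 - α)) ^ (n - 1) :=
    calc ∏ k ∈ univ.erase k0, letterJoint p α (x k) false
        ≤ ∏ _k ∈ univ.erase k0, letterJoint p α false false :=
          prod_le_prod
            (fun k _ => letterJoint_nonneg (by linarith) (by linarith) hα0 (by linarith) _ _)
            fun k _ => letterJoint_le_self (by linarith) hpα _ _
      _ = ((1 - p) * (1 - α)) ^ (n - 1) := by simp [letterJoint, bern]
  have hk0 : letterJoint p α (x k0) false = p * α := by simp_all [letterJoint, bern]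
  rw [jointIID_eq_prod, ← mul_prod_erase _ _ (mem_univ k0), hk0]
  exact mul_le_mul_of_nonneg_left hrest (by nlinarith)

theorem pcXZ_jointIID_Zch_le (hn : 0 < n) (hp : 1 / 2 ≤ p) (hα0 : 0 ≤ α) (hpα : p ≤ 1 - α)
    {ζ : ℝ} (hζ0 : 0 ≤ ζ) (hζ1 : ζ ≤ 1)
    (hζ : ζ * ((1 - α) * p) ^ n ≤ ((1 - p) * (1 - α)) ^ (n - 1) * (1 - p - α)) :
    pcXZ (jointIID n p α) (Zch (fun _ => true) (fun _ => false) ζ) ≤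
      (1 - α) ^ n - ζ * (((1 - α) * p) ^ n - (α * (1 - p)) ^ n) := by
  have hle := jointIID_le_self (n := n) hp hα0 hpα
  have hones : jointIID n p α (fun _ => true) (fun _ => true) = ((1 - α) * p) ^ n := by
    simp [jointIID_const, letterJoint, bern, mul_comm]
  have hcross : jointIID n p α (fun _ => false) (fun _ => true) = (α * (1 - p)) ^ n := by
    simp [jointIID_const, letterJoint, bern, mul_comm]
  have hzeros : jointIID n p α (fun _ => false) (fun _ => false) =
      ((1 - p) * (1 - α)) ^ (n - 1) * ((1 - p) * (1 - α)) := by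
    rw [jointIID_const, ← pow_succ, Nat.sub_add_cancel hn]
    simp [letterJoint, bern]
  refine (pcXZ_Zch_le _ (const_true_ne_const_false hn) hζ1 (m := fun z => jointIID n p α z z)
    hle (c := (α * (1 - p)) ^ n) fun x => ?_).trans_eq ?_
  · by_cases hx : x = fun _ => false
    · rw [hx, hcross]
    have h1 := jointIID_const_false_le hp hα0 hpα hx
    have h2 := mul_le_mul_of_nonneg_left (hones ▸ hle x fun _ => true) hζ0
    have h3 : 0 ≤ ζ * (α * (1 - p)) ^ n := mul_nonneg hζ0 (pow_nonneg (by nlinarith) n)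
    simp only [hzeros]
    nlinarith
  · simp only [sum_jointIID_self, hones]

end IID

/-- Theorem 4: i.i.d. case, high-utility regime. The supremum of
`P_c(Y^n|Z^n)` over channels `P_{Z^n|Y^n}` with output alphabet `{0,1}^n` satisfying
`P_c(X^n|Z^n) ≤ ε` equals `1 − ζ(ε) q^n` for `ε ∈ [ε_L, (1−α)^n]`, and is attained by
the `2^n`-ary Z-channel `Z_n(ζ(ε))`. -/
theorem iid_vector_high_utility (n : ℕ) (hn : 0 < n) (p α : ℝ)
    (hp : p ∈ Set.Ico (1 / 2 : ℝ) 1) (hα : α ∈ Set.Ico (0 : ℝ) (1 / 2))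
    (hpα : p < 1 - α) :
    ∃ εL < (1 - α) ^ n, ∀ ε ∈ Set.Icc εL ((1 - α) ^ n),
      (sSup {u | ∃ F : (Fin n → Bool) → (Fin n → Bool) → ℝ, IsChannel F ∧
          pcXZ (jointIID n p α) F ≤ ε ∧ u = pcYZ (jointIID n p α) F} =
        1 - ((1 - α) ^ n - ε) / (((1 - α) * p) ^ n - (α * (1 - p)) ^ n) *
          (α * (1 - p) + (1 - α) * p) ^ n) ∧
      (let Z := Zch (fun _ : Fin n => true) (fun _ : Fin n => false)
          (((1 - α) ^ n - ε) / (((1 - α) * p) ^ n - (α * (1 - p)) ^ n))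
       IsChannel Z ∧ pcXZ (jointIID n p α) Z ≤ ε ∧
       pcYZ (jointIID n p α) Z =
        1 - ((1 - α) ^ n - ε) / (((1 - α) * p) ^ n - (α * (1 - p)) ^ n) *
          (α * (1 - p) + (1 - α) * p) ^ n) := by
  obtain ⟨hp, hp1⟩ := hp
  obtain ⟨hα0, hα⟩ := hα
  set Δ := ((1 - α) * p) ^ n - (α * (1 - p)) ^ n
  have hΔ : 0 < Δ := sub_pos.2 (pow_lt_pow_left₀ (by nlinarith) (by nlinarith) hn.ne')
  -- for `ζ ≤ ζ0` the guess `x = 0` stays optimal at the output `z = 0` of the Z-channel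
  set ζ0 := min 1 (((1 - p) * (1 - α)) ^ (n - 1) * (1 - p - α) / ((1 - α) * p) ^ n)
  have hζ0 : 0 < ζ0 :=
    lt_min one_pos (by apply div_pos <;> apply_rules [mul_pos, pow_pos] <;> nlinarith)
  refine ⟨(1 - α) ^ n - ζ0 * Δ, sub_lt_self _ (mul_pos hζ0 hΔ), fun ε ⟨hεL, hε⟩ => ?_⟩
  set ζ := ((1 - α) ^ n - ε) / Δ
  have hζ_nonneg : 0 ≤ ζ := div_nonneg (sub_nonneg.2 hε) hΔ.le
  have hζ_le : ζ ≤ ζ0 := (div_le_iff₀ hΔ).2 (by linarith)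
  have hζ1 : ζ ≤ 1 := hζ_le.trans (min_le_left _ _)
  have hζC : ζ * ((1 - α) * p) ^ n ≤ ((1 - p) * (1 - α)) ^ (n - 1) * (1 - p - α) :=
    (le_div_iff₀ (pow_pos (by nlinarith) n)).1 (hζ_le.trans (min_le_right _ _))
  have hZ := Zch_isChannel (const_true_ne_const_false hn) hζ_nonneg hζ1
  have hXZ : pcXZ (jointIID n p α) (Zch (fun _ => true) (fun _ => false) ζ) ≤ ε := by
    have h := pcXZ_jointIID_Zch_le hn hp hα0 hpα.le hζ_nonneg hζ1 hζC
    rwa [div_mul_cancel₀ _ hΔ.ne', sub_sub_cancel] at h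
  have hconverse := fun F (hF : IsChannel F) => pcYZ_jointIID_le hp hp1.le hα0 hα.le hΔ hF (ε := ε)
  have hYZ := le_antisymm (hconverse _ hZ hXZ) (one_sub_le_pcYZ_jointIID_Zch hn ζ)
  refine ⟨IsGreatest.csSup_eq ⟨⟨_, hZ, hXZ, hYZ.symm⟩, ?_⟩, hZ, hXZ, hYZ⟩
  rintro _ ⟨F, hF, hFε, rfl⟩
  exact hconverse F hF hFε
end

section
/- Assume X_1,…,X_n are i.i.d. Bernoulli(p) and Y_k = X_k ⊕ V_k for k = 1,…,n, where V_1,…,V_n are i.i.d. Bernoulli(α) independent of X^n, with p ∈ [1/2, 1), α ∈ [0, 1/2), and 1−α > p. Then for every ε ∈ [p, 1−α]: h_n^i(ε) = 1 − ζ(ε)·q, where q := α(1−p) + (1−α)p and ζ(ε) := ((1−α) − ε)/((1−α)p − α(1−p)). -/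
set_option maxHeartbeats 1000000

open Finset

/-- The memoryless privacy filter built from a single binary-input binary-output
channel `W`. -/
noncomputable def memless (n : ℕ) (W : Bool → Bool → ℝ) :
    (Fin n → Bool) → (Fin n → Bool) → ℝ :=
  fun y z => ∏ k, W (y k) (z k)

/-- `h_n^i(ε)`: the best normalized guessing probability `P_c(Y^n|Z^n)^{1/n}` over
memoryless privacy filters satisfying `P_c(X^n|Z^n)^{1/n} ≤ ε`. -/
noncomputable def hMemless (n : ℕ) (p α : ℝ) (ε : ℝ) : ℝ :=
  sSup {u | ∃ W : Bool → Bool → ℝ, (∀ y z, 0 ≤ W y z) ∧ (∀ y, ∑ z, W y z = 1) ∧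
    pcXZ (jointIID n p α) (memless n W) ^ ((n : ℝ)⁻¹) ≤ ε ∧
    u = pcYZ (jointIID n p α) (memless n W) ^ ((n : ℝ)⁻¹)}

/-! ### Auxiliary material -/

/-- The single-letter joint pmf of `(X, Y)`. -/
noncomputable def scalarJoint (p α : ℝ) : Bool → Bool → ℝ :=
  fun x y => bern p x * bern α (xor x y)

lemma bool_ciSup (f : Bool → ℝ) : (⨆ b, f b) = max (f false) (f true) := by
  apply le_antisymm
  · refine ciSup_le fun b => ?_
    cases b
    · exact le_max_left _ _
    · exact le_max_right _ _
  · exact max_le (le_ciSup (Set.Finite.bddAbove (Set.finite_range f)) false)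
      (le_ciSup (Set.Finite.bddAbove (Set.finite_range f)) true)

lemma ciSup_bool_nonneg (f : Bool → ℝ) (h : ∀ b, 0 ≤ f b) : 0 ≤ ⨆ b, f b :=
  (h true).trans (le_ciSup (Set.Finite.bddAbove (Set.finite_range f)) true)

lemma pi_ciSup_prod {n : ℕ} (f : Fin n → Bool → ℝ) (hf : ∀ k b, 0 ≤ f k b) :
    (⨆ x : Fin n → Bool, ∏ k, f k (x k)) = ∏ k, ⨆ b, f k b := by
  apply le_antisymm
  · refine ciSup_le fun x => Finset.prod_le_prod (fun k _ => hf k (x k)) (fun k _ => ?_)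
    exact le_ciSup (Set.Finite.bddAbove (Set.finite_range (f k))) (x k)
  · have h1 : ∀ k, (⨆ b, f k b)
        = f k ((fun k => if f k false ≤ f k true then true else false) k) := by
      intro k; rw [bool_ciSup]
      by_cases h : f k false ≤ f k true
      · simp only [if_pos h]; exact max_eq_right h
      · simp only [if_neg h]; exact max_eq_left (le_of_not_ge h)
    calc ∏ k, ⨆ b, f k b
        = ∏ k, f k ((fun k => if f k false ≤ f k true then true else false) k) :=
          Finset.prod_congr rfl fun k _ => h1 k
      _ ≤ ⨆ x : Fin n → Bool, ∏ k, f k (x k) :=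
          le_ciSup (f := fun x : Fin n → Bool => ∏ k, f k (x k))
            (Set.Finite.bddAbove (Set.finite_range _)) _

lemma pcXZ_tensor (n : ℕ) (p α : ℝ) (hb : ∀ x y, 0 ≤ scalarJoint p α x y)
    (W : Bool → Bool → ℝ) (hW : ∀ y z, 0 ≤ W y z) :
    pcXZ (jointIID n p α) (memless n W) = (pcXZ (scalarJoint p α) W) ^ n := by
  have hstep1 : ∀ (x z : Fin n → Bool),
      (∑ y, jointIID n p α x y * memless n W y z)
        = ∏ k, ∑ b, scalarJoint p α (x k) b * W b (z k) := by
    intro x z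
    rw [Fintype.prod_sum (fun k (b : Bool) => scalarJoint p α (x k) b * W b (z k))]
    refine Finset.sum_congr rfl fun y _ => ?_
    rw [Finset.prod_mul_distrib]
    rfl
  have hstep2 : ∀ z : Fin n → Bool,
      (⨆ x : Fin n → Bool, ∑ y, jointIID n p α x y * memless n W y z)
        = ∏ k, ⨆ a : Bool, ∑ b, scalarJoint p α a b * W b (z k) := by
    intro z
    calc (⨆ x : Fin n → Bool, ∑ y, jointIID n p α x y * memless n W y z)
        = ⨆ x : Fin n → Bool, ∏ k, ∑ b, scalarJoint p α (x k) b * W b (z k) :=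
          congrArg iSup (funext fun x => hstep1 x z)
      _ = ∏ k, ⨆ a : Bool, ∑ b, scalarJoint p α a b * W b (z k) :=
          pi_ciSup_prod (fun k a => ∑ b, scalarJoint p α a b * W b (z k)) (fun k a =>
            Finset.sum_nonneg fun b _ => mul_nonneg (hb _ _) (hW _ _))
  calc pcXZ (jointIID n p α) (memless n W)
      = ∑ z : Fin n → Bool, ∏ k, ⨆ a : Bool, ∑ b, scalarJoint p α a b * W b (z k) :=
        Finset.sum_congr rfl fun z _ => hstep2 z
    _ = ∏ k : Fin n, ∑ c : Bool, ⨆ a : Bool, ∑ b, scalarJoint p α a b * W b c :=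
        (Fintype.prod_sum (fun (_ : Fin n) (c : Bool) =>
          ⨆ a : Bool, ∑ b, scalarJoint p α a b * W b c)).symm
    _ = (∑ c : Bool, ⨆ a : Bool, ∑ b, scalarJoint p α a b * W b c) ^ n := by
        rw [Finset.prod_const, Finset.card_univ, Fintype.card_fin]
    _ = (pcXZ (scalarJoint p α) W) ^ n := rfl

lemma pcYZ_tensor (n : ℕ) (p α : ℝ) (hb : ∀ x y, 0 ≤ scalarJoint p α x y)
    (W : Bool → Bool → ℝ) (hW : ∀ y z, 0 ≤ W y z) :
    pcYZ (jointIID n p α) (memless n W) = (pcYZ (scalarJoint p α) W) ^ n := by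
  have hmarg : ∀ y : Fin n → Bool,
      (∑ x, jointIID n p α x y) = ∏ k, ∑ a : Bool, scalarJoint p α a (y k) := by
    intro y
    rw [Fintype.prod_sum (fun k (a : Bool) => scalarJoint p α a (y k))]
    rfl
  have hstep1 : ∀ (y z : Fin n → Bool),
      (∑ x, jointIID n p α x y) * memless n W y z
        = ∏ k, (∑ a : Bool, scalarJoint p α a (y k)) * W (y k) (z k) := by
    intro y z
    rw [hmarg y, Finset.prod_mul_distrib]
    rfl
  have hstep2 : ∀ z : Fin n → Bool,
      (⨆ y : Fin n → Bool, (∑ x, jointIID n p α x y) * memless n W y z)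
        = ∏ k, ⨆ b : Bool, (∑ a : Bool, scalarJoint p α a b) * W b (z k) := by
    intro z
    calc (⨆ y : Fin n → Bool, (∑ x, jointIID n p α x y) * memless n W y z)
        = ⨆ y : Fin n → Bool, ∏ k, (∑ a : Bool, scalarJoint p α a (y k)) * W (y k) (z k) :=
          congrArg iSup (funext fun y => hstep1 y z)
      _ = ∏ k, ⨆ b : Bool, (∑ a : Bool, scalarJoint p α a b) * W b (z k) :=
          pi_ciSup_prod (fun k b => (∑ a : Bool, scalarJoint p α a b) * W b (z k)) (fun k b =>
            mul_nonneg (Finset.sum_nonneg fun a _ => hb _ _) (hW _ _))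
  calc pcYZ (jointIID n p α) (memless n W)
      = ∑ z : Fin n → Bool, ∏ k, ⨆ b : Bool, (∑ a : Bool, scalarJoint p α a b) * W b (z k) :=
        Finset.sum_congr rfl fun z _ => hstep2 z
    _ = ∏ k : Fin n, ∑ c : Bool, ⨆ b : Bool, (∑ a : Bool, scalarJoint p α a b) * W b c :=
        (Fintype.prod_sum (fun (_ : Fin n) (c : Bool) =>
          ⨆ b : Bool, (∑ a : Bool, scalarJoint p α a b) * W b c)).symm
    _ = (∑ c : Bool, ⨆ b : Bool, (∑ a : Bool, scalarJoint p α a b) * W b c) ^ n := by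
        rw [Finset.prod_const, Finset.card_univ, Fintype.card_fin]
    _ = (pcYZ (scalarJoint p α) W) ^ n := rfl

lemma scalar_converse (p α : ℝ) (hp2 : 1/2 ≤ p) (hp1 : p < 1) (hα0 : 0 ≤ α) (hα2 : α < 1/2)
    (W : Bool → Bool → ℝ) (hW0 : ∀ y z, 0 ≤ W y z) (hW1 : ∀ y, ∑ z, W y z = 1) :
    (p - α) * pcYZ (scalarJoint p α) W
      ≤ (p - α) - (α*(1-p)+(1-α)*p) * ((1-α) - pcXZ (scalarJoint p α) W) := by
  have hWf := hW1 false
  have hWt := hW1 true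
  rw [Fintype.sum_bool] at hWf hWt
  have hff : W false false = 1 - W false true := by linarith
  have htf : W true false = 1 - W true true := by linarith
  simp only [pcXZ, pcYZ, Fintype.sum_bool, bool_ciSup, scalarJoint, bern]
  norm_num
  rw [hff, htf]
  set a := W false true with ha
  set b := W true true with hb
  have ha0 : 0 ≤ a := hW0 false true
  have hb0 : 0 ≤ b := hW0 true true
  have ha1 : a ≤ 1 := by have := hW0 false false; rw [hff] at this; linarith
  have hb1 : b ≤ 1 := by have := hW0 true false; rw [htf] at this; linarith
  have hq0 : (0:ℝ) ≤ α*(1-p)+(1-α)*p := by nlinarith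
  have hA0 : (α*(1-p)+(1-α)*p) * ((1-p)*α*b + (1-p)*(1-α)*a)
      ≤ (α*(1-p)+(1-α)*p) * max ((1-p)*α*b + (1-p)*(1-α)*a) (p*(1-α)*b + p*α*a) :=
    mul_le_mul_of_nonneg_left (le_max_left _ _) hq0
  have hA1 : (α*(1-p)+(1-α)*p) * (p*(1-α)*b + p*α*a)
      ≤ (α*(1-p)+(1-α)*p) * max ((1-p)*α*b + (1-p)*(1-α)*a) (p*(1-α)*b + p*α*a) :=
    mul_le_mul_of_nonneg_left (le_max_right _ _) hq0
  have hB0 : (α*(1-p)+(1-α)*p) * ((1-p)*α*(1-b) + (1-p)*(1-α)*(1-a))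
      ≤ (α*(1-p)+(1-α)*p) * max ((1-p)*α*(1-b) + (1-p)*(1-α)*(1-a)) (p*(1-α)*(1-b) + p*α*(1-a)) :=
    mul_le_mul_of_nonneg_left (le_max_left _ _) hq0
  have hB1 : (α*(1-p)+(1-α)*p) * (p*(1-α)*(1-b) + p*α*(1-a))
      ≤ (α*(1-p)+(1-α)*p) * max ((1-p)*α*(1-b) + (1-p)*(1-α)*(1-a)) (p*(1-α)*(1-b) + p*α*(1-a)) :=
    mul_le_mul_of_nonneg_left (le_max_right _ _) hq0
  have hs1 : (0:ℝ) ≤ α*(1-α)*(2*p-1) :=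
    mul_nonneg (mul_nonneg hα0 (by linarith)) (by linarith)
  have hs2 : (0:ℝ) ≤ a*(α*(1-α)*(2*p-1)) := mul_nonneg ha0 hs1
  have hs3 : (0:ℝ) ≤ (1-a)*(α*(1-α)*(2*p-1)) := mul_nonneg (by linarith) hs1
  have hs4 : (0:ℝ) ≤ (α*(1-p)+(1-α)*p)*(2*p-1) := mul_nonneg hq0 (by linarith)
  rcases max_choice ((p*α + (1-p)*(1-α)) * a) ((p*(1-α) + (1-p)*α) * b) with h1 | h1 <;>
    rcases max_choice ((p*α + (1-p)*(1-α)) * (1-a)) ((p*(1-α) + (1-p)*α) * (1-b)) with h2 | h2 <;>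
    rw [h1, h2] <;>
    nlinarith [hA0, hA1, hB0, hB1, hs1, hs2, hs3, hs4]

lemma scalar_ach (p α ε : ℝ) (hp2 : 1/2 ≤ p) (hp1 : p < 1) (hα0 : 0 ≤ α) (hα2 : α < 1/2)
    (hε1 : p ≤ ε) (hε2 : ε ≤ 1 - α) :
    ∃ W : Bool → Bool → ℝ, (∀ y z, 0 ≤ W y z) ∧ (∀ y, ∑ z, W y z = 1) ∧
      pcXZ (scalarJoint p α) W = ε ∧
      pcYZ (scalarJoint p α) W
        = 1 - ((1-α) - ε)/((1-α)*p - α*(1-p)) * (α*(1-p)+(1-α)*p) := by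
  have hden : (1-α)*p - α*(1-p) = p - α := by ring
  have hpα' : (0:ℝ) < p - α := by linarith
  set ζ := ((1-α) - ε)/((1-α)*p - α*(1-p)) with hζdef
  have hζ0 : 0 ≤ ζ := div_nonneg (by linarith) (by rw [hden]; linarith)
  have hζ1 : ζ ≤ 1 := by rw [hζdef, hden, div_le_one hpα']; linarith
  have hζeq : ζ * (p - α) = (1-α) - ε := by
    rw [hζdef, hden, div_mul_cancel₀]; exact ne_of_gt hpα'
  have hq0 : (0:ℝ) ≤ p*(1-α)+(1-p)*α := by nlinarith
  refine ⟨fun y z => if y then (if z then 1-ζ else ζ) else (if z then 0 else 1),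
    ?_, ?_, ?_, ?_⟩
  · intro y z; cases y <;> cases z <;> simp <;> linarith
  · intro y; rw [Fintype.sum_bool]; cases y <;> simp
  · simp only [pcXZ, Fintype.sum_bool, bool_ciSup, scalarJoint, bern]
    norm_num
    rw [max_eq_right (by nlinarith : (1-p)*α*(1-ζ) ≤ p*(1-α)*(1-ζ)),
        max_eq_left (by nlinarith : p*(1-α)*ζ + p*α ≤ (1-p)*α*ζ + (1-p)*(1-α))]
    linear_combination -hζeq
  · simp only [pcYZ, Fintype.sum_bool, bool_ciSup, scalarJoint, bern]
    norm_num
    have hkey : (p*(1-α)+(1-p)*α)*ζ ≤ p*α + (1-p)*(1-α) := by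
      have h5 : (p*(1-α)+(1-p)*α)*(ζ*(p-α)) = (p*(1-α)+(1-p)*α)*((1-α)-ε) := by
        rw [hζeq]
      nlinarith [mul_nonneg hq0 (by linarith : (0:ℝ) ≤ ε - p),
        mul_nonneg (mul_nonneg hα0 (by linarith : (0:ℝ) ≤ 1-α)) (by linarith : (0:ℝ) ≤ 2*p-1)]
    rw [max_eq_right (by nlinarith : (0:ℝ) ≤ (p*(1-α)+(1-p)*α)*(1-ζ)),
        max_eq_left (by nlinarith : (p*(1-α)+(1-p)*α)*ζ ≤ p*α + (1-p)*(1-α))]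
    ring

/-- Proposition 2: in the i.i.d. case the memoryless tradeoff
function coincides with the scalar one: `h_n^i(ε) = 1 − ζ(ε)·q` for all
`ε ∈ [p, 1−α]`. -/
theorem memoryless_filter_value (n : ℕ) (hn : 0 < n) (p α : ℝ)
    (hp : p ∈ Set.Ico (1 / 2 : ℝ) 1) (hα : α ∈ Set.Ico (0 : ℝ) (1 / 2))
    (hpα : p < 1 - α) :
    ∀ ε ∈ Set.Icc p (1 - α),
      hMemless n p α ε =
        1 - ((1 - α) - ε) / ((1 - α) * p - α * (1 - p)) *
          (α * (1 - p) + (1 - α) * p) := by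
  obtain ⟨hp2, hp1⟩ := hp
  obtain ⟨hα0, hα2⟩ := hα
  intro ε hε
  obtain ⟨hε1, hε2⟩ := hε
  have hpα' : (0:ℝ) < p - α := by linarith
  have hsb : ∀ x y, 0 ≤ scalarJoint p α x y := by
    intro x y
    refine mul_nonneg ?_ ?_ <;> unfold bern <;> split <;> linarith
  have hq0 : (0:ℝ) ≤ α*(1-p)+(1-α)*p := by nlinarith
  set T := 1 - ((1 - α) - ε) / ((1 - α) * p - α * (1 - p)) * (α * (1 - p) + (1 - α) * p)
    with hT
  have hXnn : ∀ W : Bool → Bool → ℝ, (∀ y z, 0 ≤ W y z) →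
      0 ≤ pcXZ (scalarJoint p α) W := by
    intro W hW0
    refine Finset.sum_nonneg fun z _ => ciSup_bool_nonneg _ fun x =>
      Finset.sum_nonneg fun y _ => mul_nonneg (hsb x y) (hW0 y z)
  have hYnn : ∀ W : Bool → Bool → ℝ, (∀ y z, 0 ≤ W y z) →
      0 ≤ pcYZ (scalarJoint p α) W := by
    intro W hW0
    refine Finset.sum_nonneg fun z _ => ciSup_bool_nonneg _ fun y =>
      mul_nonneg (Finset.sum_nonneg fun x _ => hsb x y) (hW0 y z)
  have hub : ∀ u ∈ {u | ∃ W : Bool → Bool → ℝ, (∀ y z, 0 ≤ W y z) ∧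
      (∀ y, ∑ z, W y z = 1) ∧
      pcXZ (jointIID n p α) (memless n W) ^ ((n : ℝ)⁻¹) ≤ ε ∧
      u = pcYZ (jointIID n p α) (memless n W) ^ ((n : ℝ)⁻¹)}, u ≤ T := by
    rintro u ⟨W, hW0, hW1, hcon, rfl⟩
    rw [pcXZ_tensor n p α hsb W hW0,
      Real.pow_rpow_inv_natCast (hXnn W hW0) hn.ne'] at hcon
    rw [pcYZ_tensor n p α hsb W hW0,
      Real.pow_rpow_inv_natCast (hYnn W hW0) hn.ne']
    have hcv := scalar_converse p α hp2 hp1 hα0 hα2 W hW0 hW1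
    have hTmul : (p - α) * T = (p - α) - ((1-α) - ε)*(α*(1-p)+(1-α)*p) := by
      rw [hT]
      have : (1 - α) * p - α * (1 - p) = p - α := by ring
      rw [this]
      field_simp
    have hmono : (α*(1-p)+(1-α)*p) * (ε - pcXZ (scalarJoint p α) W) ≥ 0 :=
      mul_nonneg hq0 (by linarith)
    have hfin : (p - α) * pcYZ (scalarJoint p α) W ≤ (p - α) * T := by
      rw [hTmul]; nlinarith [hcv, hmono]
    exact le_of_mul_le_mul_left hfin hpα'
  have hmem : T ∈ {u | ∃ W : Bool → Bool → ℝ, (∀ y z, 0 ≤ W y z) ∧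
      (∀ y, ∑ z, W y z = 1) ∧
      pcXZ (jointIID n p α) (memless n W) ^ ((n : ℝ)⁻¹) ≤ ε ∧
      u = pcYZ (jointIID n p α) (memless n W) ^ ((n : ℝ)⁻¹)} := by
    obtain ⟨W, hW0, hW1, hXval, hYval⟩ := scalar_ach p α ε hp2 hp1 hα0 hα2 hε1 hε2
    refine ⟨W, hW0, hW1, ?_, ?_⟩
    · rw [pcXZ_tensor n p α hsb W hW0, hXval,
        Real.pow_rpow_inv_natCast (by linarith : (0:ℝ) ≤ ε) hn.ne']
    · rw [pcYZ_tensor n p α hsb W hW0, hYval, ← hYval,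
        Real.pow_rpow_inv_natCast (hYnn W hW0) hn.ne', hYval]
  exact le_antisymm (csSup_le ⟨T, hmem⟩ hub) (le_csSup ⟨T, hub⟩ hmem)
end
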